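/- arXiv:1301.4653 — 3 statements merged into one kernel-verified Lean document; each statement's English description precedes it below -/
import Mathlib

section
/- Let λ ∈ P_ε(N) and let i be an admissible index for λ. Then z(λ) ≥ z(λ^{(i)}) + 1. -/
open Finset

/-- `lam` (with parts `lam 1 ≥ lam 2 ≥ … ≥ lam n ≥ 1`, and `lam i = 0` for `i = 0` and
`i > n`) is a partition of `N` belonging to `𝒫_ε(N)`: every part `v` with
`ε·(−1)^v = 1` occurs with even multiplicity. -/
structure KSPartition (ε : ℤ) (N n : ℕ) (lam : ℕ → ℕ) : Prop where
  zero : lam 0 = 0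
  pos : ∀ i : ℕ, 1 ≤ i → i ≤ n → 1 ≤ lam i
  mono : ∀ i : ℕ, 1 ≤ i → lam (i + 1) ≤ lam i
  top : ∀ i : ℕ, n < i → lam i = 0
  sum_eq : ∑ i ∈ Finset.Icc 1 n, lam i = N
  parity : ∀ v : ℕ, 1 ≤ v → ε * (-1 : ℤ) ^ v = 1 →
    Even (((Finset.Icc 1 n).filter (fun i => lam i = v)).card)

/-- `(i, i+1)` is a 2-step of `lam`. -/
def IsTwoStep (ε : ℤ) (lam : ℕ → ℕ) (i : ℕ) : Prop :=
  1 ≤ i ∧ 1 ≤ lam (i + 1) ∧ lam (i + 1) ≤ lam i ∧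
    ε * (-1 : ℤ) ^ lam i = -1 ∧ ε * (-1 : ℤ) ^ lam (i + 1) = -1 ∧
    lam (i - 1) ≠ lam i ∧ lam (i + 1) ≠ lam (i + 2)

/-- `Δ(λ)`, the set of 2-steps of `lam` (a 2-step `(i,i+1)` is recorded by its index `i`). -/
def twoSteps (ε : ℤ) (lam : ℕ → ℕ) : Set ℕ := {i | IsTwoStep ε lam i}

/-- `s(λ) = Σ_i ⌊(λ_i − λ_{i+1})/2⌋`. -/
def sVal (lam : ℕ → ℕ) (n : ℕ) : ℕ :=
  ∑ i ∈ Finset.Icc 1 n, (lam i - lam (i + 1)) / 2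

/-- The badness condition for a 2-step `(i, i+1)`. -/
def IsBadStep (lam : ℕ → ℕ) (i : ℕ) : Prop :=
  (1 < i ∧ Even (lam (i - 1) - lam i)) ∨ Even (lam (i + 1) - lam (i + 2))

/-- `Δ_bad(λ)`, the set of bad 2-steps of `lam`. -/
def badSteps (ε : ℤ) (lam : ℕ → ℕ) : Set ℕ :=
  {i | IsTwoStep ε lam i ∧ IsBadStep lam i}

/-- `lam` is non-singular: it has no bad 2-step. -/
def NonSingular (ε : ℤ) (lam : ℕ → ℕ) : Prop :=
  ∀ i : ℕ, IsTwoStep ε lam i → ¬ IsBadStep lam i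

/-- The 2-cluster `a, a+2, …, a+2(k−1)` (with `k ≥ 2` members) of `lam`. -/
def IsTwoCluster (ε : ℤ) (lam : ℕ → ℕ) (a k : ℕ) : Prop :=
  2 ≤ k ∧ ∀ j : ℕ, j < k → IsTwoStep ε lam (a + 2 * j)

/-- The 2-cluster `a, a+2, …, a+2(k−1)` has a bad boundary. -/
def HasBadBoundary (lam : ℕ → ℕ) (a k : ℕ) : Prop :=
  (1 < a ∧ 0 < lam (a - 1) - lam a ∧ Even (lam (a - 1) - lam a)) ∨
  (0 < lam (a + 2 * (k - 1) + 1) - lam (a + 2 * (k - 1) + 2) ∧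
    Even (lam (a + 2 * (k - 1) + 1) - lam (a + 2 * (k - 1) + 2)))

/-- `Σ(λ)`: the set of good 2-clusters of `lam`, a cluster being recorded as the pair
`(a, k)` of its first index and its number of members. -/
def goodClusters (ε : ℤ) (lam : ℕ → ℕ) : Set (ℕ × ℕ) :=
  {p | IsTwoCluster ε lam p.1 p.2 ∧ ¬ HasBadBoundary lam p.1 p.2}

/-- `z(λ) = s(λ) + |Δ(λ)| − (|Δ_bad(λ)| − |Σ(λ)|)`, computed in `ℤ`. -/
noncomputable def zVal (ε : ℤ) (lam : ℕ → ℕ) (n : ℕ) : ℤ :=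
  (sVal lam n : ℤ) + ((twoSteps ε lam).ncard : ℤ) + ((goodClusters ε lam).ncard : ℤ)
    - ((badSteps ε lam).ncard : ℤ)

/-- One step of the Kempken–Spaltenstein algorithm at index `i`
(Case 1 if `λ_i − λ_{i+1} ≥ 2`, Case 2 otherwise). -/
def ksOut (lam : ℕ → ℕ) (i : ℕ) : ℕ → ℕ := fun j =>
  if lam (i + 1) + 2 ≤ lam i then (if j ≤ i then lam j - 2 else lam j)
  else (if j < i then lam j - 2 else if j ≤ i + 1 then lam j - 1 else lam j)

/-- The index `i` is admissible for `lam` (Case 1 or Case 2 occurs at `i`). -/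
def IsAdmissibleIndex (ε : ℤ) (lam : ℕ → ℕ) (i : ℕ) : Prop :=
  (1 ≤ i ∧ lam (i + 1) + 2 ≤ lam i) ∨ (IsTwoStep ε lam i ∧ lam i = lam (i + 1))

/-- `λ^𝐢`: the result of applying the KS algorithm along the sequence `𝐢`. -/
def ksApply (lam : ℕ → ℕ) : List ℕ → ℕ → ℕ
  | [] => lam
  | i :: rest => ksApply (ksOut lam i) rest

/-- The sequence `𝐢` is admissible for `lam`. -/
def IsAdmissibleSeq (ε : ℤ) (lam : ℕ → ℕ) : List ℕ → Prop
  | [] => True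
  | i :: rest => IsAdmissibleIndex ε lam i ∧ IsAdmissibleSeq ε (ksOut lam i) rest

/-- The sequence `𝐢` is maximal admissible for `lam`. -/
def IsMaximalAdmissibleSeq (ε : ℤ) (lam : ℕ → ℕ) (l : List ℕ) : Prop :=
  IsAdmissibleSeq ε lam l ∧ ∀ i : ℕ, ¬ IsAdmissibleIndex ε (ksApply lam l) i

/-- `lam` is a rigid partition. -/
def IsRigid (ε : ℤ) (lam : ℕ → ℕ) : Prop :=
  (∀ i : ℕ, 1 ≤ i → lam i ≤ lam (i + 1) + 1) ∧
  ∀ i : ℕ, ¬ (IsTwoStep ε lam i ∧ lam i = lam (i + 1))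


/-! ### Auxiliary lemmas -/

section Aux

lemma aux_eps_ne_zero {ε : ℤ} {a : ℕ} (h : ε * (-1) ^ a = -1) : ε ≠ 0 := by
  intro h0; rw [h0, zero_mul] at h; exact absurd h (by norm_num)

lemma aux_parity_iff {ε : ℤ} {a b : ℕ} (h1 : ε * (-1) ^ a = -1) (h2 : ε * (-1) ^ b = -1) :
    (Even a ↔ Even b) := by
  have h3 : ε * (-1) ^ a = ε * (-1) ^ b := by rw [h1, h2]
  have h4 : ((-1 : ℤ)) ^ a = (-1) ^ b := mul_left_cancel₀ (aux_eps_ne_zero h1) h3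
  constructor
  · intro ha
    by_contra hb
    rw [ha.neg_one_pow, (Nat.not_even_iff_odd.1 hb).neg_one_pow] at h4
    norm_num at h4
  · intro hb
    by_contra ha
    rw [hb.neg_one_pow, (Nat.not_even_iff_odd.1 ha).neg_one_pow] at h4
    norm_num at h4

lemma aux_even_sub {a b : ℕ} (hba : b ≤ a) (h : Even a ↔ Even b) : Even (a - b) :=
  (Nat.even_sub hba).mpr h

lemma aux_sign_sub_two {ε : ℤ} (v : ℕ) (hv : 2 ≤ v) :
    ε * (-1) ^ (v - 2) = ε * (-1) ^ v := by
  obtain ⟨w, rfl⟩ : ∃ w, v = w + 2 := ⟨v - 2, by omega⟩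
  simp [pow_add]

lemma aux_sign_pred {ε : ℤ} (v : ℕ) (hv : 1 ≤ v) :
    ε * (-1) ^ (v - 1) = -(ε * (-1) ^ v) := by
  obtain ⟨w, rfl⟩ : ∃ w, v = w + 1 := ⟨v - 1, by omega⟩
  simp [pow_add]

/-- monotonicity over a range -/
lemma aux_mono_le {lam : ℕ → ℕ} (hm : ∀ j : ℕ, 1 ≤ j → lam (j + 1) ≤ lam j)
    {a b : ℕ} (ha : 1 ≤ a) (hab : a ≤ b) : lam b ≤ lam a := by
  induction b with
  | zero => omega
  | succ k ih =>
    rcases Nat.lt_or_ge k a with h | h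
    · have ha' : a = k + 1 := by omega
      rw [ha']
    · exact le_trans (hm k (by omega)) (ih (by omega))

/-- membership in twoSteps -/
lemma mem_twoSteps {ε : ℤ} {lam : ℕ → ℕ} {j : ℕ} :
    j ∈ twoSteps ε lam ↔ IsTwoStep ε lam j := Iff.rfl

lemma mem_badSteps {ε : ℤ} {lam : ℕ → ℕ} {j : ℕ} :
    j ∈ badSteps ε lam ↔ IsTwoStep ε lam j ∧ IsBadStep lam j := Iff.rfl

lemma mem_goodClusters {ε : ℤ} {lam : ℕ → ℕ} {p : ℕ × ℕ} :
    p ∈ goodClusters ε lam ↔ IsTwoCluster ε lam p.1 p.2 ∧ ¬ HasBadBoundary lam p.1 p.2 :=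
  Iff.rfl

/-- finiteness of the step set -/
lemma twoSteps_finite {ε : ℤ} {lam : ℕ → ℕ} {n : ℕ}
    (htop : ∀ j : ℕ, n < j → lam j = 0) : (twoSteps ε lam).Finite := by
  apply Set.Finite.subset (Set.finite_Icc 1 n)
  rintro j ⟨h1, h2, -⟩
  have : j + 1 ≤ n := by
    by_contra h
    have := htop (j + 1) (by omega)
    omega
  exact ⟨h1, by omega⟩

lemma badSteps_subset {ε : ℤ} {lam : ℕ → ℕ} : badSteps ε lam ⊆ twoSteps ε lam :=
  fun _ h => h.1

lemma badSteps_finite {ε : ℤ} {lam : ℕ → ℕ} {n : ℕ}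
    (htop : ∀ j : ℕ, n < j → lam j = 0) : (badSteps ε lam).Finite :=
  (twoSteps_finite htop).subset badSteps_subset

lemma goodClusters_finite {ε : ℤ} {lam : ℕ → ℕ} {n : ℕ}
    (htop : ∀ j : ℕ, n < j → lam j = 0) : (goodClusters ε lam).Finite := by
  apply Set.Finite.subset ((Set.finite_Icc 1 n).prod (Set.finite_Icc 2 (n+1)))
  rintro ⟨a, k⟩ ⟨⟨hk2, hsteps⟩, -⟩
  dsimp only at hsteps ⊢
  have h0 := hsteps 0 (by omega)
  have hlast := hsteps (k - 1) (by omega)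
  have ha1 : 1 ≤ a := by simpa using h0.1
  have h0n : a + 2 * 0 + 1 ≤ n := by
    by_contra h
    have e1 := htop (a + 2 * 0 + 1) (by omega)
    have e2 := h0.2.1
    omega
  have hln : a + 2 * (k - 1) + 1 ≤ n := by
    by_contra h
    have e1 := htop (a + 2 * (k - 1) + 1) (by omega)
    have e2 := hlast.2.1
    omega
  exact ⟨⟨ha1, by omega⟩, ⟨hk2, by omega⟩⟩

/-- the inner-gap lemma: two 2-steps at distance 2 have an even positive gap between them -/
lemma aux_inner_gap {ε : ℤ} {f : ℕ → ℕ} (hm : ∀ j : ℕ, 1 ≤ j → f (j + 1) ≤ f j)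
    {j : ℕ} (h1 : IsTwoStep ε f j) (h2 : IsTwoStep ε f (j + 2)) :
    0 < f (j + 1) - f (j + 2) ∧ Even (f (j + 1) - f (j + 2)) := by
  obtain ⟨hj1, -, -, -, hs1, -, hne⟩ := h1
  obtain ⟨-, -, -, hs2, -, -, -⟩ := h2
  have hle : f (j + 2) ≤ f (j + 1) := hm (j + 1) (by omega)
  refine ⟨by omega, aux_even_sub hle (aux_parity_iff hs1 hs2)⟩

end Aux

section Master

/-- transfer of the 2-step predicate along "master facts" -/
lemma step_iff_of_master {ε : ℤ} {lam mu : ℕ → ℕ}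
    (hmlam : ∀ j : ℕ, 1 ≤ j → lam (j + 1) ≤ lam j)
    (hmmu : ∀ j : ℕ, 1 ≤ j → mu (j + 1) ≤ mu j)
    (M1 : ∀ t : ℕ, ε * (-1) ^ (mu t) = ε * (-1) ^ (lam t))
    (M2 : ∀ t : ℕ, mu t = mu (t + 1) ↔ lam t = lam (t + 1))
    (M4 : ∀ t : ℕ, 1 ≤ t → (1 ≤ mu t ↔ 1 ≤ lam t)) (j : ℕ) :
    IsTwoStep ε mu j ↔ IsTwoStep ε lam j := by
  have hM2a : mu (j - 1) = mu j ↔ lam (j - 1) = lam j ∨ j = 0 := by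
    rcases Nat.eq_zero_or_pos j with rfl | hj
    · simp
    · have h := M2 (j - 1)
      rw [show j - 1 + 1 = j by omega] at h
      constructor
      · intro hh; exact Or.inl (h.1 hh)
      · rintro (hh | hh)
        · exact h.2 hh
        · omega
  constructor
  · rintro ⟨h1, h2, h3, h4, h5, h6, h7⟩
    rw [M1 j] at h4; rw [M1 (j+1)] at h5
    refine ⟨h1, (M4 _ (by omega)).1 h2, hmlam j h1, h4, h5, ?_, ?_⟩
    · intro he; exact h6 (hM2a.2 (Or.inl he))
    · intro he; exact h7 ((M2 (j+1)).2 he)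
  · rintro ⟨h1, h2, h3, h4, h5, h6, h7⟩
    rw [← M1 j] at h4; rw [← M1 (j+1)] at h5
    refine ⟨h1, (M4 _ (by omega)).2 h2, hmmu j h1, h4, h5, ?_, ?_⟩
    · intro he
      rcases hM2a.1 he with hh | hh
      · exact h6 hh
      · omega
    · intro he; exact h7 ((M2 (j+1)).1 he)

/-- transfer of the badness predicate -/
lemma bad_iff_of_master {lam mu : ℕ → ℕ}
    (M5 : ∀ t : ℕ, Even (mu t - mu (t + 1)) ↔ Even (lam t - lam (t + 1))) (j : ℕ) :
    IsBadStep mu j ↔ IsBadStep lam j := by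
  unfold IsBadStep
  have h1 : ∀ k : ℕ, 1 < k → (Even (mu (k - 1) - mu k) ↔ Even (lam (k - 1) - lam k)) := by
    intro k hk
    have h := M5 (k - 1)
    rwa [show k - 1 + 1 = k by omega] at h
  constructor
  · rintro (⟨hj, he⟩ | he)
    · exact Or.inl ⟨hj, (h1 j hj).1 he⟩
    · exact Or.inr ((M5 (j+1)).1 he)
  · rintro (⟨hj, he⟩ | he)
    · exact Or.inl ⟨hj, (h1 j hj).2 he⟩
    · exact Or.inr ((M5 (j+1)).2 he)

/-- transfer of cluster badness etc. -/
lemma cluster_iff_of_step_iff {ε : ℤ} {lam mu : ℕ → ℕ}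
    (hstep : ∀ j : ℕ, IsTwoStep ε mu j ↔ IsTwoStep ε lam j) (a k : ℕ) :
    IsTwoCluster ε mu a k ↔ IsTwoCluster ε lam a k := by
  unfold IsTwoCluster
  constructor
  · rintro ⟨h2, h⟩; exact ⟨h2, fun j hj => (hstep _).1 (h j hj)⟩
  · rintro ⟨h2, h⟩; exact ⟨h2, fun j hj => (hstep _).2 (h j hj)⟩

lemma boundary_iff_of_master {lam mu : ℕ → ℕ}
    (M5 : ∀ t : ℕ, Even (mu t - mu (t + 1)) ↔ Even (lam t - lam (t + 1)))
    (M6 : ∀ t : ℕ, 0 < mu t - mu (t + 1) ↔ 0 < lam t - lam (t + 1)) (a k : ℕ) :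
    HasBadBoundary mu a k ↔ HasBadBoundary lam a k := by
  unfold HasBadBoundary
  have h5 : ∀ t : ℕ, 1 ≤ t → (Even (mu (t - 1) - mu t) ↔ Even (lam (t - 1) - lam t)) := by
    intro t ht; have h := M5 (t - 1); rwa [show t - 1 + 1 = t by omega] at h
  have h6 : ∀ t : ℕ, 1 ≤ t → (0 < mu (t - 1) - mu t ↔ 0 < lam (t - 1) - lam t) := by
    intro t ht; have h := M6 (t - 1); rwa [show t - 1 + 1 = t by omega] at h
  constructor
  · rintro (⟨ha, hp, he⟩ | ⟨hp, he⟩)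
    · exact Or.inl ⟨ha, (h6 a (by omega)).1 hp, (h5 a (by omega)).1 he⟩
    · exact Or.inr ⟨(M6 _).1 hp, (M5 _).1 he⟩
  · rintro (⟨ha, hp, he⟩ | ⟨hp, he⟩)
    · exact Or.inl ⟨ha, (h6 a (by omega)).2 hp, (h5 a (by omega)).2 he⟩
    · exact Or.inr ⟨(M6 _).2 hp, (M5 _).2 he⟩

/-- the s-value sum comparison -/
lemma sVal_add {lam mu : ℕ → ℕ} {n : ℕ} (d : ℕ → ℕ)
    (h : ∀ t : ℕ, 1 ≤ t → t ≤ n → (lam t - lam (t + 1)) / 2 = (mu t - mu (t + 1)) / 2 + d t) :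
    sVal lam n = sVal mu n + ∑ t ∈ Finset.Icc 1 n, d t := by
  unfold sVal
  rw [← Finset.sum_add_distrib]
  apply Finset.sum_congr rfl
  intro t ht
  rw [Finset.mem_Icc] at ht
  exact h t ht.1 ht.2

lemma sum_single_ite {n i : ℕ} (c : ℕ) (h1 : 1 ≤ i) (h2 : i ≤ n) :
    ∑ t ∈ Finset.Icc 1 n, (if t = i then c else 0) = c := by
  rw [Finset.sum_ite_eq' (Finset.Icc 1 n) i (fun _ => c), if_pos (Finset.mem_Icc.2 ⟨h1, h2⟩)]


lemma aux_ncard_le_one {α : Type*} {s : Set α} (h : ∀ p ∈ s, ∀ q ∈ s, p = q) :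
    s.ncard ≤ 1 := by
  rcases Set.eq_empty_or_nonempty s with rfl | ⟨p, hp⟩
  · simp
  · have hsub : s ⊆ {p} := fun q hq => h q hq p hp
    calc s.ncard ≤ ({p} : Set α).ncard := Set.ncard_le_ncard hsub (Set.finite_singleton _)
    _ = 1 := Set.ncard_singleton p

lemma sum_single_ite' {n : ℕ} (c : ℕ) (j : ℕ) :
    ∑ t ∈ Finset.Icc 1 n, (if t = j then c else 0) =
      if 1 ≤ j ∧ j ≤ n then c else 0 := by
  rw [Finset.sum_ite_eq' (Finset.Icc 1 n) j (fun _ => c)]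
  by_cases h : 1 ≤ j ∧ j ≤ n
  · rw [if_pos (Finset.mem_Icc.2 h), if_pos h]
  · rw [if_neg (fun hc => h (Finset.mem_Icc.1 hc)), if_neg h]

end Master

section CaseA

lemma ksOut_case1 {lam : ℕ → ℕ} {i : ℕ} (hc : lam (i + 1) + 2 ≤ lam i) (j : ℕ) :
    ksOut lam i j = if j ≤ i then lam j - 2 else lam j := by
  simp only [ksOut, if_pos hc]

lemma caseA {ε : ℤ} {lam : ℕ → ℕ} {n i : ℕ} (h0 : lam 0 = 0)
    (hm : ∀ j : ℕ, 1 ≤ j → lam (j + 1) ≤ lam j) (htop : ∀ j : ℕ, n < j → lam j = 0)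
    (hi1 : 1 ≤ i) (hgap : lam (i + 1) + 3 ≤ lam i) :
    zVal ε (ksOut lam i) n + 1 ≤ zVal ε lam n := by
  set mu := ksOut lam i with hmudef
  have hmu : ∀ j, mu j = if j ≤ i then lam j - 2 else lam j :=
    ksOut_case1 (by omega)
  have hv : ∀ t, 1 ≤ t → t ≤ i → 3 ≤ lam t := by
    intro t h1 h2
    have := aux_mono_le hm h1 h2
    omega
  have hmmu : ∀ j : ℕ, 1 ≤ j → mu (j + 1) ≤ mu j := by
    intro j hj
    rw [hmu, hmu]
    have h1 := hm j hj
    rcases Nat.lt_trichotomy j i with h | rfl | h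
    · rw [if_pos (by omega), if_pos (by omega)]; omega
    · rw [if_neg (by omega), if_pos (by omega)]; omega
    · rw [if_neg (by omega), if_neg (by omega)]; exact h1
  have M1 : ∀ t : ℕ, ε * (-1) ^ (mu t) = ε * (-1) ^ (lam t) := by
    intro t
    rw [hmu]
    rcases Nat.lt_or_ge i t with h | h
    · rw [if_neg (by omega)]
    · rw [if_pos (by omega)]
      rcases Nat.eq_zero_or_pos t with rfl | ht
      · rw [h0]
      · exact aux_sign_sub_two _ (by have := hv t ht h; omega)
  have M2 : ∀ t : ℕ, mu t = mu (t + 1) ↔ lam t = lam (t + 1) := by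
    intro t
    rw [hmu t, hmu (t + 1)]
    rcases Nat.lt_trichotomy t i with h | rfl | h
    · rw [if_pos (by omega), if_pos (by omega)]
      have h2 := hv (t + 1) (by omega) (by omega)
      rcases Nat.eq_zero_or_pos t with rfl | ht
      · rw [h0]; omega
      · have h3 := hv t ht (by omega); omega
    · rw [if_pos (by omega), if_neg (by omega)]; omega
    · rw [if_neg (by omega), if_neg (by omega)]
  have M4 : ∀ t : ℕ, 1 ≤ t → (1 ≤ mu t ↔ 1 ≤ lam t) := by
    intro t ht
    rw [hmu]
    rcases Nat.lt_or_ge i t with h | h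
    · rw [if_neg (by omega)]
    · rw [if_pos (by omega)]; have := hv t ht h; omega
  have gapfact : ∀ t : ℕ, (mu t - mu (t + 1)) % 2 = (lam t - lam (t + 1)) % 2 ∧
      (0 < mu t - mu (t + 1) ↔ 0 < lam t - lam (t + 1)) := by
    intro t
    rw [hmu t, hmu (t + 1)]
    rcases Nat.lt_trichotomy t i with h | rfl | h
    · rw [if_pos (by omega), if_pos (by omega)]
      have h2 := hv (t + 1) (by omega) (by omega)
      rcases Nat.eq_zero_or_pos t with rfl | ht
      · rw [h0]; omega
      · have h3 := hv t ht (by omega); omega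
    · rw [if_pos (by omega), if_neg (by omega)]; omega
    · rw [if_neg (by omega), if_neg (by omega)]; omega
  have M5 : ∀ t : ℕ, Even (mu t - mu (t + 1)) ↔ Even (lam t - lam (t + 1)) := by
    intro t
    have := (gapfact t).1
    simp only [Nat.even_iff]
    omega
  have M6 : ∀ t : ℕ, 0 < mu t - mu (t + 1) ↔ 0 < lam t - lam (t + 1) := fun t => (gapfact t).2
  have hstep := step_iff_of_master hm hmmu M1 M2 M4
  have hD : twoSteps ε mu = twoSteps ε lam := Set.ext fun j => hstep j
  have hB : badSteps ε mu = badSteps ε lam :=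
    Set.ext fun j => and_congr (hstep j) (bad_iff_of_master M5 j)
  have hG : goodClusters ε mu = goodClusters ε lam := by
    apply Set.ext
    rintro ⟨a, k⟩
    exact and_congr (cluster_iff_of_step_iff hstep a k)
      (not_congr (boundary_iff_of_master M5 M6 a k))
  have hin : i ≤ n := by
    by_contra h
    have := htop i (by omega)
    omega
  have hs : sVal lam n = sVal mu n + 1 := by
    rw [sVal_add (fun t => if t = i then 1 else 0) ?_, sum_single_ite 1 hi1 hin]
    intro t h1 h2
    rw [hmu t, hmu (t + 1)]
    rcases Nat.lt_trichotomy t i with h | rfl | h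
    · rw [if_pos (by omega), if_pos (by omega), if_neg (by omega)]
      have h2 := hv (t + 1) (by omega) (by omega)
      have h3 := hv t h1 (by omega)
      omega
    · rw [if_pos (by omega), if_neg (by omega), if_pos rfl]
      omega
    · rw [if_neg (by omega), if_neg (by omega), if_neg (by omega)]
      omega
  unfold zVal
  rw [hD, hB, hG, hs]
  push_cast
  omega

end CaseA

section CaseB

lemma caseB {ε : ℤ} {lam : ℕ → ℕ} {n i : ℕ} (h0 : lam 0 = 0)
    (hm : ∀ j : ℕ, 1 ≤ j → lam (j + 1) ≤ lam j) (htop : ∀ j : ℕ, n < j → lam j = 0)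
    (hi1 : 1 ≤ i) (hgap : lam i = lam (i + 1) + 2) :
    zVal ε (ksOut lam i) n + 1 ≤ zVal ε lam n := by
  set mu := ksOut lam i with hmudef
  have hmu : ∀ j, mu j = if j ≤ i then lam j - 2 else lam j :=
    ksOut_case1 (by omega)
  have hv : ∀ t, 1 ≤ t → t ≤ i → 2 ≤ lam t := by
    intro t h1 h2
    have := aux_mono_le hm h1 h2
    omega
  have hmmu : ∀ j : ℕ, 1 ≤ j → mu (j + 1) ≤ mu j := by
    intro j hj
    rw [hmu, hmu]
    have h1 := hm j hj
    rcases Nat.lt_trichotomy j i with h | rfl | h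
    · rw [if_pos (by omega), if_pos (by omega)]; omega
    · rw [if_neg (by omega), if_pos (by omega)]; omega
    · rw [if_neg (by omega), if_neg (by omega)]; exact h1
  have M1 : ∀ t : ℕ, ε * (-1) ^ (mu t) = ε * (-1) ^ (lam t) := by
    intro t
    rw [hmu]
    rcases Nat.lt_or_ge i t with h | h
    · rw [if_neg (by omega)]
    · rw [if_pos (by omega)]
      rcases Nat.eq_zero_or_pos t with rfl | ht
      · rw [h0]
      · exact aux_sign_sub_two _ (hv t ht h)
  -- step transfer away from i-1, i+1
  have hstep : ∀ j : ℕ, j ≠ i - 1 → j ≠ i + 1 → (IsTwoStep ε mu j ↔ IsTwoStep ε lam j) := by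
    intro j hj1 hj2
    rcases Nat.eq_zero_or_pos j with rfl | hj0
    · constructor <;> (rintro ⟨h1, -⟩; exact absurd h1 (by omega))
    have e0 : mu (j - 1) = if j - 1 ≤ i then lam (j - 1) - 2 else lam (j - 1) := hmu _
    have e1 : mu j = if j ≤ i then lam j - 2 else lam j := hmu _
    have e2 : mu (j + 1) = if j + 1 ≤ i then lam (j + 1) - 2 else lam (j + 1) := hmu _
    have e3 : mu (j + 2) = if j + 2 ≤ i then lam (j + 2) - 2 else lam (j + 2) := hmu _
    rcases Nat.lt_trichotomy j i with h | rfl | h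
    · -- j ≤ i - 2 since j ≠ i - 1
      have hj : j + 2 ≤ i := by omega
      rw [if_pos (by omega)] at e0 e1 e2 e3
      have hv2 : 2 ≤ lam (j + 2) := hv _ (by omega) (by omega)
      have hv1 : 2 ≤ lam (j + 1) := hv _ (by omega) (by omega)
      have hvj : 2 ≤ lam j := hv _ (by omega) (by omega)
      constructor
      · rintro ⟨h1, h2, h3, h4, h5, h6, h7⟩
        rw [M1 j] at h4; rw [M1 (j + 1)] at h5
        refine ⟨h1, by omega, hm j h1, h4, h5, ?_, by omega⟩
        rcases Nat.lt_or_ge j 2 with hj' | hj'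
        · have hj1' : j = 1 := by omega
          subst hj1'
          show lam 0 ≠ lam 1
          have h8 : lam 2 ≤ lam 1 := hm 1 (by omega)
          omega
        · have hv0 : 2 ≤ lam (j - 1) := hv _ (by omega) (by omega)
          omega
      · rintro ⟨h1, h2, h3, h4, h5, h6, h7⟩
        rw [← M1 j] at h4; rw [← M1 (j + 1)] at h5
        have hl3 : 3 ≤ lam (j + 1) := by
          have h8 : lam (j + 2) ≤ lam (j + 1) := hm (j + 1) (by omega)
          omega
        refine ⟨h1, by omega, hmmu j h1, h4, h5, ?_, by omega⟩
        rcases Nat.lt_or_ge j 2 with hj' | hj'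
        · have hj1' : j = 1 := by omega
          subst hj1'
          show mu 0 ≠ mu 1
          have ee : mu 0 = 0 := by rw [hmu 0, if_pos (by omega)]; omega
          have e1' : mu 1 = lam 1 - 2 := by rw [hmu 1, if_pos (by omega)]
          have hb1 : 2 ≤ lam 1 := hv 1 (by omega) (by omega)
          have h8 : lam 2 ≤ lam 1 := hm 1 (by omega)
          have h9 : 3 ≤ lam 1 := by omega
          omega
        · have hv0 : 2 ≤ lam (j - 1) := hv _ (by omega) (by omega)
          omega
    · -- j = i
      rw [if_pos (by omega)] at e0 e1
      rw [if_neg (by omega)] at e2 e3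
      constructor
      · rintro ⟨h1, h2, h3, h4, h5, h6, h7⟩
        rw [M1 j] at h4; rw [M1 (j + 1)] at h5
        refine ⟨h1, by omega, hm j h1, h4, h5, ?_, by omega⟩
        rcases Nat.lt_or_ge j 2 with hj' | hj'
        · have hj1' : j = 1 := by omega
          subst hj1'
          show lam 0 ≠ lam 1
          omega
        · have hv0 : 2 ≤ lam (j - 1) := hv _ (by omega) (by omega)
          omega
      · rintro ⟨h1, h2, h3, h4, h5, h6, h7⟩
        rw [← M1 j] at h4; rw [← M1 (j + 1)] at h5
        refine ⟨h1, by omega, hmmu j h1, h4, h5, ?_, by omega⟩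
        rcases Nat.lt_or_ge j 2 with hj' | hj'
        · have hj1' : j = 1 := by omega
          subst hj1'
          show mu 0 ≠ mu 1
          have ee : mu 0 = 0 := by rw [hmu 0, if_pos (by omega)]; omega
          omega
        · have hv0 : 2 ≤ lam (j - 1) := hv _ (by omega) (by omega)
          omega
    · -- j ≥ i + 2
      rw [if_neg (by omega)] at e0 e1 e2 e3
      rw [iff_iff_eq]
      unfold IsTwoStep
      rw [e0, e1, e2, e3]
  -- steps i-1 and i+1 are dead in mu
  have hdeadL : ¬ IsTwoStep ε mu (i - 1) := by
    rintro ⟨h1, h2, h3, h4, h5, h6, h7⟩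
    have e1 : mu (i - 1 + 1) = lam i - 2 := by
      rw [show i - 1 + 1 = i by omega, hmu, if_pos (le_refl i)]
    have e2 : mu (i - 1 + 2) = lam (i + 1) := by
      rw [hmu, if_neg (by omega), show i - 1 + 2 = i + 1 by omega]
    rw [e1, e2] at h7
    omega
  have hdeadR : ¬ IsTwoStep ε mu (i + 1) := by
    rintro ⟨h1, h2, h3, h4, h5, h6, h7⟩
    have e1 : mu (i + 1 - 1) = lam i - 2 := by
      rw [hmu, if_pos (by omega), show i + 1 - 1 = i by omega]
    have e2 : mu (i + 1) = lam (i + 1) := by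
      rw [hmu, if_neg (by omega)]
    rw [e1, e2] at h6
    omega
  -- gap transfer away from i
  have hgapfact : ∀ t : ℕ, t ≠ i → mu t - mu (t + 1) = lam t - lam (t + 1) := by
    intro t ht
    rw [hmu t, hmu (t + 1)]
    rcases Nat.lt_trichotomy t i with h | rfl | h
    · rw [if_pos (by omega), if_pos (by omega)]
      have h2 := hv (t + 1) (by omega) (by omega)
      rcases Nat.eq_zero_or_pos t with rfl | ht'
      · rw [h0]; omega
      · have h3 := hv t ht' (by omega); omega
    · omega
    · rw [if_neg (by omega), if_neg (by omega)]
  have hbadiff : ∀ j : ℕ, 1 ≤ j → j ≠ i - 1 → j ≠ i + 1 →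
      (IsBadStep mu j ↔ IsBadStep lam j) := by
    intro j hj0 hj1 hj2
    unfold IsBadStep
    have g1 : mu (j + 1) - mu (j + 2) = lam (j + 1) - lam (j + 2) := by
      apply hgapfact
      omega
    have g2 : ∀ (hj : 1 < j), mu (j - 1) - mu j = lam (j - 1) - lam j := by
      intro hj
      have := hgapfact (j - 1) (by omega)
      rwa [show j - 1 + 1 = j by omega] at this
    constructor
    · rintro (⟨ha, he⟩ | he)
      · exact Or.inl ⟨ha, by rwa [g2 ha] at he⟩
      · exact Or.inr (by rwa [g1] at he)
    · rintro (⟨ha, he⟩ | he)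
      · exact Or.inl ⟨ha, by rwa [← g2 ha] at he⟩
      · exact Or.inr (by rwa [← g1] at he)
  have hbadL : IsTwoStep ε lam (i - 1) → IsBadStep lam (i - 1) := by
    intro h
    right
    rw [show i - 1 + 1 = i by omega, show i - 1 + 2 = i + 1 by omega]
    simp only [Nat.even_iff]
    omega
  have hbadR : IsTwoStep ε lam (i + 1) → IsBadStep lam (i + 1) := by
    intro h
    left
    refine ⟨by omega, ?_⟩
    rw [show i + 1 - 1 = i by omega]
    simp only [Nat.even_iff]
    omega
  -- set relations
  have hDsub : twoSteps ε mu ⊆ twoSteps ε lam := by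
    intro j hjm
    by_cases hj1 : j = i - 1
    · exact absurd (hj1 ▸ hjm) hdeadL
    by_cases hj2 : j = i + 1
    · exact absurd (hj2 ▸ hjm) hdeadR
    exact (hstep j hj1 hj2).1 hjm
  have hBsub : badSteps ε mu ⊆ badSteps ε lam := by
    rintro j ⟨hjs, hjb⟩
    by_cases hj1 : j = i - 1
    · exact absurd (hj1 ▸ hjs) hdeadL
    by_cases hj2 : j = i + 1
    · exact absurd (hj2 ▸ hjs) hdeadR
    exact ⟨(hstep j hj1 hj2).1 hjs, (hbadiff j hjs.1 hj1 hj2).1 hjb⟩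
  have hDiffEq : twoSteps ε lam \ twoSteps ε mu = badSteps ε lam \ badSteps ε mu := by
    ext j
    constructor
    · rintro ⟨hjl, hjm⟩
      have hj : j = i - 1 ∨ j = i + 1 := by
        by_contra h
        push_neg at h
        exact hjm ((hstep j h.1 h.2).2 hjl)
      have hbad : IsBadStep lam j := by
        rcases hj with rfl | rfl
        · exact hbadL hjl
        · exact hbadR hjl
      exact ⟨⟨hjl, hbad⟩, fun hc => hjm hc.1⟩
    · rintro ⟨⟨hjl, hjb⟩, hjm⟩
      refine ⟨hjl, fun hc => ?_⟩
      by_cases hj1 : j = i - 1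
      · exact absurd (hj1 ▸ hc) hdeadL
      by_cases hj2 : j = i + 1
      · exact absurd (hj2 ▸ hc) hdeadR
      exact hjm ⟨hc, (hbadiff j hjl.1 hj1 hj2).2 hjb⟩
  have hG : goodClusters ε mu ⊆ goodClusters ε lam := by
    rintro ⟨a, k⟩ ⟨⟨hk2, hsteps⟩, hnb⟩
    have hsteps' : ∀ j : ℕ, j < k → IsTwoStep ε lam (a + 2 * j) :=
      fun j hj => hDsub (hsteps j hj)
    refine ⟨⟨hk2, hsteps'⟩, fun hb => hnb ?_⟩
    have ha : a ≠ i + 1 := by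
      intro he
      exact hdeadR (he ▸ (by simpa using hsteps 0 (by omega)))
    have hE : a + 2 * (k - 1) ≠ i - 1 := by
      intro he
      exact hdeadL (he ▸ hsteps (k - 1) (by omega))
    have haep : 1 ≤ a := by
      have := hsteps 0 (by omega)
      simpa using this.1
    rcases hb with ⟨h1, h2, h3⟩ | ⟨h2, h3⟩
    · left
      have g : mu (a - 1) - mu a = lam (a - 1) - lam a := by
        have := hgapfact (a - 1) (by omega)
        rwa [show a - 1 + 1 = a by omega] at this
      exact ⟨h1, by rwa [← g] at h2, by rwa [← g] at h3⟩
    · right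
      have g : mu (a + 2 * (k - 1) + 1) - mu (a + 2 * (k - 1) + 2) =
          lam (a + 2 * (k - 1) + 1) - lam (a + 2 * (k - 1) + 2) := by
        apply hgapfact
        omega
      exact ⟨by rwa [← g] at h2, by rwa [← g] at h3⟩
  -- s-value
  have hin : i ≤ n := by
    by_contra h
    have := htop i (by omega)
    omega
  have hs : sVal lam n = sVal mu n + 1 := by
    rw [sVal_add (fun t => if t = i then 1 else 0) ?_, sum_single_ite 1 hi1 hin]
    intro t h1 h2
    by_cases ht : t = i
    · subst ht
      rw [if_pos rfl, hmu t, hmu (t + 1), if_pos (by omega), if_neg (by omega)]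
      omega
    · rw [if_neg ht, hgapfact t ht]
      omega
  -- counting
  have hfD := twoSteps_finite (ε := ε) (lam := lam) htop
  have hfB := badSteps_finite (ε := ε) (lam := lam) htop
  have hmutop : ∀ j : ℕ, n < j → mu j = 0 := by
    intro j hj
    rw [hmu]
    have := htop j hj
    split_ifs <;> omega
  have hfG := goodClusters_finite (ε := ε) (lam := lam) htop
  have hfGm := goodClusters_finite (ε := ε) (lam := mu) hmutop
  have eD : (twoSteps ε lam \ twoSteps ε mu).ncard + (twoSteps ε mu).ncard =
      (twoSteps ε lam).ncard := Set.ncard_diff_add_ncard_of_subset hDsub hfD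
  have eB : (badSteps ε lam \ badSteps ε mu).ncard + (badSteps ε mu).ncard =
      (badSteps ε lam).ncard := Set.ncard_diff_add_ncard_of_subset hBsub hfB
  have eS : (goodClusters ε mu).ncard ≤ (goodClusters ε lam).ncard :=
    Set.ncard_le_ncard hG hfG
  rw [hDiffEq] at eD
  unfold zVal
  rw [hs]
  push_cast
  omega
end CaseB

section CaseC

lemma ksOut_case2 {lam : ℕ → ℕ} {i : ℕ} (hc : ¬ (lam (i + 1) + 2 ≤ lam i)) (j : ℕ) :
    ksOut lam i j = if j < i then lam j - 2 else if j ≤ i + 1 then lam j - 1 else lam j := by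
  simp only [ksOut, if_neg hc]


lemma caseC_num {SL SR svl svm dl dm bl bm bd xl xi xr el sr il fl gl im fm gm : ℕ}
    (h1 : svl = svm + (SL + SR))
    (h2 : dl = dm + 1)
    (h3 : bd + bm = bl)
    (h4 : bd ≤ xl + xi + xr)
    (h5 : xi ≤ 1)
    (h6 : xl ≤ 1) (h7 : xr ≤ 1) (h8 : el ≤ 1) (h9 : sr ≤ 1)
    (h10 : xl = 0 ∨ el = 0) (h11 : xr = 0 ∨ sr = 0)
    (h12 : il + fl = gl) (h13 : im + fm = gm) (h14 : il = im)
    (h15 : fm ≤ el + sr)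
    (h16 : SL ≤ 1) (h17 : SR ≤ 1)
    (h18 : 1 ≤ xi → 1 ≤ SL + SR)
    (h19 : 1 ≤ xl + el → SL = 1)
    (h20 : 1 ≤ xr + sr → SR = 1)
    (h21 : ((1 ≤ xl + el ∧ 1 ≤ xr + sr) ∨ (1 ≤ xl + el ∧ SR = 0) ∨
        (1 ≤ xr + sr ∧ SL = 0)) → 1 ≤ fl) :
    (svm : ℤ) + (dm : ℤ) + (gm : ℤ) - (bm : ℤ) + 1 ≤
      (svl : ℤ) + (dl : ℤ) + (gl : ℤ) - (bl : ℤ) := by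
  omega

lemma caseC {ε : ℤ} {lam : ℕ → ℕ} {n i : ℕ} (h0 : lam 0 = 0)
    (hm : ∀ j : ℕ, 1 ≤ j → lam (j + 1) ≤ lam j) (htop : ∀ j : ℕ, n < j → lam j = 0)
    (hstepi : IsTwoStep ε lam i) (heq : lam i = lam (i + 1)) :
    zVal ε (ksOut lam i) n + 1 ≤ zVal ε lam n := by
  obtain ⟨hi1, hpos1, hle1, hsgi, hsgi1, hneL, hneR⟩ := hstepi
  set mu := ksOut lam i with hmudef
  have hmu : ∀ j, mu j = if j < i then lam j - 2 else if j ≤ i + 1 then lam j - 1 else lam j :=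
    ksOut_case2 (by omega)
  have hmui : mu i = lam i - 1 := by rw [hmu, if_neg (by omega), if_pos (by omega)]
  have hmui1 : mu (i + 1) = lam (i + 1) - 1 := by
    rw [hmu, if_neg (by omega), if_pos (by omega)]
  have hvi : 1 ≤ lam i := by omega
  have hin1 : i + 1 ≤ n := by
    by_contra h
    have := htop (i + 1) (by omega)
    omega
  have hL : ∀ t, 1 ≤ t → t < i → lam i + 1 ≤ lam t := by
    intro t h1 h2
    have e1 : lam (i - 1) ≤ lam t := aux_mono_le hm h1 (by omega)
    have e2 : lam i ≤ lam (i - 1) := by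
      have := hm (i - 1) (by omega)
      rwa [show i - 1 + 1 = i by omega] at this
    have e3 : lam (i - 1) ≠ lam i := hneL
    omega
  have hR : lam (i + 2) + 1 ≤ lam (i + 1) := by
    have h' : lam (i + 2) ≤ lam (i + 1) := hm (i + 1) (by omega)
    omega
  have hmmu : ∀ j : ℕ, 1 ≤ j → mu (j + 1) ≤ mu j := by
    intro j hj
    rcases Nat.lt_trichotomy (j + 1) i with h | h | h
    · rw [hmu (j + 1), if_pos (by omega), hmu j, if_pos (by omega)]
      have := hm j hj
      omega
    · -- j + 1 = i
      have hij : i = j + 1 := h.symm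
      subst hij
      rw [hmu (j + 1), if_neg (by omega), if_pos (by omega), hmu j, if_pos (by omega)]
      have := hL j hj (by omega)
      omega
    · rcases Nat.lt_trichotomy j (i + 1) with h' | h' | h'
      · -- j = i
        have hij : j = i := by omega
        subst hij
        rw [hmui, hmui1]
        omega
      · -- j = i + 1
        have hij : j = i + 1 := h'
        subst hij
        rw [hmui1, hmu (i + 1 + 1), if_neg (by omega), if_neg (by omega)]
        have hR' : lam (i + 1 + 1) + 1 ≤ lam (i + 1) := hR
        omega
      · rw [hmu (j + 1), if_neg (by omega), if_neg (by omega), hmu j, if_neg (by omega),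
          if_neg (by omega)]
        exact hm j hj
  have hsgn : ∀ t, t ≠ i → t ≠ i + 1 → ε * (-1) ^ (mu t) = ε * (-1) ^ (lam t) := by
    intro t ht1 ht2
    rw [hmu]
    rcases Nat.lt_or_ge t i with h | h
    · rw [if_pos h]
      rcases Nat.eq_zero_or_pos t with rfl | ht
      · rw [h0]
      · exact aux_sign_sub_two _ (by have := hL t ht h; omega)
    · rw [if_neg (by omega), if_neg (by omega)]
  have hsgnI : ε * (-1) ^ (mu i) = 1 := by
    rw [hmui, aux_sign_pred _ hvi, hsgi]
    norm_num
  have hsgnI1 : ε * (-1) ^ (mu (i + 1)) = 1 := by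
    rw [hmui1, aux_sign_pred _ (by omega), hsgi1]
    norm_num
  have hdeadI : ¬ IsTwoStep ε mu i := by
    rintro ⟨-, -, -, h4, -, -, -⟩
    rw [hsgnI] at h4
    norm_num at h4
  have hdeadL : ¬ IsTwoStep ε mu (i - 1) := by
    rintro ⟨h1, -, -, -, h5, -, -⟩
    rw [show i - 1 + 1 = i by omega, hsgnI] at h5
    norm_num at h5
  have hdeadR : ¬ IsTwoStep ε mu (i + 1) := by
    rintro ⟨-, -, -, h4, -, -, -⟩
    rw [hsgnI1] at h4
    norm_num at h4
  have hdeadLlam : ¬ IsTwoStep ε lam (i - 1) := by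
    rintro ⟨h1, -, -, -, -, -, h7⟩
    rw [show i - 1 + 1 = i by omega, show i - 1 + 2 = i + 1 by omega] at h7
    exact h7 heq
  have hdeadRlam : ¬ IsTwoStep ε lam (i + 1) := by
    rintro ⟨-, -, -, -, -, h6, -⟩
    rw [show i + 1 - 1 = i by omega] at h6
    exact h6 heq
  -- the step transfer
  have hstepiff : ∀ j : ℕ, j ≠ i - 1 → j ≠ i → j ≠ i + 1 →
      (IsTwoStep ε mu j ↔ IsTwoStep ε lam j) := by
    intro j hj1 hj2 hj3
    rcases Nat.eq_zero_or_pos j with rfl | hj0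
    · constructor <;> (rintro ⟨h1, -⟩; exact absurd h1 (by omega))
    have e0 : mu (j - 1) = if j - 1 < i then lam (j - 1) - 2
        else if j - 1 ≤ i + 1 then lam (j - 1) - 1 else lam (j - 1) := hmu _
    have e1 : mu j = if j < i then lam j - 2 else if j ≤ i + 1 then lam j - 1 else lam j := hmu _
    have e2 : mu (j + 1) = if j + 1 < i then lam (j + 1) - 2
        else if j + 1 ≤ i + 1 then lam (j + 1) - 1 else lam (j + 1) := hmu _
    have e3 : mu (j + 2) = if j + 2 < i then lam (j + 2) - 2
        else if j + 2 ≤ i + 1 then lam (j + 2) - 1 else lam (j + 2) := hmu _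
    rcases Nat.lt_or_ge j i with hj | hj
    · -- j ≤ i - 2
      have hji : j ≤ i - 2 := by omega
      rw [if_pos (by omega)] at e0 e1 e2
      rcases Nat.lt_or_ge (j + 2) i with hj2' | hj2'
      · -- region (a) : j ≤ i - 3
        rw [if_pos (by omega)] at e3
        have hv1 : lam i + 1 ≤ lam (j + 1) := hL _ (by omega) (by omega)
        have hv2 : lam i + 1 ≤ lam (j + 2) := hL _ (by omega) (by omega)
        have hvj : lam i + 1 ≤ lam j := hL _ (by omega) (by omega)
        constructor
        · rintro ⟨h1, h2, h3, h4, h5, h6, h7⟩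
          rw [hsgn j (by omega) (by omega)] at h4
          rw [hsgn (j + 1) (by omega) (by omega)] at h5
          refine ⟨h1, by omega, hm j h1, h4, h5, ?_, by omega⟩
          rcases Nat.lt_or_ge j 2 with hj' | hj'
          · have hj1' : j = 1 := by omega
            subst hj1'
            show lam 0 ≠ lam 1
            omega
          · have hv0 : lam i + 1 ≤ lam (j - 1) := hL _ (by omega) (by omega)
            omega
        · rintro ⟨h1, h2, h3, h4, h5, h6, h7⟩
          have h3' : 3 ≤ lam (j + 1) := by
            by_contra hcon
            have hl2 : lam (j + 1) = 2 := by omega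
            have hveq : lam i = 1 := by omega
            rw [hl2] at h5
            rw [hveq] at hsgi
            norm_num at h5 hsgi
            omega
          rw [← hsgn j (by omega) (by omega)] at h4
          rw [← hsgn (j + 1) (by omega) (by omega)] at h5
          refine ⟨h1, by omega, hmmu j h1, h4, h5, ?_, by omega⟩
          rcases Nat.lt_or_ge j 2 with hj' | hj'
          · have hj1' : j = 1 := by omega
            subst hj1'
            show mu 0 ≠ mu 1
            have ee : mu 0 = 0 := by rw [hmu 0, if_pos (by omega)]; omega
            have h8 : lam 2 ≤ lam 1 := hm 1 (by omega)
            omega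
          · have hv0 : lam i + 1 ≤ lam (j - 1) := hL _ (by omega) (by omega)
            omega
      · -- region (b) : j = i - 2
        have hji2 : j + 2 = i := by omega
        have hi3 : 3 ≤ i := by omega
        rw [if_neg (by omega), if_pos (by omega)] at e3
        have hv1 : lam i + 1 ≤ lam (j + 1) := hL _ (by omega) (by omega)
        have hvj : lam i + 1 ≤ lam j := hL _ (by omega) (by omega)
        have hlink : lam (j + 2) = lam i := by rw [hji2]
        have hne2 : lam (j + 1) ≠ lam (j + 2) := by
          rw [show j + 1 = i - 1 by omega, show j + 2 = i by omega]
          exact hneL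
        constructor
        · rintro ⟨h1, h2, h3, h4, h5, h6, h7⟩
          rw [hsgn j (by omega) (by omega)] at h4
          rw [hsgn (j + 1) (by omega) (by omega)] at h5
          refine ⟨h1, by omega, hm j h1, h4, h5, ?_, hne2⟩
          rcases Nat.lt_or_ge j 2 with hj' | hj'
          · have hj1' : j = 1 := by omega
            subst hj1'
            show lam 0 ≠ lam 1
            omega
          · have hv0 : lam i + 1 ≤ lam (j - 1) := hL _ (by omega) (by omega)
            omega
        · rintro ⟨h1, h2, h3, h4, h5, h6, h7⟩
          -- parity: lam (j+1) ≡ lam i, and lam (j+1) ≥ lam i + 1, so ≥ lam i + 2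
          have hpar : Even (lam (j + 1)) ↔ Even (lam i) := aux_parity_iff h5 hsgi
          have hv1' : lam i + 2 ≤ lam (j + 1) := by
            rw [Nat.even_iff, Nat.even_iff] at hpar
            omega
          rw [← hsgn j (by omega) (by omega)] at h4
          rw [← hsgn (j + 1) (by omega) (by omega)] at h5
          refine ⟨h1, by omega, hmmu j h1, h4, h5, ?_, by omega⟩
          rcases Nat.lt_or_ge j 2 with hj' | hj'
          · have hj1' : j = 1 := by omega
            subst hj1'
            show mu 0 ≠ mu 1
            have ee : mu 0 = 0 := by rw [hmu 0, if_pos (by omega)]; omega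
            omega
          · have hv0 : lam i + 1 ≤ lam (j - 1) := hL _ (by omega) (by omega)
            omega
    · rcases Nat.lt_or_ge (i + 2) j with hj' | hj'
      · -- region (d) : j ≥ i + 3
        rw [if_neg (by omega), if_neg (by omega)] at e0 e1 e2 e3
        rw [iff_iff_eq]
        unfold IsTwoStep
        rw [e0, e1, e2, e3]
      · -- region (c) : j = i + 2
        have hji : j = i + 2 := by omega
        subst hji
        rw [if_neg (by omega), if_pos (by omega)] at e0
        rw [if_neg (by omega), if_neg (by omega)] at e1 e2 e3
        constructor
        · rintro ⟨h1, h2, h3, h4, h5, h6, h7⟩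
          rw [hsgn (i + 2) (by omega) (by omega)] at h4
          rw [hsgn (i + 2 + 1) (by omega) (by omega)] at h5
          refine ⟨h1, by omega, hm _ h1, h4, h5, ?_, by omega⟩
          rw [show i + 2 - 1 = i + 1 by omega]
          exact hneR
        · rintro ⟨h1, h2, h3, h4, h5, h6, h7⟩
          have hpar : Even (lam (i + 2)) ↔ Even (lam (i + 1)) := aux_parity_iff h4 hsgi1
          have hv2' : lam (i + 2) + 2 ≤ lam (i + 1) := by
            rw [Nat.even_iff, Nat.even_iff] at hpar
            omega
          rw [← hsgn (i + 2) (by omega) (by omega)] at h4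
          rw [← hsgn (i + 2 + 1) (by omega) (by omega)] at h5
          refine ⟨h1, by omega, hmmu _ h1, h4, h5, ?_, by omega⟩
          rw [show i + 2 - 1 = i + 1 by omega, e1, hmui1]
          omega
  have hDset : twoSteps ε mu = twoSteps ε lam \ {i} := by
    ext j
    simp only [Set.mem_diff, Set.mem_singleton_iff, mem_twoSteps]
    constructor
    · intro hjm
      by_cases hj1 : j = i - 1
      · exact absurd (hj1 ▸ hjm) hdeadL
      by_cases hj2 : j = i
      · exact absurd (hj2 ▸ hjm) hdeadI
      by_cases hj3 : j = i + 1
      · exact absurd (hj3 ▸ hjm) hdeadR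
      exact ⟨(hstepiff j hj1 hj2 hj3).1 hjm, hj2⟩
    · rintro ⟨hjl, hj2⟩
      by_cases hj1 : j = i - 1
      · exact absurd (hj1 ▸ hjl) hdeadLlam
      by_cases hj3 : j = i + 1
      · exact absurd (hj3 ▸ hjl) hdeadRlam
      exact (hstepiff j hj1 hj2 hj3).2 hjl
  have hstepilam : IsTwoStep ε lam i := ⟨hi1, hpos1, hle1, hsgi, hsgi1, hneL, hneR⟩
  -- gap facts
  have hgapC : ∀ t : ℕ, t ≠ i - 1 → t ≠ i + 1 → mu t - mu (t + 1) = lam t - lam (t + 1) := by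
    intro t ht1 ht2
    rw [hmu t, hmu (t + 1)]
    rcases Nat.lt_or_ge t i with h | h
    · -- t < i and t ≠ i - 1 so t + 1 < i
      rw [if_pos h, if_pos (by omega)]
      rcases Nat.eq_zero_or_pos t with rfl | ht
      · rw [h0]; omega
      · have h2 := hL (t + 1) (by omega) (by omega)
        have h3 := hL t ht (by omega)
        omega
    · rcases Nat.lt_or_ge (i + 1) t with h' | h'
      · rw [if_neg (by omega), if_neg (by omega), if_neg (by omega), if_neg (by omega)]
      · -- t = i  (t = i+1 excluded)
        have : t = i := by omega
        subst this
        rw [if_neg (by omega), if_pos (by omega), if_neg (by omega), if_pos (by omega)]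
        omega
  have hgapL : 2 ≤ i → mu (i - 1) - mu i = (lam (i - 1) - lam i) - 1 := by
    intro h2
    rw [hmui, hmu (i - 1), if_pos (by omega)]
    have := hL (i - 1) (by omega) (by omega)
    omega
  have hgapR : mu (i + 1) - mu (i + 2) = (lam (i + 1) - lam (i + 2)) - 1 := by
    rw [hmui1, hmu (i + 2), if_neg (by omega), if_neg (by omega)]
    omega
  have hbadiff : ∀ j : ℕ, 1 ≤ j → j ≠ i - 2 → j ≠ i - 1 → j ≠ i → j ≠ i + 1 → j ≠ i + 2 →
      (IsBadStep mu j ↔ IsBadStep lam j) := by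
    intro j hj0 hj1 hj2 hj3 hj4 hj5
    unfold IsBadStep
    have g1 : mu (j + 1) - mu (j + 2) = lam (j + 1) - lam (j + 2) := by
      apply hgapC <;> omega
    have g2 : ∀ (hj : 1 < j), mu (j - 1) - mu j = lam (j - 1) - lam j := by
      intro hj
      have h := hgapC (j - 1) (by omega) (by omega)
      rwa [show j - 1 + 1 = j by omega] at h
    constructor
    · rintro (⟨ha, he⟩ | he)
      · exact Or.inl ⟨ha, by rwa [g2 ha] at he⟩
      · exact Or.inr (by rwa [g1] at he)
    · rintro (⟨ha, he⟩ | he)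
      · exact Or.inl ⟨ha, by rwa [← g2 ha] at he⟩
      · exact Or.inr (by rwa [← g1] at he)
  -- bad steps near i in lam
  have hbadL2 : IsTwoStep ε lam (i - 2) → IsBadStep lam (i - 2) := by
    rintro ⟨h1, h2, h3, h4, h5, h6, h7⟩
    right
    rw [show i - 2 + 1 = i - 1 by omega] at h5 ⊢
    rw [show i - 2 + 2 = i by omega]
    have hle : lam i ≤ lam (i - 1) := by
      have := hm (i - 1) (by omega)
      rwa [show i - 1 + 1 = i by omega] at this
    exact aux_even_sub hle (aux_parity_iff h5 hsgi)
  have hbadR2 : IsTwoStep ε lam (i + 2) → IsBadStep lam (i + 2) := by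
    rintro ⟨h1, h2, h3, h4, h5, h6, h7⟩
    left
    refine ⟨by omega, ?_⟩
    rw [show i + 2 - 1 = i + 1 by omega]
    exact aux_even_sub (by omega) (aux_parity_iff hsgi1 h4)
  have hBsub : badSteps ε mu ⊆ badSteps ε lam := by
    rintro j ⟨hjs, hjb⟩
    have hjl : IsTwoStep ε lam j ∧ j ≠ i := by
      have hmem : j ∈ twoSteps ε lam \ {i} := by rw [← hDset]; exact hjs
      exact hmem
    refine ⟨hjl.1, ?_⟩
    by_cases hj1 : j = i - 2
    · exact hj1 ▸ hbadL2 (hj1 ▸ hjl.1)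
    by_cases hj5 : j = i + 2
    · exact hj5 ▸ hbadR2 (hj5 ▸ hjl.1)
    have hj2 : j ≠ i - 1 := fun h => hdeadL (h ▸ hjs)
    have hj4 : j ≠ i + 1 := fun h => hdeadR (h ▸ hjs)
    exact (hbadiff j hjs.1 hj1 hj2 hjl.2 hj4 hj5).1 hjb
  have hBdiff : badSteps ε lam \ badSteps ε mu ⊆ {i - 2, i, i + 2} := by
    rintro j ⟨⟨hjl, hjb⟩, hjm⟩
    simp only [Set.mem_insert_iff, Set.mem_singleton_iff]
    by_contra hcon
    push_neg at hcon
    obtain ⟨hc1, hc2, hc3⟩ := hcon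
    have hj1 : j ≠ i - 1 := fun h => hdeadLlam (h ▸ hjl)
    have hj3 : j ≠ i + 1 := fun h => hdeadRlam (h ▸ hjl)
    exact hjm ⟨(hstepiff j hj1 hc2 hj3).2 hjl,
      (hbadiff j hjl.1 hc1 hj1 hc2 hj3 hc3).2 hjb⟩
  -- ## Part 2 : clusters
  have hstepSub : ∀ x : ℕ, IsTwoStep ε mu x → IsTwoStep ε lam x :=
    fun x hx => ((Set.ext_iff.mp hDset x).1 hx).1
  have hstepNe : ∀ x : ℕ, IsTwoStep ε mu x → x ≠ i :=
    fun x hx => ((Set.ext_iff.mp hDset x).1 hx).2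
  have hbound : ∀ a k : ℕ, IsTwoStep ε mu a → IsTwoStep ε mu (a + 2 * (k - 1)) →
      a ≠ i + 2 → a + 2 * (k - 1) ≠ i - 2 →
      (HasBadBoundary mu a k ↔ HasBadBoundary lam a k) := by
    intro a k hsa hse hane hene
    have ha1 : 1 ≤ a := hsa.1
    have hai : a ≠ i := hstepNe _ hsa
    have haim : a ≠ i - 1 := fun h => hdeadL (h ▸ hsa)
    have he' : a + 2 * (k - 1) ≠ i := hstepNe _ hse
    have hei1 : a + 2 * (k - 1) ≠ i - 1 := fun h => hdeadL (h ▸ hse)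
    have hei2 : a + 2 * (k - 1) ≠ i + 1 := fun h => hdeadR (h ▸ hse)
    have g1 : ∀ (_ : 1 < a), mu (a - 1) - mu a = lam (a - 1) - lam a := by
      intro h1a
      have h := hgapC (a - 1) (by omega) (by omega)
      rwa [show a - 1 + 1 = a by omega] at h
    have g2 : mu (a + 2 * (k - 1) + 1) - mu (a + 2 * (k - 1) + 2) =
        lam (a + 2 * (k - 1) + 1) - lam (a + 2 * (k - 1) + 2) := by
      apply hgapC <;> omega
    unfold HasBadBoundary
    constructor
    · rintro (⟨h1, h2, h3⟩ | ⟨h2, h3⟩)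
      · exact Or.inl ⟨h1, by rwa [g1 h1] at h2, by rwa [g1 h1] at h3⟩
      · exact Or.inr ⟨by rwa [g2] at h2, by rwa [g2] at h3⟩
    · rintro (⟨h1, h2, h3⟩ | ⟨h2, h3⟩)
      · exact Or.inl ⟨h1, by rwa [← g1 h1] at h2, by rwa [← g1 h1] at h3⟩
      · exact Or.inr ⟨by rwa [← g2] at h2, by rwa [← g2] at h3⟩
  set EL : Set (ℕ × ℕ) := {p | p ∈ goodClusters ε mu ∧ p.1 + 2 * (p.2 - 1) = i - 2}
    with hELdef
  set SR : Set (ℕ × ℕ) := {p | p ∈ goodClusters ε mu ∧ p.1 = i + 2} with hSRdef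
  have hMd : goodClusters ε mu \ goodClusters ε lam ⊆ EL ∪ SR := by
    rintro ⟨a, k⟩ ⟨hpm, hpl⟩
    obtain ⟨⟨hk2, hsteps⟩, hnb⟩ := hpm
    by_cases hane : a = i + 2
    · right; exact ⟨⟨⟨hk2, hsteps⟩, hnb⟩, hane⟩
    by_cases hene : a + 2 * (k - 1) = i - 2
    · left; exact ⟨⟨⟨hk2, hsteps⟩, hnb⟩, hene⟩
    exfalso
    apply hpl
    refine ⟨⟨hk2, fun j hj => hstepSub _ (hsteps j hj)⟩, fun hb => hnb ?_⟩
    have hsa := hsteps 0 (by omega)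
    rw [show a + 2 * 0 = a by omega] at hsa
    have hse := hsteps (k - 1) (by omega)
    exact (hbound a k hsa hse hane hene).2 hb
  have hELone : ∀ p ∈ EL, ∀ q ∈ EL, p = q := by
    have key : ∀ a1 k1 a2 k2 : ℕ, (a1, k1) ∈ EL → (a2, k2) ∈ EL → a1 < a2 → False := by
      rintro a1 k1 a2 k2 ⟨⟨⟨hk1, hst1⟩, hnb1⟩, hend1⟩ ⟨⟨⟨hk2', hst2⟩, hnb2⟩, hend2⟩ hlt
      simp only at hend1 hend2 hst1 hst2
      have ha1 : 1 ≤ a1 := by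
        have := hst1 0 (by omega)
        rw [show a1 + 2 * 0 = a1 by omega] at this
        exact this.1
      obtain ⟨t, ht⟩ : ∃ t, a2 = a1 + 2 * t := ⟨k1 - k2, by omega⟩
      have ht1 : 1 ≤ t := by omega
      have hs2 : IsTwoStep ε mu (a1 + 2 * (t - 1)) := hst1 (t - 1) (by omega)
      have hs2' : IsTwoStep ε mu (a1 + 2 * (t - 1) + 2) := by
        have h := hst2 0 (by omega)
        rwa [show a2 + 2 * 0 = a1 + 2 * (t - 1) + 2 by omega] at h
      have hip := aux_inner_gap hmmu hs2 hs2'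
      rw [show a1 + 2 * (t - 1) + 1 = a2 - 1 by omega,
          show a1 + 2 * (t - 1) + 2 = a2 by omega] at hip
      exact hnb2 (Or.inl ⟨by omega, hip.1, hip.2⟩)
    rintro ⟨a1, k1⟩ hp ⟨a2, k2⟩ hq
    rcases Nat.lt_trichotomy a1 a2 with h | h | h
    · exact absurd (key a1 k1 a2 k2 hp hq h) (not_false)
    · subst h
      have e1 := hp.2
      have e2 := hq.2
      simp only at e1 e2
      have hk1 := hp.1.1.1
      have hk2 := hq.1.1.1
      have : k1 = k2 := by omega
      rw [this]
    · exact absurd (key a2 k2 a1 k1 hq hp h) (not_false)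
  have hSRone : ∀ p ∈ SR, ∀ q ∈ SR, p = q := by
    have key : ∀ k1 k2 : ℕ, (i + 2, k1) ∈ SR → (i + 2, k2) ∈ SR → k1 < k2 → False := by
      rintro k1 k2 ⟨⟨⟨hk1, hst1⟩, hnb1⟩, -⟩ ⟨⟨⟨hk2', hst2⟩, hnb2⟩, -⟩ hlt
      simp only at hst1 hst2
      have hs2 : IsTwoStep ε mu (i + 2 + 2 * (k1 - 1)) := hst2 (k1 - 1) (by omega)
      have hs2' : IsTwoStep ε mu (i + 2 + 2 * (k1 - 1) + 2) := by
        have h := hst2 k1 (by omega)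
        rwa [show i + 2 + 2 * k1 = i + 2 + 2 * (k1 - 1) + 2 by omega] at h
      have hip := aux_inner_gap hmmu hs2 hs2'
      exact hnb1 (Or.inr ⟨hip.1, hip.2⟩)
    rintro ⟨a1, k1⟩ hp ⟨a2, k2⟩ hq
    have e1 : a1 = i + 2 := hp.2
    have e2 : a2 = i + 2 := hq.2
    subst e1; subst e2
    rcases Nat.lt_trichotomy k1 k2 with h | h | h
    · exact absurd (key k1 k2 hp hq h) (not_false)
    · rw [h]
    · exact absurd (key k2 k1 hq hp h) (not_false)
  -- full run construction
  have hfull : ∀ tL tR : ℕ, 1 ≤ tL + tR → 2 * tL < i →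
      (∀ s, 1 ≤ s → s ≤ tL → IsTwoStep ε lam (i - 2 * s)) →
      (∀ s, 1 ≤ s → s ≤ tR → IsTwoStep ε lam (i + 2 * s)) →
      ¬ (1 < i - 2 * tL ∧ 0 < lam (i - 2 * tL - 1) - lam (i - 2 * tL) ∧
          Even (lam (i - 2 * tL - 1) - lam (i - 2 * tL))) →
      ¬ (0 < lam (i + 2 * tR + 1) - lam (i + 2 * tR + 2) ∧
          Even (lam (i + 2 * tR + 1) - lam (i + 2 * tR + 2))) →
      1 ≤ (goodClusters ε lam \ goodClusters ε mu).ncard := by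
    intro tL tR hpos htL hstL hstR hbL hbR
    have hmem : ((i - 2 * tL, tL + tR + 1) : ℕ × ℕ) ∈
        goodClusters ε lam \ goodClusters ε mu := by
      simp only [Set.mem_diff, mem_goodClusters]
      refine ⟨⟨⟨by omega, ?_⟩, ?_⟩, ?_⟩
      · intro j hj
        show IsTwoStep ε lam (i - 2 * tL + 2 * j)
        rcases Nat.lt_trichotomy j tL with h | h | h
        · rw [show i - 2 * tL + 2 * j = i - 2 * (tL - j) by omega]
          exact hstL (tL - j) (by omega) (by omega)
        · subst h
          rw [show i - 2 * j + 2 * j = i by omega]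
          exact hstepilam
        · rw [show i - 2 * tL + 2 * j = i + 2 * (j - tL) by omega]
          exact hstR (j - tL) (by omega) (by omega)
      · intro hb
        rcases hb with ⟨h1, h2, h3⟩ | ⟨h2, h3⟩
        · exact hbL ⟨h1, h2, h3⟩
        · rw [show i - 2 * tL + 2 * (tL + tR + 1 - 1) + 1 = i + 2 * tR + 1 by omega,
              show i - 2 * tL + 2 * (tL + tR + 1 - 1) + 2 = i + 2 * tR + 2 by omega] at h2 h3
          exact hbR ⟨h2, h3⟩
      · rintro ⟨⟨-, hsteps⟩, -⟩
        have hstep_i := hsteps tL (by omega)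
        rw [show i - 2 * tL + 2 * tL = i by omega] at hstep_i
        exact hdeadI hstep_i
    have hfin : (goodClusters ε lam \ goodClusters ε mu).Finite :=
      (goodClusters_finite htop).subset Set.diff_subset
    exact (Set.ncard_pos hfin).2 ⟨_, hmem⟩
  -- ## Part 3 : counting
  obtain ⟨sL, hsLdef⟩ : ∃ x : ℕ, x = if 1 < i ∧ Even (lam (i - 1) - lam i) then 1 else 0 :=
    ⟨_, rfl⟩
  obtain ⟨sR, hsRdef⟩ : ∃ x : ℕ, x = if Even (lam (i + 1) - lam (i + 2)) then 1 else 0 :=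
    ⟨_, rfl⟩
  have hsLle : sL ≤ 1 := by rw [hsLdef]; split_ifs <;> omega
  have hsRle : sR ≤ 1 := by rw [hsRdef]; split_ifs <;> omega
  have hdL1 : 2 ≤ i → 1 ≤ lam (i - 1) - lam i := by
    intro h2
    have := hL (i - 1) (by omega) (by omega)
    omega
  have hdR1 : 1 ≤ lam (i + 1) - lam (i + 2) := by omega
  -- s-value comparison
  have hpt : ∀ t : ℕ, 1 ≤ t → t ≤ n → (lam t - lam (t + 1)) / 2 = (mu t - mu (t + 1)) / 2 +
      ((if t = i - 1 then sL else 0) + (if t = i + 1 then sR else 0)) := by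
    intro t h1 h2
    by_cases ht1 : t = i - 1
    · subst ht1
      have hi2 : 2 ≤ i := by omega
      rw [if_pos rfl, if_neg (by omega), show i - 1 + 1 = i by omega, hgapL hi2]
      have h3 := hdL1 hi2
      rw [hsLdef]
      split_ifs with hcond
      · rcases hcond with ⟨-, hcond⟩
        rw [Nat.even_iff] at hcond
        omega
      · have hodd : ¬ Even (lam (i - 1) - lam i) := fun he => hcond ⟨by omega, he⟩
        rw [Nat.even_iff] at hodd
        omega
    · by_cases ht2 : t = i + 1
      · subst ht2
        rw [if_neg (by omega), if_pos rfl, show i + 1 + 1 = i + 2 by omega, hgapR]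
        rw [hsRdef]
        split_ifs with hcond
        · rw [Nat.even_iff] at hcond
          omega
        · rw [Nat.even_iff] at hcond
          omega
      · rw [if_neg ht1, if_neg ht2, hgapC t ht1 ht2]
        omega
  have hs : sVal lam n = sVal mu n + (sL + sR) := by
    rw [sVal_add _ hpt, Finset.sum_add_distrib, sum_single_ite' sL (i - 1),
      sum_single_ite' sR (i + 1), if_pos (⟨by omega, by omega⟩ : 1 ≤ i + 1 ∧ i + 1 ≤ n)]
    congr 2
    by_cases h2 : 2 ≤ i
    · rw [if_pos ⟨by omega, by omega⟩]
    · rw [if_neg (by omega), hsLdef, if_neg (by omega)]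
  -- the exceptional bad-step sets
  obtain ⟨XI, hXIdef⟩ : ∃ S : Set ℕ, S = (badSteps ε lam \ badSteps ε mu) ∩ {i} := ⟨_, rfl⟩
  obtain ⟨XL, hXLdef⟩ : ∃ S : Set ℕ, S = (badSteps ε lam \ badSteps ε mu) ∩ {i - 2} := ⟨_, rfl⟩
  obtain ⟨XR, hXRdef⟩ : ∃ S : Set ℕ, S = (badSteps ε lam \ badSteps ε mu) ∩ {i + 2} := ⟨_, rfl⟩
  have hBdsplit : badSteps ε lam \ badSteps ε mu = XL ∪ XI ∪ XR := by
    rw [hXLdef, hXIdef, hXRdef]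
    ext j
    constructor
    · intro hj
      have h3 := hBdiff hj
      simp only [Set.mem_insert_iff, Set.mem_singleton_iff] at h3
      rcases h3 with h | h | h
      · exact Or.inl (Or.inl ⟨hj, h⟩)
      · exact Or.inl (Or.inr ⟨hj, h⟩)
      · exact Or.inr ⟨hj, h⟩
    · rintro ((⟨h, -⟩ | ⟨h, -⟩) | ⟨h, -⟩) <;> exact h
  -- finiteness
  have hmutop : ∀ j : ℕ, n < j → mu j = 0 := by
    intro j hj
    rw [hmu]
    have := htop j hj
    split_ifs <;> omega
  have hfD := twoSteps_finite (ε := ε) (lam := lam) htop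
  have hfDm := twoSteps_finite (ε := ε) (lam := mu) hmutop
  have hfB := badSteps_finite (ε := ε) (lam := lam) htop
  have hfG := goodClusters_finite (ε := ε) (lam := lam) htop
  have hfGm := goodClusters_finite (ε := ε) (lam := mu) hmutop
  have eD : (twoSteps ε lam).ncard = (twoSteps ε mu).ncard + 1 := by
    have hsub : twoSteps ε mu ⊆ twoSteps ε lam := fun x hx => hstepSub x hx
    have hdiffD : twoSteps ε lam \ twoSteps ε mu = {i} := by
      rw [hDset]
      ext j
      simp only [Set.mem_diff, Set.mem_singleton_iff]
      constructor
      · rintro ⟨hj, hj2⟩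
        by_contra hne
        exact hj2 ⟨hj, hne⟩
      · rintro rfl
        exact ⟨hstepilam, fun hc => hc.2 rfl⟩
    have eD0 := Set.ncard_diff_add_ncard_of_subset hsub hfD
    rw [hdiffD, Set.ncard_singleton] at eD0
    omega
  have eB := Set.ncard_diff_add_ncard_of_subset hBsub hfB
  have nBd : (badSteps ε lam \ badSteps ε mu).ncard ≤ XL.ncard + XI.ncard + XR.ncard := by
    rw [hBdsplit]
    have u1 := Set.ncard_union_le (XL ∪ XI) XR
    have u2 := Set.ncard_union_le XL XI
    omega
  have nXI1 : XI.ncard ≤ 1 := by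
    rw [hXIdef]
    calc ((badSteps ε lam \ badSteps ε mu) ∩ {i}).ncard ≤ ({i} : Set ℕ).ncard :=
          Set.ncard_le_ncard Set.inter_subset_right (Set.finite_singleton _)
      _ = 1 := Set.ncard_singleton _
  have nXL1 : XL.ncard ≤ 1 := by
    rw [hXLdef]
    calc ((badSteps ε lam \ badSteps ε mu) ∩ {i - 2}).ncard ≤ ({i - 2} : Set ℕ).ncard :=
          Set.ncard_le_ncard Set.inter_subset_right (Set.finite_singleton _)
      _ = 1 := Set.ncard_singleton _
  have nXR1 : XR.ncard ≤ 1 := by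
    rw [hXRdef]
    calc ((badSteps ε lam \ badSteps ε mu) ∩ {i + 2}).ncard ≤ ({i + 2} : Set ℕ).ncard :=
          Set.ncard_le_ncard Set.inter_subset_right (Set.finite_singleton _)
      _ = 1 := Set.ncard_singleton _
  have hELfin : EL.Finite := hfGm.subset (by rw [hELdef]; exact fun p hp => hp.1)
  have hSRfin : SR.Finite := hfGm.subset (by rw [hSRdef]; exact fun p hp => hp.1)
  have nEL1 : EL.ncard ≤ 1 := aux_ncard_le_one hELone
  have nSR1 : SR.ncard ≤ 1 := aux_ncard_le_one hSRone
  have eSl := Set.ncard_inter_add_ncard_diff_eq_ncard (goodClusters ε lam)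
    (goodClusters ε mu) hfG
  have eSm := Set.ncard_inter_add_ncard_diff_eq_ncard (goodClusters ε mu)
    (goodClusters ε lam) hfGm
  have einter : (goodClusters ε lam ∩ goodClusters ε mu).ncard
      = (goodClusters ε mu ∩ goodClusters ε lam).ncard := by rw [Set.inter_comm]
  have nMd : (goodClusters ε mu \ goodClusters ε lam).ncard ≤ EL.ncard + SR.ncard :=
    le_trans (Set.ncard_le_ncard hMd (hELfin.union hSRfin)) (Set.ncard_union_le _ _)
  -- trigger consequences
  have hXLprop : XL.Nonempty → IsTwoStep ε lam (i - 2) ∧ IsTwoStep ε mu (i - 2) ∧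
      ¬ IsBadStep mu (i - 2) := by
    rintro ⟨x, hx⟩
    rw [hXLdef] at hx
    obtain ⟨⟨hxB, hxNB⟩, hxeq⟩ := hx
    have hxe : x = i - 2 := hxeq
    subst hxe
    have hsl : IsTwoStep ε lam (i - 2) := hxB.1
    have hsm : IsTwoStep ε mu (i - 2) := by
      have hmem : (i - 2 : ℕ) ∈ twoSteps ε lam \ {i} :=
        ⟨hsl, by simp only [Set.mem_singleton_iff]; have := hsl.1; omega⟩
      rw [← hDset] at hmem
      exact hmem
    exact ⟨hsl, hsm, fun hb => hxNB ⟨hsm, hb⟩⟩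
  have hXRprop : XR.Nonempty → IsTwoStep ε lam (i + 2) ∧ IsTwoStep ε mu (i + 2) ∧
      ¬ IsBadStep mu (i + 2) := by
    rintro ⟨x, hx⟩
    rw [hXRdef] at hx
    obtain ⟨⟨hxB, hxNB⟩, hxeq⟩ := hx
    have hxe : x = i + 2 := hxeq
    subst hxe
    have hsl : IsTwoStep ε lam (i + 2) := hxB.1
    have hsm : IsTwoStep ε mu (i + 2) := by
      have hmem : (i + 2 : ℕ) ∈ twoSteps ε lam \ {i} :=
        ⟨hsl, by simp only [Set.mem_singleton_iff]; omega⟩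
      rw [← hDset] at hmem
      exact hmem
    exact ⟨hsl, hsm, fun hb => hxNB ⟨hsm, hb⟩⟩
  have hELprop : EL.Nonempty → ∃ a k : ℕ, 2 ≤ k ∧ a + 2 * (k - 1) = i - 2 ∧ 1 ≤ a ∧
      (∀ j, j < k → IsTwoStep ε mu (a + 2 * j)) ∧ ¬ HasBadBoundary mu a k := by
    rintro ⟨⟨a, k⟩, hp⟩
    rw [hELdef] at hp
    obtain ⟨⟨⟨hk2, hst⟩, hnb⟩, hend⟩ := hp
    simp only at hend hst hnb
    have ha1 : 1 ≤ a := by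
      have hh := hst 0 (by omega)
      rw [show a + 2 * 0 = a by omega] at hh
      exact hh.1
    exact ⟨a, k, hk2, hend, ha1, hst, hnb⟩
  have hSRprop : SR.Nonempty → ∃ k : ℕ, 2 ≤ k ∧
      (∀ j, j < k → IsTwoStep ε mu (i + 2 + 2 * j)) ∧ ¬ HasBadBoundary mu (i + 2) k := by
    rintro ⟨⟨a, k⟩, hp⟩
    rw [hSRdef] at hp
    obtain ⟨⟨⟨hk2, hst⟩, hnb⟩, heqa⟩ := hp
    simp only at heqa hst hnb
    subst heqa
    exact ⟨k, hk2, hst, hnb⟩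
  have hstepL_even : IsTwoStep ε lam (i - 2) → sL = 1 := by
    intro h
    obtain ⟨h1, -, -, -, h5, -, -⟩ := h
    rw [show i - 2 + 1 = i - 1 by omega] at h5
    have hle : lam i ≤ lam (i - 1) := by
      have := hL (i - 1) (by omega) (by omega)
      omega
    rw [hsLdef, if_pos ⟨by omega, aux_even_sub hle (aux_parity_iff h5 hsgi)⟩]
  have hstepR_even : IsTwoStep ε lam (i + 2) → sR = 1 := by
    intro h
    obtain ⟨-, -, -, h4, -, -, -⟩ := h
    rw [hsRdef, if_pos (aux_even_sub (by omega) (aux_parity_iff hsgi1 h4))]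
  have hsL1 : 1 ≤ XL.ncard + EL.ncard → sL = 1 := by
    intro h
    rcases Nat.eq_zero_or_pos XL.ncard with h0 | hpos
    · obtain ⟨a, k, hk2, hend, ha1, hst, hnb⟩ :=
        hELprop (Set.nonempty_of_ncard_ne_zero (by omega))
      have hstep := hst (k - 1) (by omega)
      rw [hend] at hstep
      exact hstepL_even (hstepSub _ hstep)
    · exact hstepL_even (hXLprop (Set.nonempty_of_ncard_ne_zero (by omega))).1
  have hsR1 : 1 ≤ XR.ncard + SR.ncard → sR = 1 := by
    intro h
    rcases Nat.eq_zero_or_pos XR.ncard with h0 | hpos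
    · obtain ⟨k, hk2, hst, hnb⟩ := hSRprop (Set.nonempty_of_ncard_ne_zero (by omega))
      have hstep := hst 0 (by omega)
      rw [show i + 2 + 2 * 0 = i + 2 by omega] at hstep
      exact hstepR_even (hstepSub _ hstep)
    · exact hstepR_even (hXRprop (Set.nonempty_of_ncard_ne_zero (by omega))).1
  have hXIs : 1 ≤ XI.ncard → 1 ≤ sL + sR := by
    intro h
    obtain ⟨x, hx⟩ := Set.nonempty_of_ncard_ne_zero (s := XI) (by omega)
    rw [hXIdef] at hx
    obtain ⟨⟨hxB, -⟩, hxeq⟩ := hx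
    have hxe : x = i := hxeq
    subst hxe
    rcases hxB.2 with ⟨h1, h2⟩ | h2
    · rw [hsLdef, if_pos ⟨h1, h2⟩]
      omega
    · rw [hsRdef, if_pos h2]
      omega
  have hexcL : XL.ncard = 0 ∨ EL.ncard = 0 := by
    by_contra hc
    push_neg at hc
    obtain ⟨h1, h2⟩ := hc
    obtain ⟨-, hsm, hnb⟩ := hXLprop (Set.nonempty_of_ncard_ne_zero h1)
    obtain ⟨a, k, hk2, hend, ha1, hst, hnbC⟩ := hELprop (Set.nonempty_of_ncard_ne_zero h2)
    have hs1 : IsTwoStep ε mu (a + 2 * (k - 2)) := hst (k - 2) (by omega)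
    have hs2 : IsTwoStep ε mu (a + 2 * (k - 2) + 2) := by
      have hh := hst (k - 1) (by omega)
      rwa [show a + 2 * (k - 1) = a + 2 * (k - 2) + 2 by omega] at hh
    have hip := aux_inner_gap hmmu hs1 hs2
    apply hnb
    left
    refine ⟨by omega, ?_⟩
    rw [show i - 2 - 1 = a + 2 * (k - 2) + 1 by omega,
        show (i - 2 : ℕ) = a + 2 * (k - 2) + 2 by omega]
    exact hip.2
  have hexcR : XR.ncard = 0 ∨ SR.ncard = 0 := by
    by_contra hc
    push_neg at hc
    obtain ⟨h1, h2⟩ := hc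
    obtain ⟨-, hsm, hnb⟩ := hXRprop (Set.nonempty_of_ncard_ne_zero h1)
    obtain ⟨k, hk2, hst, hnbC⟩ := hSRprop (Set.nonempty_of_ncard_ne_zero h2)
    have hs1 : IsTwoStep ε mu (i + 2 + 2 * 0) := hst 0 (by omega)
    have hs2 : IsTwoStep ε mu (i + 2 + 2 * 0 + 2) := by
      have hh := hst 1 (by omega)
      rwa [show i + 2 + 2 * 1 = i + 2 + 2 * 0 + 2 by omega] at hh
    have hip := aux_inner_gap hmmu hs1 hs2
    apply hnb
    right
    rw [show (i + 2 : ℕ) + 1 = i + 2 + 2 * 0 + 1 by omega,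
        show (i + 2 : ℕ) + 2 = i + 2 + 2 * 0 + 2 by omega]
    exact hip.2
  -- trigger data for the full-run construction
  have hLtrig : 1 ≤ XL.ncard + EL.ncard → ∃ tL, 1 ≤ tL ∧ 2 * tL < i ∧
      (∀ s, 1 ≤ s → s ≤ tL → IsTwoStep ε lam (i - 2 * s)) ∧
      ¬ (1 < i - 2 * tL ∧ 0 < lam (i - 2 * tL - 1) - lam (i - 2 * tL) ∧
          Even (lam (i - 2 * tL - 1) - lam (i - 2 * tL))) := by
    intro h
    rcases Nat.eq_zero_or_pos XL.ncard with h0 | hpos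
    · obtain ⟨a, k, hk2, hend, ha1, hst, hnb⟩ :=
        hELprop (Set.nonempty_of_ncard_ne_zero (by omega))
      refine ⟨k, by omega, by omega, ?_, ?_⟩
      · intro s hs1 hs2
        have hh := hst (k - s) (by omega)
        rw [show a + 2 * (k - s) = i - 2 * s by omega] at hh
        exact hstepSub _ hh
      · rintro ⟨c1, c2, c3⟩
        rw [show i - 2 * k = a by omega] at c1 c2 c3
        apply hnb
        left
        have g1 : mu (a - 1) - mu a = lam (a - 1) - lam a := by
          have hgc := hgapC (a - 1) (by omega) (by omega)
          rwa [show a - 1 + 1 = a by omega] at hgc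
        exact ⟨c1, by rwa [← g1] at c2, by rwa [← g1] at c3⟩
    · obtain ⟨hsl, hsm, hnbad⟩ := hXLprop (Set.nonempty_of_ncard_ne_zero (by omega))
      have hi3 : 3 ≤ i := by have := hsl.1; omega
      refine ⟨1, le_rfl, by omega, ?_, ?_⟩
      · intro s hs1 hs2
        have hse : s = 1 := by omega
        subst hse
        rw [show i - 2 * 1 = i - 2 by omega]
        exact hsl
      · rintro ⟨c1, c2, c3⟩
        rw [show i - 2 * 1 = i - 2 by omega] at c1 c2 c3
        apply hnbad
        left
        refine ⟨c1, ?_⟩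
        have g1 : mu (i - 2 - 1) - mu (i - 2) = lam (i - 2 - 1) - lam (i - 2) := by
          have hgc := hgapC (i - 3) (by omega) (by omega)
          rwa [show i - 3 + 1 = i - 2 by omega, show (i - 3 : ℕ) = i - 2 - 1 by omega] at hgc
        rw [g1]
        exact c3
  have hRtrig : 1 ≤ XR.ncard + SR.ncard → ∃ tR, 1 ≤ tR ∧
      (∀ s, 1 ≤ s → s ≤ tR → IsTwoStep ε lam (i + 2 * s)) ∧
      ¬ (0 < lam (i + 2 * tR + 1) - lam (i + 2 * tR + 2) ∧
          Even (lam (i + 2 * tR + 1) - lam (i + 2 * tR + 2))) := by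
    intro h
    rcases Nat.eq_zero_or_pos XR.ncard with h0 | hpos
    · obtain ⟨k, hk2, hst, hnb⟩ := hSRprop (Set.nonempty_of_ncard_ne_zero (by omega))
      refine ⟨k, by omega, ?_, ?_⟩
      · intro s hs1 hs2
        have hh := hst (s - 1) (by omega)
        rw [show i + 2 + 2 * (s - 1) = i + 2 * s by omega] at hh
        exact hstepSub _ hh
      · rintro ⟨c2, c3⟩
        apply hnb
        right
        have g1 : mu (i + 2 + 2 * (k - 1) + 1) - mu (i + 2 + 2 * (k - 1) + 2)
            = lam (i + 2 + 2 * (k - 1) + 1) - lam (i + 2 + 2 * (k - 1) + 2) := by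
          apply hgapC <;> omega
        rw [show i + 2 * k + 1 = i + 2 + 2 * (k - 1) + 1 by omega,
            show i + 2 * k + 2 = i + 2 + 2 * (k - 1) + 2 by omega] at c2 c3
        exact ⟨by rwa [← g1] at c2, by rwa [← g1] at c3⟩
    · obtain ⟨hsl, hsm, hnbad⟩ := hXRprop (Set.nonempty_of_ncard_ne_zero (by omega))
      refine ⟨1, le_rfl, ?_, ?_⟩
      · intro s hs1 hs2
        have hse : s = 1 := by omega
        subst hse
        rw [show i + 2 * 1 = i + 2 by omega]
        exact hsl
      · rintro ⟨c2, c3⟩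
        apply hnbad
        right
        have g1 : mu (i + 2 + 1) - mu (i + 2 + 2) = lam (i + 2 + 1) - lam (i + 2 + 2) := by
          apply hgapC <;> omega
        rw [show i + 2 * 1 + 1 = i + 2 + 1 by omega,
            show i + 2 * 1 + 2 = i + 2 + 2 by omega] at c3
        rw [g1]
        exact c3
  have hLfree : sL = 0 →
      ¬ (1 < i - 2 * 0 ∧ 0 < lam (i - 2 * 0 - 1) - lam (i - 2 * 0) ∧
          Even (lam (i - 2 * 0 - 1) - lam (i - 2 * 0))) := by
    intro h0 hc
    obtain ⟨c1, c2, c3⟩ := hc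
    rw [show i - 2 * 0 = i by omega] at c1 c2 c3
    by_cases hcond : 1 < i ∧ Even (lam (i - 1) - lam i)
    · rw [hsLdef, if_pos hcond] at h0
      omega
    · exact hcond ⟨c1, c3⟩
  have hRfree : sR = 0 →
      ¬ (0 < lam (i + 2 * 0 + 1) - lam (i + 2 * 0 + 2) ∧
          Even (lam (i + 2 * 0 + 1) - lam (i + 2 * 0 + 2))) := by
    intro h0 hc
    obtain ⟨c2, c3⟩ := hc
    rw [show i + 2 * 0 + 1 = i + 1 by omega, show i + 2 * 0 + 2 = i + 2 by omega] at c2 c3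
    by_cases hcond : Even (lam (i + 1) - lam (i + 2))
    · rw [hsRdef, if_pos hcond] at h0
      omega
    · exact hcond c3
  -- final assembly
  have h19 : ((1 ≤ XL.ncard + EL.ncard ∧ 1 ≤ XR.ncard + SR.ncard) ∨
      (1 ≤ XL.ncard + EL.ncard ∧ sR = 0) ∨ (1 ≤ XR.ncard + SR.ncard ∧ sL = 0)) →
      1 ≤ (goodClusters ε lam \ goodClusters ε mu).ncard := by
    rintro (⟨hTL, hTR⟩ | ⟨hTL, hsr⟩ | ⟨hTR, hsl⟩)
    · obtain ⟨tL, htL1, htL2, hstL, hbL⟩ := hLtrig hTL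
      obtain ⟨tR, htR1, hstR, hbR⟩ := hRtrig hTR
      exact hfull tL tR (by omega) htL2 hstL hstR hbL hbR
    · obtain ⟨tL, htL1, htL2, hstL, hbL⟩ := hLtrig hTL
      exact hfull tL 0 (by omega) htL2 hstL (fun s h1 h2 => absurd h1 (by omega)) hbL
        (hRfree hsr)
    · obtain ⟨tR, htR1, hstR, hbR⟩ := hRtrig hTR
      exact hfull 0 tR (by omega) (by omega) (fun s h1 h2 => absurd h1 (by omega)) hstR
        (hLfree hsl) hbR
  unfold zVal
  exact caseC_num hs eD eB nBd nXI1 nXL1 nXR1 nEL1 nSR1 hexcL hexcR eSl eSm einter nMd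
    hsLle hsRle hXIs hsL1 hsR1 h19

end CaseC

/-- For an admissible index `i` of `λ ∈ 𝒫_ε(N)` one has `z(λ) ≥ z(λ^{(i)}) + 1`. -/
theorem stmt12 (ε : ℤ) (hε : ε = 1 ∨ ε = -1) (N n : ℕ) (lam : ℕ → ℕ)
    (hlam : KSPartition ε N n lam) (i : ℕ)
    (hi : IsAdmissibleIndex ε lam i) :
    zVal ε (ksOut lam i) n + 1 ≤ zVal ε lam n := by
  
  obtain ⟨h0, hpos, hm, htop, hsum, hpar⟩ := hlam
  rcases hi with ⟨hi1, hgap⟩ | ⟨hstep, heq⟩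
  · rcases Nat.lt_or_ge (lam (i + 1) + 2) (lam i) with h | h
    · exact caseA h0 hm htop hi1 (by omega)
    · exact caseB h0 hm htop hi1 (by omega)
  · exact caseC h0 hm htop hstep heq
end

section
/- Let λ = (λ_1,…,λ_n) ∈ P_ε(N) be such that ε(−1)^{λ_i} = −1 for every 1 ≤ i ≤ n. Then there exists an admissible sequence for λ of length z(λ). -/
open Finset

lemma myOddPow (x : ℕ) (h : x % 2 = 1) : ((-1:ℤ))^x = -1 :=
  Odd.neg_one_pow (Nat.odd_iff.mpr h)

lemma myOddOf (x : ℕ) (h : (1:ℤ) * (-1:ℤ)^x = -1) : x % 2 = 1 := by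
  rcases Nat.even_or_odd x with he | ho
  · rw [one_mul, he.neg_one_pow] at h; norm_num at h
  · exact Nat.odd_iff.mp ho

lemma myEvenOf (x : ℕ) (h : (-1:ℤ) * (-1:ℤ)^x = -1) : x % 2 = 0 := by
  rcases Nat.even_or_odd x with he | ho
  · exact Nat.even_iff.mp he
  · rw [ho.neg_one_pow] at h; norm_num at h

lemma myKsApplyAppend (lam : ℕ → ℕ) (l1 l2 : List ℕ) :
    ksApply lam (l1 ++ l2) = ksApply (ksApply lam l1) l2 := by
  induction l1 generalizing lam with
  | nil => rfl
  | cons i t ih => simpa [ksApply] using ih (ksOut lam i)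

lemma myAdmAppend (ε : ℤ) (lam : ℕ → ℕ) (l1 l2 : List ℕ)
    (h1 : IsAdmissibleSeq ε lam l1)
    (h2 : IsAdmissibleSeq ε (ksApply lam l1) l2) :
    IsAdmissibleSeq ε lam (l1 ++ l2) := by
  induction l1 generalizing lam with
  | nil => exact h2
  | cons i t ih => exact ⟨h1.1, ih (ksOut lam i) h1.2 h2⟩

lemma myRep (ε : ℤ) (i : ℕ) (hi : 1 ≤ i) :
    ∀ (m : ℕ) (lam : ℕ → ℕ), lam (i+1) + 2*m ≤ lam i →
      IsAdmissibleSeq ε lam (List.replicate m i) ∧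
      ksApply lam (List.replicate m i) = fun j => if j ≤ i then lam j - 2*m else lam j := by
  intro m
  induction m with
  | zero =>
    intro lam _
    refine ⟨trivial, ?_⟩
    funext j
    show lam j = if j ≤ i then lam j - 2*0 else lam j
    split_ifs <;> omega
  | succ m ihm =>
    intro lam h
    have hc : lam (i+1) + 2 ≤ lam i := by omega
    have hko : ksOut lam i = fun j => if j ≤ i then lam j - 2 else lam j := by
      funext j
      simp only [ksOut]
      rw [if_pos hc]
    have hnext : (ksOut lam i) (i+1) + 2*m ≤ (ksOut lam i) i := by
      rw [hko]
      simp only []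
      rw [if_neg (by omega : ¬ i+1 ≤ i), if_pos (le_refl i)]
      omega
    obtain ⟨adm, st⟩ := ihm (ksOut lam i) hnext
    rw [List.replicate_succ]
    refine ⟨⟨Or.inl ⟨hi, hc⟩, adm⟩, ?_⟩
    show ksApply (ksOut lam i) (List.replicate m i) = _
    rw [st, hko]
    funext j
    simp only []
    split_ifs <;> omega

lemma myTele (lam : ℕ → ℕ) (r n : ℕ)
    (hmono : ∀ i, 1 ≤ i → lam (i+1) ≤ lam i)
    (hpar : ∀ i, 1 ≤ i → i ≤ n → lam i % 2 = r) :
    ∀ m, m < n →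
      2 * (∑ i ∈ Finset.Icc 1 m, (lam i - lam (i+1))/2) = lam 1 - lam (m+1) ∧
      lam (m+1) ≤ lam 1 := by
  intro m
  induction m with
  | zero =>
    intro _
    rw [Finset.Icc_eq_empty (by omega)]
    have he : lam (0+1) = lam 1 := rfl
    simp
  | succ m ihm =>
    intro hm
    obtain ⟨h1, h2⟩ := ihm (by omega)
    rw [Finset.sum_Icc_succ_top (by omega : 1 ≤ m+1)]
    have hp1 := hpar (m+1) (by omega) (by omega)
    have hp2 := hpar (m+2) (by omega) (by omega)
    have hm1 : lam (m+1+1) ≤ lam (m+1) := hmono (m+1) (by omega)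
    have he : lam (m+1+1) = lam (m+2) := rfl
    constructor <;> omega

lemma myTwoSval (lam : ℕ → ℕ) (n r : ℕ) (hr : r ≤ 1)
    (hmono : ∀ i, 1 ≤ i → lam (i+1) ≤ lam i)
    (hpar : ∀ i, 1 ≤ i → i ≤ n → lam i % 2 = r)
    (htop : lam (n+1) = 0) :
    2 * sVal lam n + (if n = 0 then 0 else r) = lam 1 := by
  cases n with
  | zero =>
    have h1 : lam 1 = 0 := htop
    have h0 : sVal lam 0 = 0 := by
      unfold sVal
      rw [Finset.Icc_eq_empty (by omega)]
      simp
    simp [h0, h1]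
  | succ n =>
    obtain ⟨h1, h2⟩ := myTele lam r (n+1) hmono hpar n (by omega)
    have hsv : sVal lam (n+1) =
        (∑ i ∈ Finset.Icc 1 n, (lam i - lam (i+1))/2) + (lam (n+1) - lam (n+1+1))/2 := by
      unfold sVal
      rw [Finset.sum_Icc_succ_top (by omega : 1 ≤ n+1)]
    have hp := hpar (n+1) (by omega) (by omega)
    rw [hsv, if_neg (by omega : ¬ n+1 = 0)]
    omega
lemma myFlatten (ε : ℤ) (r : ℕ) (hr : r ≤ 1) :
    ∀ (n : ℕ) (lam : ℕ → ℕ),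
      (∀ i, 1 ≤ i → i ≤ n → lam i % 2 = r) →
      (∀ i, 1 ≤ i → i ≤ n → lam (i+1) ≤ lam i) →
      lam (n+1) ≤ r →
      ∃ l : List ℕ, IsAdmissibleSeq ε lam l ∧ l.length = (lam 1 - r)/2 := by
  intro n
  induction n with
  | zero =>
    intro lam _ _ htop
    have h1 : lam 1 ≤ r := htop
    exact ⟨[], trivial, by simp only [List.length_nil]; omega⟩
  | succ n ih =>
    intro lam hpar hmono htop
    have hparn : lam (n+1) % 2 = r := hpar (n+1) (by omega) (by omega)
    set c := (lam (n+1) - r)/2 with hc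
    obtain ⟨adm1, st1⟩ := myRep ε (n+1) (by omega) c lam (by omega)
    set lam' : ℕ → ℕ := fun j => if j ≤ n+1 then lam j - 2*c else lam j with hl'
    have hchain : ∀ i, 1 ≤ i → i ≤ n+1 → lam (n+1) ≤ lam i := by
      intro i h1 h2
      have key : ∀ d, i + d ≤ n+1 → lam (i+d) ≤ lam i := by
        intro d
        induction d with
        | zero => intro _; exact le_rfl
        | succ dd ihd =>
          intro hdd
          have h3 : lam (i+dd+1) ≤ lam (i+dd) := hmono (i+dd) (by omega) (by omega)
          have h4 : lam (i+dd) ≤ lam i := ihd (by omega)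
          have h5 : lam (i + (dd+1)) = lam (i+dd+1) := rfl
          omega
      have hk := key (n+1-i) (by omega)
      rwa [(by omega : i + (n+1-i) = n+1)] at hk
    obtain ⟨l2, adm2, len2⟩ := ih lam'
      (fun i h1 h2 => by
        have hg := hchain i h1 (by omega)
        have hp := hpar i h1 (by omega)
        simp only [hl']
        split_ifs <;> omega)
      (fun i h1 h2 => by
        have hm := hmono i h1 (by omega)
        simp only [hl']
        split_ifs <;> omega)
      (by simp only [hl']
          split_ifs <;> omega)
    refine ⟨List.replicate c (n+1) ++ l2,
      myAdmAppend _ _ _ _ adm1 (by rw [st1]; exact adm2), ?_⟩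
    have hl'1 : lam' 1 = lam 1 - 2*c := by
      simp only [hl']
      split_ifs <;> omega
    rw [List.length_append, List.length_replicate, len2, hl'1]
    have hg1 := hchain 1 (by omega) (by omega)
    have hp1 := hpar 1 (by omega) (by omega)
    omega
lemma myCluster :
    ∀ (k a : ℕ) (lam : ℕ → ℕ), 1 ≤ a →
      (∀ i, a ≤ i → i < a + 2*k → lam i % 2 = 1) →
      (∀ i, a ≤ i → i < a + 2*k → lam (i+1) ≤ lam i) →
      lam (a + 2*k) = 0 →
      (∀ j, j + 2 ≤ k → lam (a + 2*j + 2) < lam (a + 2*j + 1)) →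
      lam (a - 1) % 2 = 0 →
      1 ≤ k →
      ∃ l : List ℕ, IsAdmissibleSeq 1 lam l ∧ l.length = (lam a - 1)/2 + 1 := by
  intro k
  induction k with
  | zero => intro a lam _ _ _ _ _ _ hk; omega
  | succ k ih =>
    intro a lam ha hodd hmono htop hdrop hleft _
    have ho_a : lam a % 2 = 1 := hodd a le_rfl (by omega)
    have ho_a1 : lam (a+1) % 2 = 1 := hodd (a+1) (by omega) (by omega)
    have hm_a : lam (a+1) ≤ lam a := hmono a le_rfl (by omega)
    rcases Nat.eq_zero_or_pos k with hk0 | hk1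
    · -- base case: one pair (a, a+1)
      subst hk0
      have htop2 : lam (a+2) = 0 := htop
      set c1 := (lam (a+1) - 1)/2 with hc1
      obtain ⟨adm1, st1⟩ := myRep 1 (a+1) (by omega) c1 lam (by
        have he : lam (a+1+1) = lam (a+2) := rfl
        omega)
      set lam1 : ℕ → ℕ := fun j => if j ≤ a+1 then lam j - 2*c1 else lam j with hl1
      set c2 := (lam a - lam (a+1))/2 with hc2
      obtain ⟨adm2, st2⟩ := myRep 1 a (by omega) c2 lam1 (by
        simp only [hl1]; split_ifs <;> omega)
      set lam2 : ℕ → ℕ := fun j => if j ≤ a then lam1 j - 2*c2 else lam1 j with hl2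
      have hv_a : lam2 a = 1 := by
        simp only [hl2, hl1]; split_ifs <;> omega
      have hv_a1 : lam2 (a+1) = 1 := by
        simp only [hl2, hl1]; split_ifs <;> omega
      have hv_am : lam2 (a-1) % 2 = 0 := by
        simp only [hl2, hl1]; split_ifs <;> omega
      have hv_a2 : lam2 (a+2) = 0 := by
        simp only [hl2, hl1]; split_ifs <;> omega
      have hstep : IsTwoStep 1 lam2 a := by
        refine ⟨ha, by omega, by omega, ?_, ?_, by omega, by omega⟩
        · rw [hv_a]; norm_num
        · rw [hv_a1]; norm_num
      have hidx : IsAdmissibleIndex 1 lam2 a := Or.inr ⟨hstep, by omega⟩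
      refine ⟨List.replicate c1 (a+1) ++ (List.replicate c2 a ++ [a]), ?_, ?_⟩
      · apply myAdmAppend _ _ _ _ adm1
        rw [st1]
        apply myAdmAppend _ _ _ _ adm2
        rw [st2]
        exact ⟨hidx, trivial⟩
      · simp only [List.length_append, List.length_replicate, List.length_cons,
          List.length_nil]
        omega
    · -- inductive step
      have ho_a2 : lam (a+2) % 2 = 1 := hodd (a+2) (by omega) (by omega)
      have hdrop0 : lam (a+2) < lam (a+1) := by
        have hd0 := hdrop 0 (by omega)
        have e1 : lam (a + 2*0 + 2) = lam (a+2) := rfl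
        have e2 : lam (a + 2*0 + 1) = lam (a+1) := rfl
        omega
      set d := (lam a - lam (a+1))/2 with hd
      obtain ⟨adm1, st1⟩ := myRep 1 a (by omega) d lam (by omega)
      set lam1 : ℕ → ℕ := fun j => if j ≤ a then lam j - 2*d else lam j with hl1
      have hv1a : lam1 a = lam (a+1) := by
        simp only [hl1]; split_ifs <;> omega
      have hv1a1 : lam1 (a+1) = lam (a+1) := by
        simp only [hl1]; split_ifs <;> omega
      have hv1am : lam1 (a-1) % 2 = 0 := by
        simp only [hl1]; split_ifs <;> omega
      have hv1a2 : lam1 (a+2) = lam (a+2) := by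
        simp only [hl1]; split_ifs <;> omega
      have hc2c : ¬ (lam1 (a+1) + 2 ≤ lam1 a) := by omega
      have hstep : IsTwoStep 1 lam1 a := by
        refine ⟨ha, by omega, by omega, ?_, ?_, by omega, by omega⟩
        · rw [hv1a, one_mul]; exact myOddPow _ ho_a1
        · rw [hv1a1, one_mul]; exact myOddPow _ ho_a1
      have hidx : IsAdmissibleIndex 1 lam1 a := Or.inr ⟨hstep, by omega⟩
      set lam2 : ℕ → ℕ := fun j =>
        if j < a then lam j - (2*d+2) else if j ≤ a+1 then lam (a+1) - 1 else lam j with hl2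
      have st2 : ksOut lam1 a = lam2 := by
        funext j
        have hred : ksOut lam1 a j =
            if j < a then lam1 j - 2 else if j ≤ a+1 then lam1 j - 1 else lam1 j := by
          simp only [ksOut]
          rw [if_neg hc2c]
        rw [hred]
        rcases Nat.lt_trichotomy j a with h | h | h
        · simp only [hl2, hl1]; split_ifs <;> omega
        · subst h; simp only [hl2, hl1]; split_ifs <;> omega
        · rcases Nat.lt_or_ge j (a+2) with h2 | h2
          · have hj : j = a+1 := by omega
            subst hj; simp only [hl2, hl1]; split_ifs <;> omega
          · simp only [hl2, hl1]; split_ifs <;> omega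
      set g := lam (a+1) - lam (a+2) with hg
      set t := g/2 - 1 with ht
      obtain ⟨adm3, st3⟩ := myRep 1 (a+1) (by omega) t lam2 (by
        have e1 : lam2 (a+1+1) = lam2 (a+2) := rfl
        have e2 : lam2 (a+2) = lam (a+2) := by
          simp only [hl2]; split_ifs <;> omega
        have e3 : lam2 (a+1) = lam (a+1) - 1 := by
          simp only [hl2]; split_ifs <;> omega
        omega)
      set lam3 : ℕ → ℕ := fun j => if j ≤ a+1 then lam2 j - 2*t else lam2 j with hl3
      have hsame : ∀ i, a+2 ≤ i → lam3 i = lam i := by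
        intro i hi
        simp only [hl3, hl2]
        split_ifs <;> omega
      have hv3a1 : lam3 (a+1) = lam (a+2) + 1 := by
        simp only [hl3, hl2]
        split_ifs <;> omega
      obtain ⟨l4, adm4, len4⟩ := ih (a+2) lam3 (by omega)
        (fun i h1 h2 => by
          rw [hsame i h1]
          exact hodd i (by omega) (by omega))
        (fun i h1 h2 => by
          rw [hsame i h1, hsame (i+1) (by omega)]
          exact hmono i (by omega) (by omega))
        (by rw [hsame _ (by omega : a+2 ≤ a+2+2*k),
              (by omega : a+2+2*k = a + 2*(k+1))]
            exact htop)
        (fun j hj => by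
          rw [hsame _ (by omega), hsame _ (by omega)]
          have hdj := hdrop (j+1) (by omega)
          rw [(by ring : a + 2*(j+1) + 2 = a+2+2*j+2),
              (by ring : a + 2*(j+1) + 1 = a+2+2*j+1)] at hdj
          exact hdj)
        (by rw [(by omega : a+2-1 = a+1)]
            omega)
        hk1
      have len4' : l4.length = (lam (a+2) - 1)/2 + 1 := by
        rw [hsame (a+2) le_rfl] at len4
        exact len4
      refine ⟨List.replicate d a ++ (a :: (List.replicate t (a+1) ++ l4)), ?_, ?_⟩
      · apply myAdmAppend _ _ _ _ adm1
        rw [st1]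
        refine ⟨hidx, ?_⟩
        show IsAdmissibleSeq 1 (ksOut lam1 a) (List.replicate t (a+1) ++ l4)
        rw [st2]
        apply myAdmAppend _ _ _ _ adm3
        rw [st3]
        exact adm4
      · simp only [List.length_append, List.length_replicate, List.length_cons]
        omega
/-- If `λ ∈ 𝒫_ε(N)` satisfies `ε·(−1)^{λ_i} = −1` for all `1 ≤ i ≤ n`, then there is an
admissible sequence for `λ` of length `z(λ)`. -/
theorem stmt13 (ε : ℤ) (hε : ε = 1 ∨ ε = -1) (N n : ℕ) (lam : ℕ → ℕ)
    (hlam : KSPartition ε N n lam)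
    (hall : ∀ i : ℕ, 1 ≤ i → i ≤ n → ε * (-1 : ℤ) ^ lam i = -1) :
    ∃ l : List ℕ, IsAdmissibleSeq ε lam l ∧ (l.length : ℤ) = zVal ε lam n := by
  obtain ⟨hzero, hpos, hmono, htop, hsum, hparx⟩ := hlam
  have hub : ∀ i, 1 ≤ lam i → i ≤ n := by
    intro i h
    by_contra hc
    have h0 := htop i (by omega)
    omega
  rcases hε with rfl | rfl
  · -- ε = 1 : all parts odd
    have hodd : ∀ i, 1 ≤ i → i ≤ n → lam i % 2 = 1 := fun i h1 h2 => myOddOf _ (hall i h1 h2)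
    have hsv := myTwoSval lam n 1 (by omega) hmono hodd (htop (n+1) (by omega))
    obtain ⟨lf, admf, lenf⟩ := myFlatten 1 1 le_rfl n lam hodd (fun i h1 _ => hmono i h1)
      (by have h0 := htop (n+1) (by omega); omega)
    rcases Nat.lt_or_ge n 2 with hn2 | hn2
    · -- n ≤ 1
      have hts : twoSteps 1 lam = ∅ := by
        rw [Set.eq_empty_iff_forall_notMem]
        intro i hstep
        obtain ⟨h1, h2, -, -, -, -, -⟩ := hstep
        have hu := hub (i+1) h2
        omega
      have hbs : badSteps 1 lam = ∅ := by
        rw [Set.eq_empty_iff_forall_notMem]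
        rintro i ⟨hstep, -⟩
        obtain ⟨h1, h2, -, -, -, -, -⟩ := hstep
        have hu := hub (i+1) h2
        omega
      have hgc : goodClusters 1 lam = ∅ := by
        rw [Set.eq_empty_iff_forall_notMem]
        rintro ⟨a, k⟩ hmem
        obtain ⟨⟨hk2, hsteps⟩, -⟩ :
            IsTwoCluster 1 lam a k ∧ ¬ HasBadBoundary lam a k := hmem
        obtain ⟨h1, h2, -, -, -, -, -⟩ := hsteps 0 (by omega)
        have hu := hub (a + 2*0 + 1) h2
        omega
      have hz : zVal 1 lam n = (sVal lam n : ℤ) := by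
        unfold zVal
        rw [hts, hbs, hgc]
        simp
      refine ⟨lf, admf, ?_⟩
      rw [hz]
      have hle : lf.length = sVal lam n := by
        rcases Nat.eq_zero_or_pos n with h0 | h0
        · rw [if_pos h0] at hsv
          have h10 : lam 1 = 0 := htop 1 (by omega)
          omega
        · rw [if_neg (by omega)] at hsv
          omega
      exact_mod_cast congrArg (Nat.cast : ℕ → ℤ) hle
    · rcases eq_or_lt_of_le hn2 with hn2' | hn3
      · -- n = 2
        subst hn2'
        rw [if_neg (by omega)] at hsv
        have hl3 : lam 3 = 0 := htop 3 (by omega)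
        have ho1 : lam 1 % 2 = 1 := hodd 1 (by omega) (by omega)
        have ho2 : lam 2 % 2 = 1 := hodd 2 (by omega) (by omega)
        have hm1 : lam (1+1) ≤ lam 1 := hmono 1 le_rfl
        have hm1' : lam 2 ≤ lam 1 := hm1
        have hstep1 : IsTwoStep 1 lam 1 := by
          refine ⟨le_rfl, ?_, ?_, ?_, ?_, ?_, ?_⟩
          · show 1 ≤ lam 2; omega
          · exact hm1
          · rw [one_mul]; exact myOddPow _ ho1
          · show (1:ℤ) * (-1)^(lam 2) = -1
            rw [one_mul]; exact myOddPow _ ho2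
          · show lam 0 ≠ lam 1
            rw [hzero]; omega
          · show lam 2 ≠ lam 3
            omega
        have hts : twoSteps 1 lam = {1} := by
          ext i
          simp only [twoSteps, Set.mem_setOf_eq, Set.mem_singleton_iff]
          constructor
          · intro hstep
            obtain ⟨h1, h2, -, -, -, -, -⟩ := hstep
            have hu := hub (i+1) h2
            omega
          · rintro rfl
            exact hstep1
        have hbs : badSteps 1 lam = ∅ := by
          rw [Set.eq_empty_iff_forall_notMem]
          rintro i ⟨hstep, hbad⟩
          obtain ⟨h1, h2, -, -, -, -, -⟩ := hstep
          have hu := hub (i+1) h2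
          have hi1 : i = 1 := by omega
          subst hi1
          rcases hbad with ⟨hlt, -⟩ | hev
          · omega
          · rw [Nat.even_iff] at hev
            have e1 : lam (1+1) = lam 2 := rfl
            have e2 : lam (1+2) = lam 3 := rfl
            omega
        have hgc : goodClusters 1 lam = ∅ := by
          rw [Set.eq_empty_iff_forall_notMem]
          rintro ⟨a, k⟩ hmem
          obtain ⟨⟨hk2, hsteps⟩, -⟩ :
              IsTwoCluster 1 lam a k ∧ ¬ HasBadBoundary lam a k := hmem
          obtain ⟨-, h2, -, -, -, -, -⟩ := hsteps 1 (by omega)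
          have hu := hub (a + 2*1 + 1) h2
          omega
        have hz : zVal 1 lam 2 = (sVal lam 2 : ℤ) + 1 := by
          unfold zVal
          rw [hts, hbs, hgc]
          simp
        -- construction: flatten both rows to 1 then a case-2 move
        set c2 := (lam 2 - 1)/2 with hc2
        obtain ⟨adm2, st2⟩ := myRep 1 2 (by omega) c2 lam (by
          have e1 : lam (2+1) = lam 3 := rfl
          omega)
        set lam1 : ℕ → ℕ := fun j => if j ≤ 2 then lam j - 2*c2 else lam j with hl1
        set c1 := (lam 1 - lam 2)/2 with hc1
        obtain ⟨adm1, st1⟩ := myRep 1 1 le_rfl c1 lam1 (by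
          have e1 : lam1 (1+1) = lam1 2 := rfl
          have e2 : lam1 2 = lam 2 - 2*c2 := by
            simp only [hl1]; split_ifs <;> omega
          have e3 : lam1 1 = lam 1 - 2*c2 := by
            simp only [hl1]; split_ifs <;> omega
          omega)
        set lam2' : ℕ → ℕ := fun j => if j ≤ 1 then lam1 j - 2*c1 else lam1 j with hl2
        have hv1 : lam2' 1 = 1 := by
          simp only [hl2, hl1]; split_ifs <;> omega
        have hv2 : lam2' 2 = 1 := by
          simp only [hl2, hl1]; split_ifs <;> omega
        have hv0 : lam2' 0 = 0 := by
          simp only [hl2, hl1]; split_ifs <;> omega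
        have hv3 : lam2' 3 = 0 := by
          simp only [hl2, hl1]; split_ifs <;> omega
        have hstep2 : IsTwoStep 1 lam2' 1 := by
          refine ⟨le_rfl, ?_, ?_, ?_, ?_, ?_, ?_⟩
          · show 1 ≤ lam2' 2; omega
          · show lam2' 2 ≤ lam2' 1; omega
          · rw [hv1]; norm_num
          · show (1:ℤ) * (-1)^(lam2' 2) = -1
            rw [hv2]; norm_num
          · show lam2' 0 ≠ lam2' 1; omega
          · show lam2' 2 ≠ lam2' 3; omega
        have hidx : IsAdmissibleIndex 1 lam2' 1 := Or.inr ⟨hstep2, by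
          show lam2' 1 = lam2' 2
          omega⟩
        refine ⟨List.replicate c2 2 ++ (List.replicate c1 1 ++ [1]), ?_, ?_⟩
        · apply myAdmAppend _ _ _ _ adm2
          rw [st2]
          apply myAdmAppend _ _ _ _ adm1
          rw [st1]
          exact ⟨hidx, trivial⟩
        · rw [hz]
          have hlen : (List.replicate c2 2 ++ (List.replicate c1 1 ++ [1])).length
              = sVal lam 2 + 1 := by
            simp only [List.length_append, List.length_replicate, List.length_cons,
              List.length_nil]
            omega
          rw [hlen]
          push_cast
          ring
      · -- n ≥ 3
        have hbadeq : badSteps 1 lam = twoSteps 1 lam := by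
          ext i
          simp only [badSteps, twoSteps, Set.mem_setOf_eq]
          refine ⟨fun h => h.1, fun hstep => ⟨hstep, ?_⟩⟩
          obtain ⟨h1, h2, h3, hp1, hp2, hne1, hne2⟩ := hstep
          have hin : i + 1 ≤ n := hub (i+1) h2
          rcases Nat.lt_or_ge i 2 with hi2 | hi2
          · have hi1 : i = 1 := by omega
            subst hi1
            right
            rw [Nat.even_iff]
            have o2 : lam 2 % 2 = 1 := hodd 2 (by omega) (by omega)
            have o3 : lam 3 % 2 = 1 := hodd 3 (by omega) (by omega)
            have e1 : lam (1+1) = lam 2 := rfl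
            have e2 : lam (1+2) = lam 3 := rfl
            omega
          · left
            refine ⟨by omega, ?_⟩
            rw [Nat.even_iff]
            have o1 : lam (i-1) % 2 = 1 := hodd (i-1) (by omega) (by omega)
            have o2 : lam i % 2 = 1 := hodd i (by omega) (by omega)
            omega
        have hchar : ∀ a k, IsTwoCluster 1 lam a k → ¬ HasBadBoundary lam a k →
            a = 1 ∧ n = 2*k ∧ 2 ≤ k := by
          rintro a k ⟨hk2, hsteps⟩ hnb
          have s0 : IsTwoStep 1 lam a := by
            have hs := hsteps 0 (by omega)
            have e : a + 2*0 = a := rfl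
            rwa [e] at hs
          obtain ⟨ha1, hp0, hle0, -, -, hne0, -⟩ := s0
          have han : a + 1 ≤ n := hub _ hp0
          have ha1' : a = 1 := by
            by_contra hne
            apply hnb
            left
            have h2a : 2 ≤ a := by omega
            have hmoa : lam a ≤ lam (a-1) := by
              have hma := hmono (a-1) (by omega)
              rwa [(by omega : a-1+1 = a)] at hma
            refine ⟨by omega, by omega, ?_⟩
            rw [Nat.even_iff]
            have o1 : lam (a-1) % 2 = 1 := hodd (a-1) (by omega) (by omega)
            have o2 : lam a % 2 = 1 := hodd a (by omega) (by omega)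
            omega
          subst ha1'
          obtain ⟨-, hpk, hlek, -, -, -, hnek⟩ := hsteps (k-1) (by omega)
          have hekn : 1 + 2*(k-1) + 1 ≤ n := hub _ hpk
          have hmk : lam (1 + 2*(k-1) + 2) ≤ lam (1 + 2*(k-1) + 1) := by
            have hmm := hmono (1 + 2*(k-1) + 1) (by omega)
            rwa [show 1+2*(k-1)+1+1 = 1+2*(k-1)+2 from rfl] at hmm
          have hlast : ¬ (1 + 2*(k-1) + 2 ≤ n) := by
            intro hcon
            apply hnb
            right
            constructor
            · omega
            · rw [Nat.even_iff]
              have o1 : lam (1+2*(k-1)+1) % 2 = 1 := hodd _ (by omega) (by omega)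
              have o2 : lam (1+2*(k-1)+2) % 2 = 1 := hodd _ (by omega) hcon
              omega
          exact ⟨rfl, by omega, hk2⟩
        by_cases hgce : goodClusters 1 lam = ∅
        · have hz : zVal 1 lam n = (sVal lam n : ℤ) := by
            unfold zVal
            rw [hbadeq, hgce]
            simp
          refine ⟨lf, admf, ?_⟩
          rw [hz]
          rw [if_neg (by omega)] at hsv
          have hle : lf.length = sVal lam n := by omega
          exact_mod_cast congrArg (Nat.cast : ℕ → ℤ) hle
        · obtain ⟨⟨a, k⟩, hm⟩ := Set.nonempty_iff_ne_empty.mpr hgce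
          have hm' : IsTwoCluster 1 lam a k ∧ ¬ HasBadBoundary lam a k := hm
          obtain ⟨ha1, hnk, hk2⟩ := hchar a k hm'.1 hm'.2
          have hgceq : goodClusters 1 lam = {(a, k)} := by
            ext ⟨a', k'⟩
            simp only [goodClusters, Set.mem_setOf_eq, Set.mem_singleton_iff, Prod.mk.injEq]
            constructor
            · rintro ⟨hc', hn'⟩
              obtain ⟨e1, e2, e3⟩ := hchar a' k' hc' hn'
              exact ⟨by omega, by omega⟩
            · rintro ⟨rfl, rfl⟩
              exact hm'
          have hz : zVal 1 lam n = (sVal lam n : ℤ) + 1 := by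
            unfold zVal
            rw [hbadeq, hgceq, Set.ncard_singleton]
            push_cast
            ring
          subst ha1
          obtain ⟨hk2', hsteps⟩ := hm'.1
          have hdrops : ∀ j, j + 2 ≤ k → lam (1 + 2*j + 2) < lam (1 + 2*j + 1) := by
            intro j hj
            obtain ⟨-, -, -, -, -, -, hne⟩ := hsteps j (by omega)
            have hmm := hmono (1 + 2*j + 1) (by omega)
            rw [show 1+2*j+1+1 = 1+2*j+2 from rfl] at hmm
            omega
          obtain ⟨l, adm, hlen⟩ := myCluster k 1 lam le_rfl
            (fun i h1 h2 => hodd i h1 (by omega))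
            (fun i h1 _ => hmono i h1)
            (by rw [(by omega : 1 + 2*k = n+1)]
                exact htop (n+1) (by omega))
            hdrops
            (by rw [(by omega : (1:ℕ)-1 = 0), hzero])
            (by omega)
          refine ⟨l, adm, ?_⟩
          rw [hz]
          rw [if_neg (by omega)] at hsv
          have hle : l.length = sVal lam n + 1 := by omega
          rw [hle]
          push_cast
          ring
  · -- ε = -1 : all parts even
    have heven : ∀ i, 1 ≤ i → i ≤ n → lam i % 2 = 0 := fun i h1 h2 => myEvenOf _ (hall i h1 h2)
    have hsv := myTwoSval lam n 0 (by omega) hmono heven (htop (n+1) (by omega))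
    have hbadeq : badSteps (-1) lam = twoSteps (-1) lam := by
      ext i
      simp only [badSteps, twoSteps, Set.mem_setOf_eq]
      refine ⟨fun h => h.1, fun hstep => ⟨hstep, ?_⟩⟩
      obtain ⟨h1, h2, h3, hp1, hp2, hne1, hne2⟩ := hstep
      right
      rw [Nat.even_iff]
      have he1 : lam (i+1) % 2 = 0 := myEvenOf _ hp2
      have he2 : lam (i+2) % 2 = 0 := by
        rcases le_or_gt (i+2) n with h | h
        · exact heven (i+2) (by omega) h
        · rw [htop (i+2) h]
      omega
    have hgce : goodClusters (-1) lam = ∅ := by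
      rw [Set.eq_empty_iff_forall_notMem]
      rintro ⟨a, k⟩ hmem
      obtain ⟨⟨hk2, hsteps⟩, hnb⟩ :
          IsTwoCluster (-1) lam a k ∧ ¬ HasBadBoundary lam a k := hmem
      obtain ⟨h1, h2, h3, hp1, hp2, hne1, hne2⟩ := hsteps (k-1) (by omega)
      apply hnb
      right
      have hin : a + 2*(k-1) + 1 ≤ n := hub _ h2
      have hmk : lam (a + 2*(k-1) + 2) ≤ lam (a + 2*(k-1) + 1) := by
        have hmm := hmono (a + 2*(k-1) + 1) (by omega)
        rwa [show a+2*(k-1)+1+1 = a+2*(k-1)+2 from rfl] at hmm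
      have he1 : lam (a+2*(k-1)+1) % 2 = 0 := myEvenOf _ hp2
      have he2 : lam (a+2*(k-1)+2) % 2 = 0 := by
        rcases le_or_gt (a+2*(k-1)+2) n with h | h
        · exact heven _ (by omega) h
        · rw [htop _ h]
      constructor
      · omega
      · rw [Nat.even_iff]
        omega
    have hz : zVal (-1) lam n = (sVal lam n : ℤ) := by
      unfold zVal
      rw [hbadeq, hgce]
      simp
    obtain ⟨lf, admf, lenf⟩ := myFlatten (-1) 0 (by omega) n lam heven
      (fun i h1 _ => hmono i h1)
      (by have h0 := htop (n+1) (by omega); omega)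
    refine ⟨lf, admf, ?_⟩
    rw [hz]
    have hif : (if n = 0 then 0 else 0) = 0 := by split_ifs <;> rfl
    rw [hif] at hsv
    have hle : lf.length = sVal lam n := by omega
    exact_mod_cast congrArg (Nat.cast : ℕ → ℤ) hle
end

section
/- For every λ ∈ P_ε(N), z(λ) equals the maximum of the lengths |𝐢| over all admissible sequences 𝐢 for λ. -/
open Finset

namespace KS14

/-- Left badness clause. -/
def Cl (lam : ℕ → ℕ) (a : ℕ) : Prop := 1 < a ∧ Even (lam (a - 1) - lam a)

/-- Right badness clause. -/
def Cr (lam : ℕ → ℕ) (e : ℕ) : Prop := Even (lam (e + 1) - lam (e + 2))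

/-- A chain of 2-steps `a, a+2, …, a+2(k-1)`. -/
def Chain (ε : ℤ) (lam : ℕ → ℕ) (a k : ℕ) : Prop :=
  ∀ j, j < k → IsTwoStep ε lam (a + 2 * j)

/-- Starts of runs of 2-steps that are good at both ends. -/
def Wset (ε : ℤ) (lam : ℕ → ℕ) : Set ℕ :=
  {a | ¬ Cl lam a ∧ ∃ k, 1 ≤ k ∧ Chain ε lam a k ∧ ¬ Cr lam (a + 2 * (k - 1))}

/-- Weak partition shape. -/
structure Shape (n : ℕ) (lam : ℕ → ℕ) : Prop where
  zero : lam 0 = 0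
  mono : ∀ i : ℕ, 1 ≤ i → lam (i + 1) ≤ lam i
  top : ∀ i : ℕ, n < i → lam i = 0

theorem Shape.mono' {n : ℕ} {lam : ℕ → ℕ} (h : Shape n lam) :
    ∀ j k : ℕ, 1 ≤ j → j ≤ k → lam k ≤ lam j := by
  intro j k h1 h2
  induction k with
  | zero => omega
  | succ m ih =>
    rcases Nat.lt_or_ge m j with hm | hm
    · have : j = m + 1 := by omega
      rw [this]
    · exact le_trans (h.mono m (by omega)) (ih (by omega))

theorem eo_iff {ε : ℤ} (hε : ε = 1 ∨ ε = -1) (v : ℕ) :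
    ε * (-1 : ℤ) ^ v = -1 ↔ ((ε = 1 ∧ v % 2 = 1) ∨ (ε = -1 ∧ v % 2 = 0)) := by
  rcases hε with rfl | rfl <;> rcases Nat.even_or_odd v with h | h <;>
    [skip; skip; skip; skip] <;>
    first
      | (rw [h.neg_one_pow]; rw [Nat.even_iff] at h; norm_num; omega)
      | (rw [h.neg_one_pow]; rw [Nat.odd_iff] at h; norm_num; omega)

theorem step_iff {ε : ℤ} (hε : ε = 1 ∨ ε = -1) (lam : ℕ → ℕ) (i : ℕ) :
    IsTwoStep ε lam i ↔
      (1 ≤ i ∧ 1 ≤ lam (i + 1) ∧ lam (i + 1) ≤ lam i ∧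
        ((ε = 1 ∧ lam i % 2 = 1) ∨ (ε = -1 ∧ lam i % 2 = 0)) ∧
        ((ε = 1 ∧ lam (i + 1) % 2 = 1) ∨ (ε = -1 ∧ lam (i + 1) % 2 = 0)) ∧
        lam (i - 1) ≠ lam i ∧ lam (i + 1) ≠ lam (i + 2)) := by
  unfold IsTwoStep
  rw [eo_iff hε, eo_iff hε]

/-- On a 2-step both parts have the same parity. -/
theorem step_parity {ε : ℤ} (hε : ε = 1 ∨ ε = -1) {lam : ℕ → ℕ} {i : ℕ}
    (h : IsTwoStep ε lam i) : lam i % 2 = lam (i + 1) % 2 := by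
  rw [step_iff hε] at h
  omega

theorem step_one_le {ε : ℤ} {lam : ℕ → ℕ} {i : ℕ} (h : IsTwoStep ε lam i) : 1 ≤ i := h.1

theorem step_le_n {ε : ℤ} {lam : ℕ → ℕ} {n i : ℕ} (hsh : Shape n lam)
    (h : IsTwoStep ε lam i) : i + 1 ≤ n := by
  by_contra hc
  have := hsh.top (i + 1) (by omega)
  have := h.2.1
  omega

theorem twoSteps_subset {ε : ℤ} {lam : ℕ → ℕ} {n : ℕ} (hsh : Shape n lam) :
    twoSteps ε lam ⊆ Set.Icc 1 n := by
  intro i hi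
  exact ⟨step_one_le hi, by have := step_le_n hsh hi; omega⟩

theorem twoSteps_finite {ε : ℤ} {lam : ℕ → ℕ} {n : ℕ} (hsh : Shape n lam) :
    (twoSteps ε lam).Finite :=
  (Set.finite_Icc 1 n).subset (twoSteps_subset hsh)

theorem badSteps_subset {ε : ℤ} (lam : ℕ → ℕ) : badSteps ε lam ⊆ twoSteps ε lam :=
  fun _ h => h.1

theorem Wset_subset {ε : ℤ} (lam : ℕ → ℕ) : Wset ε lam ⊆ twoSteps ε lam := by
  rintro a ⟨-, k, hk, hch, -⟩
  have := hch 0 (by omega)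
  simpa [twoSteps] using this

theorem goodClusters_subset {ε : ℤ} {lam : ℕ → ℕ} {n : ℕ} (hsh : Shape n lam) :
    goodClusters ε lam ⊆ (Set.Icc 1 n) ×ˢ (Set.Icc 0 (n + 2)) := by
  rintro ⟨a, k⟩ ⟨⟨hk2, hch⟩, -⟩
  have h0 := hch 0 (by omega)
  simp only [Nat.mul_zero, Nat.add_zero] at h0
  have hlast := hch (k - 1) (by omega)
  have h1 := step_le_n hsh h0
  have h2 := step_le_n hsh hlast
  constructor
  · exact ⟨step_one_le h0, by omega⟩
  · simp only [Set.mem_Icc]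
    omega

theorem goodClusters_finite {ε : ℤ} {lam : ℕ → ℕ} {n : ℕ} (hsh : Shape n lam) :
    (goodClusters ε lam).Finite :=
  (Set.Finite.prod (Set.finite_Icc 1 n) (Set.finite_Icc 0 (n + 2))).subset
    (goodClusters_subset hsh)


theorem nat_even_sub {a b : ℕ} (hle : b ≤ a) (h : a % 2 = b % 2) : Even (a - b) := by
  rw [Nat.even_iff]; omega

theorem mem_goodClusters {ε : ℤ} {lam : ℕ → ℕ} {a k : ℕ} :
    (a, k) ∈ goodClusters ε lam ↔
      ((2 ≤ k ∧ ∀ j, j < k → IsTwoStep ε lam (a + 2 * j)) ∧ ¬ HasBadBoundary lam a k) :=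
  Iff.rfl

theorem good_mem_W {ε : ℤ} {lam : ℕ → ℕ} {i : ℕ}
    (hi : IsTwoStep ε lam i) (hb : ¬ IsBadStep lam i) : i ∈ Wset ε lam := by
  have hcl : ¬ Cl lam i := fun h => hb (Or.inl h)
  have hcr : ¬ Cr lam i := fun h => hb (Or.inr h)
  refine ⟨hcl, 1, le_refl 1, fun j hj => ?_, by simpa using hcr⟩
  interval_cases j
  simpa using hi

theorem cluster_fst_mem_W {ε : ℤ} {lam : ℕ → ℕ} {n : ℕ} (hsh : Shape n lam) {a k : ℕ}
    (h : (a, k) ∈ goodClusters ε lam) : a ∈ Wset ε lam := by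
  rw [mem_goodClusters] at h
  obtain ⟨⟨hk2, hch⟩, hnb⟩ := h
  have h0 : IsTwoStep ε lam a := by simpa using hch 0 (by omega)
  have hlast := hch (k - 1) (by omega)
  refine ⟨?_, k, by omega, hch, ?_⟩
  · rintro ⟨ha1, hev⟩
    apply hnb
    left
    have hne := h0.2.2.2.2.2.1
    have hmono : lam a ≤ lam (a - 1) := by
      have h2 := hsh.mono (a - 1) (by omega)
      have h3 : a - 1 + 1 = a := by omega
      rwa [h3] at h2
    exact ⟨ha1, by omega, hev⟩
  · intro hev
    apply hnb
    right
    have hne := hlast.2.2.2.2.2.2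
    have hmono := hsh.mono (a + 2 * (k - 1) + 1) (by omega)
    have h12 : a + 2 * (k - 1) + 1 + 1 = a + 2 * (k - 1) + 2 := by omega
    rw [h12] at hmono hne
    exact ⟨by omega, hev⟩

theorem cluster_not_lt {ε : ℤ} (hε : ε = 1 ∨ ε = -1) {lam : ℕ → ℕ} {n : ℕ}
    (hsh : Shape n lam) {a k1 k2 : ℕ} (h1 : (a, k1) ∈ goodClusters ε lam)
    (h2 : (a, k2) ∈ goodClusters ε lam) : ¬ (k1 < k2) := by
  intro hlt
  rw [mem_goodClusters] at h1 h2
  obtain ⟨⟨hk21, hch1⟩, hnb1⟩ := h1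
  obtain ⟨⟨hk22, hch2⟩, hnb2⟩ := h2
  have hstepe : IsTwoStep ε lam (a + 2 * (k1 - 1)) := hch1 (k1 - 1) (by omega)
  have hstep2 : IsTwoStep ε lam (a + 2 * (k1 - 1) + 2) := by
    have h3 := hch2 k1 hlt
    have harith : a + 2 * k1 = a + 2 * (k1 - 1) + 2 := by omega
    rwa [harith] at h3
  apply hnb1
  right
  have hne := hstepe.2.2.2.2.2.2
  have hmono := hsh.mono (a + 2 * (k1 - 1) + 1) (by omega)
  have h12 : a + 2 * (k1 - 1) + 1 + 1 = a + 2 * (k1 - 1) + 2 := by omega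
  rw [h12] at hmono hne
  have p1 := (step_iff hε lam (a + 2 * (k1 - 1))).mp hstepe
  have p2 := (step_iff hε lam (a + 2 * (k1 - 1) + 2)).mp hstep2
  constructor
  · omega
  · rw [Nat.even_iff]
    omega

theorem clusters_injOn {ε : ℤ} (hε : ε = 1 ∨ ε = -1) {lam : ℕ → ℕ} {n : ℕ}
    (hsh : Shape n lam) : Set.InjOn Prod.fst (goodClusters ε lam) := by
  rintro ⟨a1, k1⟩ h1 ⟨a2, k2⟩ h2 hfst
  simp only at hfst
  subst hfst
  rcases lt_trichotomy k1 k2 with h | h | h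
  · exact absurd h (cluster_not_lt hε hsh h1 h2)
  · rw [h]
  · exact absurd h (cluster_not_lt hε hsh h2 h1)

theorem W_disjoint_parts {ε : ℤ} (hε : ε = 1 ∨ ε = -1) {lam : ℕ → ℕ} :
    Disjoint (twoSteps ε lam \ badSteps ε lam) (Prod.fst '' goodClusters ε lam) := by
  rw [Set.disjoint_left]
  rintro a ⟨hstep, hnb⟩ ⟨⟨a', k⟩, hmem, rfl⟩
  rw [mem_goodClusters] at hmem
  obtain ⟨⟨hk2, hch⟩, -⟩ := hmem
  apply hnb
  refine ⟨hstep, Or.inr ?_⟩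
  have h0 : IsTwoStep ε lam a' := by simpa using hch 0 (by omega)
  have h1 : IsTwoStep ε lam (a' + 2) := by
    have := hch 1 (by omega)
    norm_num at this
    exact this
  have p1 := (step_iff hε lam a').mp h0
  have p2 := (step_iff hε lam (a' + 2)).mp h1
  show Even (lam (a' + 1) - lam (a' + 2))
  rw [Nat.even_iff]
  omega

theorem W_eq_union {ε : ℤ} (hε : ε = 1 ∨ ε = -1) {lam : ℕ → ℕ} {n : ℕ} (hsh : Shape n lam) :
    Wset ε lam = (twoSteps ε lam \ badSteps ε lam) ∪ Prod.fst '' goodClusters ε lam := by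
  apply Set.Subset.antisymm
  · rintro a ⟨hcl, k, hk1, hch, hcr⟩
    have h0 : IsTwoStep ε lam a := by simpa using hch 0 (by omega)
    rcases Nat.lt_or_ge k 2 with hk | hk
    · left
      have hk1' : k = 1 := by omega
      subst hk1'
      refine ⟨h0, ?_⟩
      rintro ⟨-, h | h⟩
      · exact hcl h
      · simp only [Nat.sub_self, Nat.mul_zero, Nat.add_zero] at hcr
        exact hcr h
    · right
      refine ⟨(a, k), mem_goodClusters.mpr ⟨⟨hk, hch⟩, ?_⟩, rfl⟩
      rintro (⟨hx1, hx2, hx3⟩ | ⟨hx2, hx3⟩)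
      · exact hcl ⟨hx1, hx3⟩
      · exact hcr hx3
  · rintro a (⟨hstep, hnb⟩ | ⟨⟨a', k⟩, hmem, rfl⟩)
    · exact good_mem_W hstep (fun hb => hnb ⟨hstep, hb⟩)
    · exact cluster_fst_mem_W hsh hmem

theorem z_eq_W {ε : ℤ} (hε : ε = 1 ∨ ε = -1) {lam : ℕ → ℕ} {n : ℕ} (hsh : Shape n lam) :
    zVal ε lam n = (sVal lam n : ℤ) + ((Wset ε lam).ncard : ℤ) := by
  have hfinT : (twoSteps ε lam).Finite := twoSteps_finite hsh
  have hfinB : (badSteps ε lam).Finite := hfinT.subset (badSteps_subset lam)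
  have hfinG : (goodClusters ε lam).Finite := goodClusters_finite hsh
  have hW : (Wset ε lam).ncard
      = (twoSteps ε lam \ badSteps ε lam).ncard + (Prod.fst '' goodClusters ε lam).ncard := by
    rw [W_eq_union hε hsh]
    exact Set.ncard_union_eq (W_disjoint_parts hε) hfinT.diff (hfinG.image _)
  have himg : (Prod.fst '' goodClusters ε lam).ncard = (goodClusters ε lam).ncard :=
    Set.ncard_image_of_injOn (clusters_injOn hε hsh)
  have hdiff : (twoSteps ε lam \ badSteps ε lam).ncard + (badSteps ε lam).ncard
      = (twoSteps ε lam).ncard :=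
    Set.ncard_diff_add_ncard_of_subset (badSteps_subset lam) hfinT
  unfold zVal
  rw [himg] at hW
  push_cast
  omega


theorem step_admissible {ε : ℤ} (hε : ε = 1 ∨ ε = -1) {lam : ℕ → ℕ} {j : ℕ}
    (hj : IsTwoStep ε lam j) : IsAdmissibleIndex ε lam j := by
  have hp := step_parity hε hj
  have hmono := hj.2.2.1
  rcases Nat.eq_or_lt_of_le hmono with heq | hlt
  · exact Or.inr ⟨hj, heq.symm⟩
  · exact Or.inl ⟨hj.1, by omega⟩

section Case1

variable {ε : ℤ} {lam : ℕ → ℕ} {n i : ℕ}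

theorem ksOut1_apply {lam : ℕ → ℕ} {i : ℕ} (hd : lam (i + 1) + 2 ≤ lam i) (j : ℕ) :
    ksOut lam i j = if j ≤ i then lam j - 2 else lam j := by
  simp [ksOut, hd]

theorem ksOut1_shape (hsh : Shape n lam) (hd : lam (i + 1) + 2 ≤ lam i) :
    Shape n (ksOut lam i) := by
  refine ⟨?_, ?_, ?_⟩
  · rw [ksOut1_apply hd]
    simp [hsh.zero]
  · intro j hj
    have h1 := hsh.mono j hj
    rw [ksOut1_apply hd, ksOut1_apply hd]
    rcases le_or_gt (j + 1) i with h2 | h2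
    · rw [if_pos h2, if_pos (by omega : j ≤ i)]
      omega
    · rw [if_neg (by omega : ¬ (j + 1 ≤ i))]
      rcases le_or_gt j i with h3 | h3
      · rw [if_pos h3]
        have hd' : lam (j + 1) + 2 ≤ lam j := by
          rw [show j + 1 = i + 1 by omega, show j = i by omega]
          exact hd
        omega
      · rw [if_neg (by omega : ¬ (j ≤ i))]
        exact h1
  · intro j hj
    have h1 := hsh.top j hj
    rw [ksOut1_apply hd]
    split_ifs <;> omega

theorem case1_le_n (hsh : Shape n lam) (hd : lam (i + 1) + 2 ≤ lam i) : i ≤ n := by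
  by_contra hc
  have := hsh.top i (by omega)
  omega

theorem ksOut1_sum_lt (hsh : Shape n lam) (hi1 : 1 ≤ i) (hd : lam (i + 1) + 2 ≤ lam i) :
    ∑ j ∈ Finset.Icc 1 n, ksOut lam i j < ∑ j ∈ Finset.Icc 1 n, lam j := by
  apply Finset.sum_lt_sum
  · intro j hj
    rw [ksOut1_apply hd]
    split_ifs <;> omega
  · refine ⟨i, Finset.mem_Icc.mpr ⟨hi1, case1_le_n hsh hd⟩, ?_⟩
    rw [ksOut1_apply hd, if_pos (le_refl i)]
    omega

theorem key2 (hsh : Shape n lam) (hd : lam (i + 1) + 2 ≤ lam i) :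
    ∀ x, x ≤ i → 2 ≤ lam x ∨ (x = 0 ∧ lam x = 0) := by
  intro x hx
  match x with
  | 0 => exact Or.inr ⟨rfl, hsh.zero⟩
  | (y + 1) => exact Or.inl (le_trans (by omega) (hsh.mono' (y + 1) i (by omega) hx))

theorem ksOut1_sVal (hsh : Shape n lam) (hi1 : 1 ≤ i) (hd : lam (i + 1) + 2 ≤ lam i) :
    sVal (ksOut lam i) n + 1 = sVal lam n := by
  have hin : i ∈ Finset.Icc 1 n := Finset.mem_Icc.mpr ⟨hi1, case1_le_n hsh hd⟩
  have E : ∀ x, x ≤ i → ksOut lam i x = lam x - 2 := fun x hx => by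
    rw [ksOut1_apply hd, if_pos hx]
  have E' : ∀ x, i < x → ksOut lam i x = lam x := fun x hx => by
    rw [ksOut1_apply hd, if_neg (by omega)]
  unfold sVal
  rw [← Finset.sum_erase_add _ _ hin,
    ← Finset.sum_erase_add _ (fun j => (lam j - lam (j + 1)) / 2) hin]
  have hcong : ∑ j ∈ (Finset.Icc 1 n).erase i, (ksOut lam i j - ksOut lam i (j + 1)) / 2
      = ∑ j ∈ (Finset.Icc 1 n).erase i, (lam j - lam (j + 1)) / 2 := by
    apply Finset.sum_congr rfl
    intro j hj
    simp only [Finset.mem_erase, Finset.mem_Icc] at hj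
    rcases le_or_gt (j + 1) i with h2 | h2
    · rw [E j (by omega), E (j + 1) h2]
      have k0 := key2 hsh hd j (by omega)
      have k1 := key2 hsh hd (j + 1) h2
      omega
    · rw [E' (j + 1) h2]
      rcases le_or_gt j i with h1 | h1
      · omega
      · rw [E' j h1]
  rw [hcong]
  rw [E i (le_refl i), E' (i + 1) (by omega)]
  omega

theorem case1_step_to_lam (hε : ε = 1 ∨ ε = -1) (hsh : Shape n lam)
    (hd : lam (i + 1) + 2 ≤ lam i) {j : ℕ}
    (hj : IsTwoStep ε (ksOut lam i) j) : IsTwoStep ε lam j := by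
  have K := key2 hsh hd
  have E : ∀ x, x ≤ i → ksOut lam i x = lam x - 2 := fun x hx => by
    rw [ksOut1_apply hd, if_pos hx]
  have E' : ∀ x, i < x → ksOut lam i x = lam x := fun x hx => by
    rw [ksOut1_apply hd, if_neg (by omega)]
  rw [step_iff hε] at hj ⊢
  have hj1 : 1 ≤ j := hj.1
  rcases le_or_gt j i with hji | hji
  · rcases le_or_gt (j + 2) i with hc2 | hc2
    · rw [E (j - 1) (by omega), E j hji, E (j + 1) (by omega), E (j + 2) hc2] at hj
      have k0 := K (j - 1) (by omega)
      have k1 := K j hji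
      have k2 := K (j + 1) (by omega)
      have k3 := K (j + 2) hc2
      omega
    · rcases le_or_gt (j + 1) i with hc1 | hc1
      · rw [E (j - 1) (by omega), E j hji, E (j + 1) hc1, E' (j + 2) (by omega)] at hj
        have hd' : lam (j + 2) + 2 ≤ lam (j + 1) := by
          rw [show j + 2 = i + 1 by omega, show j + 1 = i by omega]
          exact hd
        have k0 := K (j - 1) (by omega)
        have k1 := K j hji
        omega
      · rw [E (j - 1) (by omega), E j hji, E' (j + 1) hc1, E' (j + 2) (by omega)] at hj
        have hd' : lam (j + 1) + 2 ≤ lam j := by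
          rw [show j + 1 = i + 1 by omega, show j = i by omega]
          exact hd
        have k0 := K (j - 1) (by omega)
        omega
  · rcases le_or_gt (j - 1) i with hc0 | hc0
    · rw [E (j - 1) hc0, E' j hji, E' (j + 1) (by omega), E' (j + 2) (by omega)] at hj
      have hd' : lam j + 2 ≤ lam (j - 1) := by
        have e1 : j = i + 1 := by omega
        rw [e1]
        simpa using hd
      omega
    · rw [E' (j - 1) hc0, E' j hji, E' (j + 1) (by omega), E' (j + 2) (by omega)] at hj
      exact hj

theorem case1_step_from_lam (hε : ε = 1 ∨ ε = -1) (hsh : Shape n lam)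
    (hd : lam (i + 1) + 2 ≤ lam i) {j : ℕ} (hj : IsTwoStep ε lam j)
    (hne1 : j ≠ i - 1) (hne2 : j = i + 1 → ¬ Even (lam i - lam (i + 1))) :
    IsTwoStep ε (ksOut lam i) j := by
  have K := key2 hsh hd
  have E : ∀ x, x ≤ i → ksOut lam i x = lam x - 2 := fun x hx => by
    rw [ksOut1_apply hd, if_pos hx]
  have E' : ∀ x, i < x → ksOut lam i x = lam x := fun x hx => by
    rw [ksOut1_apply hd, if_neg (by omega)]
  rw [step_iff hε] at hj ⊢
  have hj1 : 1 ≤ j := hj.1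
  have hine : 1 ≤ i → j ≠ i - 1 := fun _ => hne1
  rcases le_or_gt j i with hji | hji
  · rcases le_or_gt (j + 2) i with hc2 | hc2
    · rw [E (j - 1) (by omega), E j hji, E (j + 1) (by omega), E (j + 2) hc2]
      have k0 := K (j - 1) (by omega)
      have k1 := K j hji
      have k2 := K (j + 1) (by omega)
      have k3 := K (j + 2) hc2
      have m0 : lam (j + 2) ≤ lam (j + 1) := hsh.mono (j + 1) (by omega)
      have m2 : lam i ≤ lam (j + 2) := hsh.mono' (j + 2) i (by omega) hc2
      omega
    · rcases le_or_gt (j + 1) i with hc1 | hc1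
      · -- j + 1 = i, so j = i - 1 : excluded
        exact absurd (by omega : j = i - 1) hne1
      · rw [E (j - 1) (by omega), E j hji, E' (j + 1) hc1, E' (j + 2) (by omega)]
        have hd' : lam (j + 1) + 2 ≤ lam j := by
          rw [show j + 1 = i + 1 by omega, show j = i by omega]
          exact hd
        have k0 := K (j - 1) (by omega)
        omega
  · rcases le_or_gt (j - 1) i with hc0 | hc0
    · rw [E (j - 1) hc0, E' j hji, E' (j + 1) (by omega), E' (j + 2) (by omega)]
      have hji' : j = i + 1 := by omega
      have hodd := hne2 hji'
      rw [Nat.even_iff] at hodd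
      have hd' : lam j + 2 ≤ lam (j - 1) := by
        rw [hji']
        simpa using hd
      have hoo : ¬ ((lam (j - 1) - lam j) % 2 = 0) := by
        have e1 : lam (j - 1) = lam i := by rw [show j - 1 = i by omega]
        have e2 : lam j = lam (i + 1) := by rw [hji']
        rw [e1, e2]
        exact hodd
      omega
    · rw [E' (j - 1) hc0, E' j hji, E' (j + 1) (by omega), E' (j + 2) (by omega)]
      exact hj

theorem case1_Cl_iff (hsh : Shape n lam) (hd : lam (i + 1) + 2 ≤ lam i) (a : ℕ) :
    Cl (ksOut lam i) a ↔ Cl lam a := by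
  have E : ∀ x, x ≤ i → ksOut lam i x = lam x - 2 := fun x hx => by
    rw [ksOut1_apply hd, if_pos hx]
  have E' : ∀ x, i < x → ksOut lam i x = lam x := fun x hx => by
    rw [ksOut1_apply hd, if_neg (by omega)]
  unfold Cl
  rw [Nat.even_iff, Nat.even_iff]
  rcases le_or_gt a i with ha | ha
  · rw [E (a - 1) (by omega), E a ha]
    have k0 := key2 hsh hd (a - 1) (by omega)
    have k1 := key2 hsh hd a ha
    omega
  · rcases le_or_gt (a - 1) i with h0 | h0
    · rw [E (a - 1) h0, E' a ha]
      have hd' : lam a + 2 ≤ lam (a - 1) := by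
        have e1 : a = i + 1 := by omega
        rw [e1]
        simpa using hd
      omega
    · rw [E' (a - 1) h0, E' a ha]

theorem case1_Cr_iff (hsh : Shape n lam) (hd : lam (i + 1) + 2 ≤ lam i) (e : ℕ) :
    Cr (ksOut lam i) e ↔ Cr lam e := by
  have E : ∀ x, x ≤ i → ksOut lam i x = lam x - 2 := fun x hx => by
    rw [ksOut1_apply hd, if_pos hx]
  have E' : ∀ x, i < x → ksOut lam i x = lam x := fun x hx => by
    rw [ksOut1_apply hd, if_neg (by omega)]
  unfold Cr
  rw [Nat.even_iff, Nat.even_iff]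
  rcases le_or_gt (e + 2) i with h2 | h2
  · rw [E (e + 1) (by omega), E (e + 2) h2]
    have k1 := key2 hsh hd (e + 1) (by omega)
    have k2 := key2 hsh hd (e + 2) h2
    omega
  · rw [E' (e + 2) h2]
    rcases le_or_gt (e + 1) i with h1 | h1
    · rw [E (e + 1) h1]
      have hd' : lam (e + 2) + 2 ≤ lam (e + 1) := by
        rw [show e + 2 = i + 1 by omega, show e + 1 = i by omega]
        exact hd
      omega
    · rw [E' (e + 1) h1]

theorem case1_W_sub (hε : ε = 1 ∨ ε = -1) (hsh : Shape n lam)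
    (hd : lam (i + 1) + 2 ≤ lam i) : Wset ε (ksOut lam i) ⊆ Wset ε lam := by
  rintro a ⟨hcl, k, hk1, hch, hcr⟩
  exact ⟨fun hc => hcl ((case1_Cl_iff hsh hd a).mpr hc), k, hk1,
    fun m hm => case1_step_to_lam hε hsh hd (hch m hm),
    fun hc => hcr ((case1_Cr_iff hsh hd _).mpr hc)⟩

theorem case1_W_sup (hε : ε = 1 ∨ ε = -1) (hsh : Shape n lam) (hi1 : 1 ≤ i)
    (hd : lam (i + 1) + 2 ≤ lam i) (hm : ¬ IsTwoStep ε lam (i - 1)) :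
    Wset ε lam ⊆ Wset ε (ksOut lam i) := by
  rintro a ⟨hcl, k, hk1, hch, hcr⟩
  refine ⟨fun hc => hcl ((case1_Cl_iff hsh hd a).mp hc), k, hk1, fun m hm2 => ?_,
    fun hc => hcr ((case1_Cr_iff hsh hd _).mp hc)⟩
  have hstep := hch m hm2
  apply case1_step_from_lam hε hsh hd hstep
  · intro h
    exact hm (h ▸ hstep)
  · intro h hev
    rcases Nat.eq_zero_or_pos m with rfl | hmpos
    · have ha : a = i + 1 := by omega
      apply hcl
      subst ha
      exact ⟨by omega, by simpa using hev⟩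
    · have hprev := hch (m - 1) (by omega)
      have harr : a + 2 * (m - 1) = i - 1 := by omega
      exact hm (harr ▸ hprev)

end Case1


section Case2

variable {ε : ℤ} {lam : ℕ → ℕ} {n i : ℕ}

theorem ksOut2_apply {lam : ℕ → ℕ} {i : ℕ} (hd : ¬ (lam (i + 1) + 2 ≤ lam i)) (j : ℕ) :
    ksOut lam i j = if j < i then lam j - 2 else if j ≤ i + 1 then lam j - 1 else lam j := by
  simp [ksOut, hd]

/-- Basic facts extracted from a case-2 situation. -/
theorem c2_facts (hε : ε = 1 ∨ ε = -1) (hsh : Shape n lam)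
    (hst : IsTwoStep ε lam i) (heq : lam i = lam (i + 1)) :
    1 ≤ i ∧ 1 ≤ lam (i + 1) ∧
      ((2 ≤ i ∧ lam i + 1 ≤ lam (i - 1)) ∨ (i = 1 ∧ lam (i - 1) = 0)) ∧
      lam (i + 2) + 1 ≤ lam (i + 1) ∧ ¬ (lam (i + 1) + 2 ≤ lam i) := by
  obtain ⟨h1, h2, h3, h4, h5, h6, h7⟩ := hst
  refine ⟨h1, h2, ?_, ?_, by omega⟩
  · rcases Nat.eq_or_lt_of_le h1 with h | h
    · right
      have e : i - 1 = 0 := by omega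
      rw [e]
      exact ⟨h.symm, hsh.zero⟩
    · left
      have hm : lam i ≤ lam (i - 1) := by
        have := hsh.mono (i - 1) (by omega)
        have e : i - 1 + 1 = i := by omega
        rwa [e] at this
      omega
  · have hm : lam (i + 2) ≤ lam (i + 1) := hsh.mono (i + 1) (by omega)
    omega

theorem c2_E1 (hd : ¬ (lam (i + 1) + 2 ≤ lam i)) :
    ∀ x, x < i → ksOut lam i x = lam x - 2 := fun x hx => by
  rw [ksOut2_apply hd, if_pos hx]

theorem c2_E2 (hd : ¬ (lam (i + 1) + 2 ≤ lam i)) : ksOut lam i i = lam i - 1 := by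
  rw [ksOut2_apply hd, if_neg (by omega), if_pos (by omega)]

theorem c2_E3 (hd : ¬ (lam (i + 1) + 2 ≤ lam i)) :
    ksOut lam i (i + 1) = lam (i + 1) - 1 := by
  rw [ksOut2_apply hd, if_neg (by omega), if_pos (by omega)]

theorem c2_E4 (hd : ¬ (lam (i + 1) + 2 ≤ lam i)) :
    ∀ x, i + 1 < x → ksOut lam i x = lam x := fun x hx => by
  rw [ksOut2_apply hd, if_neg (by omega), if_neg (by omega)]

theorem c2_K (hε : ε = 1 ∨ ε = -1) (hsh : Shape n lam)
    (hst : IsTwoStep ε lam i) (heq : lam i = lam (i + 1)) :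
    ∀ x, x < i → 2 ≤ lam x ∨ (x = 0 ∧ lam x = 0) := by
  intro x hx
  obtain ⟨hi1, hv1, hm1, hm2, hd⟩ := c2_facts hε hsh hst heq
  match x with
  | 0 => exact Or.inr ⟨rfl, hsh.zero⟩
  | (y + 1) =>
    left
    have h1 : lam (i - 1) ≤ lam (y + 1) := hsh.mono' (y + 1) (i - 1) (by omega) (by omega)
    omega

theorem c2_shape (hε : ε = 1 ∨ ε = -1) (hsh : Shape n lam)
    (hst : IsTwoStep ε lam i) (heq : lam i = lam (i + 1)) : Shape n (ksOut lam i) := by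
  obtain ⟨hi1, hv1, hm1, hm2, hd⟩ := c2_facts hε hsh hst heq
  refine ⟨?_, ?_, ?_⟩
  · rw [ksOut2_apply hd]
    split_ifs with h1 h2
    · simp [hsh.zero]
    · omega
    · exact hsh.zero
  · intro j hj
    have h1 := hsh.mono j hj
    rcases lt_or_ge (j + 1) i with hc | hc
    · rw [c2_E1 hd j (by omega), c2_E1 hd (j + 1) hc]
      omega
    · rcases eq_or_lt_of_le hc with hc2 | hc2
      · -- i = j + 1
        have E2' : ksOut lam i (j + 1) = lam (j + 1) - 1 := by
          rw [hc2.symm]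
          exact c2_E2 hd
        rw [c2_E1 hd j (by omega), E2']
        have ep : lam (j + 1) = lam i := by rw [hc2.symm]
        have eq2 : lam j = lam (i - 1) := by rw [show j = i - 1 by omega]
        omega
      · rcases eq_or_lt_of_le (show i ≤ j by omega) with hc3 | hc3
        · -- i = j
          have E2' : ksOut lam i j = lam j - 1 := by rw [← hc3]; exact c2_E2 hd
          have E3' : ksOut lam i (j + 1) = lam (j + 1) - 1 := by
            rw [show j + 1 = i + 1 by omega]
            exact c2_E3 hd
          rw [E2', E3']
          omega
        · rcases eq_or_lt_of_le (show i + 1 ≤ j by omega) with hc4 | hc4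
          · -- i + 1 = j
            have E3' : ksOut lam i j = lam j - 1 := by rw [← hc4]; exact c2_E3 hd
            rw [E3', c2_E4 hd (j + 1) (by omega)]
            have ep : lam j = lam (i + 1) := by rw [← hc4]
            have ep2 : lam (j + 1) = lam (i + 2) := by rw [show j + 1 = i + 2 by omega]
            omega
          · rw [c2_E4 hd j hc4, c2_E4 hd (j + 1) (by omega)]
            exact h1
  · intro j hj
    have h1 := hsh.top j hj
    rw [ksOut2_apply hd]
    split_ifs <;> omega

theorem c2_sum_lt (hε : ε = 1 ∨ ε = -1) (hsh : Shape n lam)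
    (hst : IsTwoStep ε lam i) (heq : lam i = lam (i + 1)) :
    ∑ j ∈ Finset.Icc 1 n, ksOut lam i j < ∑ j ∈ Finset.Icc 1 n, lam j := by
  obtain ⟨hi1, hv1, hm1, hm2, hd⟩ := c2_facts hε hsh hst heq
  have hn := step_le_n hsh hst
  apply Finset.sum_lt_sum
  · intro j hj
    rw [ksOut2_apply hd]
    split_ifs <;> omega
  · refine ⟨i, Finset.mem_Icc.mpr ⟨hi1, by omega⟩, ?_⟩
    rw [c2_E2 hd]
    omega

theorem c2_no_step_im1 (hst : IsTwoStep ε lam i) (heq : lam i = lam (i + 1)) :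
    ¬ IsTwoStep ε lam (i - 1) := by
  intro h
  have h7 := h.2.2.2.2.2.2
  have hi1 : 1 ≤ i - 1 := h.1
  rw [show i - 1 + 1 = i by omega, show i - 1 + 2 = i + 1 by omega] at h7
  exact h7 heq

theorem c2_no_step_ip1 (hst : IsTwoStep ε lam i) (heq : lam i = lam (i + 1)) :
    ¬ IsTwoStep ε lam (i + 1) := by
  intro h
  have h6 := h.2.2.2.2.2.1
  rw [show i + 1 - 1 = i by omega] at h6
  exact h6 heq

theorem c2_step_iff (hε : ε = 1 ∨ ε = -1) (hsh : Shape n lam)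
    (hst : IsTwoStep ε lam i) (heq : lam i = lam (i + 1)) (j : ℕ) :
    IsTwoStep ε (ksOut lam i) j ↔ (IsTwoStep ε lam j ∧ j ≠ i) := by
  obtain ⟨hi1, hv1, hm1, hm2, hd⟩ := c2_facts hε hsh hst heq
  have K := c2_K hε hsh hst heq
  have pst := (step_iff hε lam i).mp hst
  constructor
  · intro hj
    have hj1 : 1 ≤ j := hj.1
    rw [step_iff hε] at hj ⊢
    rcases lt_or_ge (j + 2) i with hA | hA
    · rw [c2_E1 hd (j - 1) (by omega), c2_E1 hd j (by omega), c2_E1 hd (j + 1) (by omega),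
        c2_E1 hd (j + 2) hA] at hj
      have k0 := K (j - 1) (by omega)
      have k1 := K j (by omega)
      have k2 := K (j + 1) (by omega)
      have k3 := K (j + 2) hA
      exact ⟨by omega, by omega⟩
    · rcases eq_or_lt_of_le hA with hB | hB
      · -- i = j + 2
        rw [c2_E1 hd (j - 1) (by omega), c2_E1 hd j (by omega), c2_E1 hd (j + 1) (by omega)] at hj
        have E2' : ksOut lam i (j + 2) = lam (j + 2) - 1 := by
          rw [← hB]
          exact c2_E2 hd
        rw [E2'] at hj
        have k0 := K (j - 1) (by omega)
        have k1 := K j (by omega)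
        have k2 := K (j + 1) (by omega)
        have hne : lam (j + 1) ≠ lam (j + 2) := by
          have h6 := hst.2.2.2.2.2.1
          rw [show i - 1 = j + 1 by omega, hB] at h6
          exact h6
        have hv : lam (j + 2) = lam i := by rw [← hB]
        exact ⟨by omega, by omega⟩
      · rcases eq_or_lt_of_le (show i ≤ j + 1 by omega) with hC | hC
        · -- i = j + 1
          exfalso
          have E2' : ksOut lam i (j + 1) = lam (j + 1) - 1 := by
            rw [hC.symm]
            exact c2_E2 hd
          rw [E2'] at hj
          have hpar : lam (j + 1) = lam i := by rw [hC.symm]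
          omega
        · rcases eq_or_lt_of_le (show i ≤ j by omega) with hD | hD
          · -- i = j : parity kill
            exfalso
            have E2' : ksOut lam i j = lam j - 1 := by rw [← hD]; exact c2_E2 hd
            rw [E2'] at hj
            have hpar : lam j = lam i := by rw [← hD]
            omega
          · rcases eq_or_lt_of_le (show i + 1 ≤ j by omega) with hE | hE
            · -- i + 1 = j : parity kill
              exfalso
              have E3' : ksOut lam i j = lam j - 1 := by rw [← hE]; exact c2_E3 hd
              rw [E3'] at hj
              have hpar : lam j = lam (i + 1) := by rw [← hE]
              omega
            · rcases eq_or_lt_of_le (show i + 2 ≤ j by omega) with hF | hF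
              · -- i + 2 = j
                have E3' : ksOut lam i (j - 1) = lam (j - 1) - 1 := by
                  rw [show j - 1 = i + 1 by omega]
                  exact c2_E3 hd
                rw [E3', c2_E4 hd j (by omega), c2_E4 hd (j + 1) (by omega),
                  c2_E4 hd (j + 2) (by omega)] at hj
                have hne : lam (j - 1) ≠ lam j := by
                  have h7 := hst.2.2.2.2.2.2
                  rw [show i + 1 = j - 1 by omega, show i + 2 = j by omega] at h7
                  exact h7
                have hv : lam (j - 1) = lam (i + 1) := by rw [show j - 1 = i + 1 by omega]
                exact ⟨by omega, by omega⟩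
              · rw [c2_E4 hd (j - 1) (by omega), c2_E4 hd j (by omega),
                  c2_E4 hd (j + 1) (by omega), c2_E4 hd (j + 2) (by omega)] at hj
                exact ⟨hj, by omega⟩
  · rintro ⟨hj, hne⟩
    have hj1 : 1 ≤ j := hj.1
    have hnim1 : j ≠ i - 1 := fun h => c2_no_step_im1 hst heq (h ▸ hj)
    have hnip1 : j ≠ i + 1 := fun h => c2_no_step_ip1 hst heq (h ▸ hj)
    rw [step_iff hε] at hj ⊢
    rcases lt_or_ge (j + 2) i with hA | hA
    · rw [c2_E1 hd (j - 1) (by omega), c2_E1 hd j (by omega), c2_E1 hd (j + 1) (by omega),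
        c2_E1 hd (j + 2) hA]
      have k0 := K (j - 1) (by omega)
      have k1 := K j (by omega)
      have k2 := K (j + 1) (by omega)
      have k3 := K (j + 2) hA
      have hm0 : lam (i - 1) ≤ lam (j + 2) := hsh.mono' (j + 2) (i - 1) (by omega) (by omega)
      have hm0b : lam (j + 2) ≤ lam (j + 1) := hsh.mono (j + 1) (by omega)
      omega
    · rcases eq_or_lt_of_le hA with hB | hB
      · -- i = j + 2
        rw [c2_E1 hd (j - 1) (by omega), c2_E1 hd j (by omega), c2_E1 hd (j + 1) (by omega)]
        have E2' : ksOut lam i (j + 2) = lam (j + 2) - 1 := by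
          rw [← hB]
          exact c2_E2 hd
        rw [E2']
        have k0 := K (j - 1) (by omega)
        have k1 := K j (by omega)
        have k2 := K (j + 1) (by omega)
        have hv : lam (j + 2) = lam i := by rw [← hB]
        have hmj : lam (j + 2) ≤ lam (j + 1) := hsh.mono (j + 1) (by omega)
        omega
      · rcases eq_or_lt_of_le (show i + 2 ≤ j by omega) with hF | hF
        · -- i + 2 = j
          have E3' : ksOut lam i (j - 1) = lam (j - 1) - 1 := by
            rw [show j - 1 = i + 1 by omega]
            exact c2_E3 hd
          rw [E3', c2_E4 hd j (by omega), c2_E4 hd (j + 1) (by omega),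
            c2_E4 hd (j + 2) (by omega)]
          have hv : lam (j - 1) = lam (i + 1) := by rw [show j - 1 = i + 1 by omega]
          have hmj : lam j ≤ lam (j - 1) := by
            have := hsh.mono (i + 1) (by omega)
            rw [← hv, show i + 2 = j by omega] at this
            exact this
          omega
        · rw [c2_E4 hd (j - 1) (by omega), c2_E4 hd j (by omega),
            c2_E4 hd (j + 1) (by omega), c2_E4 hd (j + 2) (by omega)]
          exact hj


theorem c2_Cl_iff (hε : ε = 1 ∨ ε = -1) (hsh : Shape n lam)
    (hst : IsTwoStep ε lam i) (heq : lam i = lam (i + 1)) {a : ℕ}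
    (ha1 : a ≠ i) (ha2 : a ≠ i + 2) : Cl (ksOut lam i) a ↔ Cl lam a := by
  obtain ⟨hi1, hv1, hm1, hm2, hd⟩ := c2_facts hε hsh hst heq
  have K := c2_K hε hsh hst heq
  unfold Cl
  rw [Nat.even_iff, Nat.even_iff]
  rcases lt_or_ge a i with hA | hA
  · have k0 := K (a - 1) (by omega)
    have k1 := K a hA
    rw [c2_E1 hd a hA]
    rcases Nat.eq_zero_or_pos a with rfl | ha0
    · rw [show (0 : ℕ) - 1 = 0 by omega, c2_E1 hd 0 (by omega)]
      omega
    · rw [c2_E1 hd (a - 1) (by omega)]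
      omega
  · rcases eq_or_lt_of_le hA with hB | hB
    · exact absurd hB.symm ha1
    · rcases eq_or_lt_of_le (show i + 1 ≤ a by omega) with hC | hC
      · -- a = i + 1
        have E2' : ksOut lam i (a - 1) = lam (a - 1) - 1 := by
          rw [show a - 1 = i by omega]
          exact c2_E2 hd
        have E3' : ksOut lam i a = lam a - 1 := by
          rw [← hC]
          exact c2_E3 hd
        rw [E2', E3']
        have l1 : lam (a - 1) = lam i := by rw [show a - 1 = i by omega]
        have l2 : lam a = lam (i + 1) := by rw [← hC]
        omega
      · rcases eq_or_lt_of_le (show i + 2 ≤ a by omega) with hD | hD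
        · exact absurd hD.symm ha2
        · rw [c2_E4 hd (a - 1) (by omega), c2_E4 hd a (by omega)]

theorem c2_Cr_iff (hε : ε = 1 ∨ ε = -1) (hsh : Shape n lam)
    (hst : IsTwoStep ε lam i) (heq : lam i = lam (i + 1)) {e : ℕ}
    (he1 : e + 2 ≠ i) (he2 : e ≠ i) : Cr (ksOut lam i) e ↔ Cr lam e := by
  obtain ⟨hi1, hv1, hm1, hm2, hd⟩ := c2_facts hε hsh hst heq
  have K := c2_K hε hsh hst heq
  unfold Cr
  rw [Nat.even_iff, Nat.even_iff]
  rcases lt_or_ge (e + 2) i with hA | hA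
  · have k1 := K (e + 1) (by omega)
    have k2 := K (e + 2) hA
    rw [c2_E1 hd (e + 1) (by omega), c2_E1 hd (e + 2) hA]
    omega
  · rcases eq_or_lt_of_le hA with hB | hB
    · exact absurd hB.symm he1
    · rcases eq_or_lt_of_le (show i ≤ e + 1 by omega) with hC | hC
      · -- i = e + 1
        have E2' : ksOut lam i (e + 1) = lam (e + 1) - 1 := by rw [← hC]; exact c2_E2 hd
        have E3' : ksOut lam i (e + 2) = lam (e + 2) - 1 := by
          rw [show e + 2 = i + 1 by omega]
          exact c2_E3 hd
        rw [E2', E3']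
        have l1 : lam (e + 1) = lam i := by rw [← hC]
        have l2 : lam (e + 2) = lam (i + 1) := by rw [show e + 2 = i + 1 by omega]
        omega
      · rw [c2_E4 hd (e + 1) (by omega), c2_E4 hd (e + 2) (by omega)]

theorem c2_Cl_i2 (hε : ε = 1 ∨ ε = -1) (hsh : Shape n lam)
    (hst : IsTwoStep ε lam i) (heq : lam i = lam (i + 1)) :
    Cl (ksOut lam i) (i + 2) ↔ ¬ Even (lam (i + 1) - lam (i + 2)) := by
  obtain ⟨hi1, hv1, hm1, hm2, hd⟩ := c2_facts hε hsh hst heq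
  unfold Cl
  rw [Nat.even_iff, Nat.even_iff]
  have E3' : ksOut lam i (i + 2 - 1) = lam (i + 1) - 1 := by
    rw [show i + 2 - 1 = i + 1 by omega]
    exact c2_E3 hd
  rw [E3', c2_E4 hd (i + 2) (by omega)]
  omega

theorem c2_Cr_im2 (hε : ε = 1 ∨ ε = -1) (hsh : Shape n lam)
    (hst : IsTwoStep ε lam i) (heq : lam i = lam (i + 1)) (h2 : 2 ≤ i) :
    Cr (ksOut lam i) (i - 2) ↔ ¬ Even (lam (i - 1) - lam i) := by
  obtain ⟨hi1, hv1, hm1, hm2, hd⟩ := c2_facts hε hsh hst heq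
  unfold Cr
  rw [Nat.even_iff, Nat.even_iff]
  have E1' : ksOut lam i (i - 2 + 1) = lam (i - 1) - 2 := by
    rw [show i - 2 + 1 = i - 1 by omega]
    exact c2_E1 hd (i - 1) (by omega)
  have E2' : ksOut lam i (i - 2 + 2) = lam i - 1 := by
    rw [show i - 2 + 2 = i by omega]
    exact c2_E2 hd
  rw [E1', E2']
  omega

theorem c2_ip2_step_Cr (hε : ε = 1 ∨ ε = -1) (hsh : Shape n lam)
    (hst : IsTwoStep ε lam i) (heq : lam i = lam (i + 1))
    (h : IsTwoStep ε lam (i + 2)) : Cr lam i := by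
  have p1 := (step_iff hε lam i).mp hst
  have p2 := (step_iff hε lam (i + 2)).mp h
  unfold Cr
  rw [Nat.even_iff]
  omega

theorem c2_im2_step_Cl (hε : ε = 1 ∨ ε = -1) (hsh : Shape n lam)
    (hst : IsTwoStep ε lam i) (heq : lam i = lam (i + 1))
    (h : IsTwoStep ε lam (i - 2)) : Cl lam i := by
  have p1 := (step_iff hε lam i).mp hst
  have p2 := (step_iff hε lam (i - 2)).mp h
  have h2 : 1 ≤ i - 2 := h.1
  have l1 : lam (i - 2 + 1) = lam (i - 1) := by rw [show i - 2 + 1 = i - 1 by omega]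
  rw [l1] at p2
  refine ⟨by omega, ?_⟩
  rw [Nat.even_iff]
  omega

theorem c2_sVal (hε : ε = 1 ∨ ε = -1) (hsh : Shape n lam)
    (hst : IsTwoStep ε lam i) (heq : lam i = lam (i + 1)) :
    sVal (ksOut lam i) n +
      ((if 1 < i then 1 - (lam (i - 1) - lam i) % 2 else 0) +
        (1 - (lam (i + 1) - lam (i + 2)) % 2)) = sVal lam n := by
  obtain ⟨hi1, hv1, hm1, hm2, hd⟩ := c2_facts hε hsh hst heq
  have K := c2_K hε hsh hst heq
  have hn := step_le_n hsh hst
  have hi1in : i + 1 ∈ Finset.Icc 1 n := Finset.mem_Icc.mpr ⟨by omega, by omega⟩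
  unfold sVal
  rw [← Finset.sum_erase_add _ _ hi1in,
    ← Finset.sum_erase_add _ (fun j => (lam j - lam (j + 1)) / 2) hi1in]
  have hiin : i ∈ (Finset.Icc 1 n).erase (i + 1) := by
    rw [Finset.mem_erase, Finset.mem_Icc]
    omega
  rw [← Finset.sum_erase_add _ _ hiin,
    ← Finset.sum_erase_add _ (fun j => (lam j - lam (j + 1)) / 2) hiin]
  have EA : ksOut lam i (i + 1) = lam (i + 1) - 1 := c2_E3 hd
  have EB : ksOut lam i (i + 1 + 1) = lam (i + 1 + 1) := c2_E4 hd (i + 1 + 1) (by omega)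
  have EB2 : lam (i + 1 + 1) = lam (i + 2) := rfl
  have EC : ksOut lam i i = lam i - 1 := c2_E2 hd
  rcases lt_or_ge 1 i with h2i | h2i
  · have him : i - 1 ∈ ((Finset.Icc 1 n).erase (i + 1)).erase i := by
      rw [Finset.mem_erase, Finset.mem_erase, Finset.mem_Icc]
      omega
    rw [← Finset.sum_erase_add _ _ him,
      ← Finset.sum_erase_add _ (fun j => (lam j - lam (j + 1)) / 2) him]
    have hcong : ∑ j ∈ (((Finset.Icc 1 n).erase (i + 1)).erase i).erase (i - 1),
        (ksOut lam i j - ksOut lam i (j + 1)) / 2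
        = ∑ j ∈ (((Finset.Icc 1 n).erase (i + 1)).erase i).erase (i - 1),
          (lam j - lam (j + 1)) / 2 := by
      apply Finset.sum_congr rfl
      intro j hj
      simp only [Finset.mem_erase, Finset.mem_Icc] at hj
      rcases lt_or_ge (j + 1) i with hc | hc
      · have k0 := K j (by omega)
        have k1 := K (j + 1) hc
        rw [c2_E1 hd j (by omega), c2_E1 hd (j + 1) hc]
        omega
      · rw [c2_E4 hd j (by omega), c2_E4 hd (j + 1) (by omega)]
    rw [hcong]
    have ED : ksOut lam i (i - 1) = lam (i - 1) - 2 := c2_E1 hd (i - 1) (by omega)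
    have EE : ksOut lam i (i - 1 + 1) = lam i - 1 := by
      rw [show i - 1 + 1 = i by omega]
      exact c2_E2 hd
    have EF : lam (i - 1 + 1) = lam i := by rw [show i - 1 + 1 = i by omega]
    rw [ED, EE, EF, EC, EA, EB, EB2, if_pos h2i]
    omega
  · have hcong : ∑ j ∈ ((Finset.Icc 1 n).erase (i + 1)).erase i,
        (ksOut lam i j - ksOut lam i (j + 1)) / 2
        = ∑ j ∈ ((Finset.Icc 1 n).erase (i + 1)).erase i,
          (lam j - lam (j + 1)) / 2 := by
      apply Finset.sum_congr rfl
      intro j hj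
      simp only [Finset.mem_erase, Finset.mem_Icc] at hj
      rw [c2_E4 hd j (by omega), c2_E4 hd (j + 1) (by omega)]
    rw [hcong, EC, EA, EB, EB2, if_neg (by omega)]
    omega

theorem c2_W_notmem_i (hε : ε = 1 ∨ ε = -1) (hsh : Shape n lam)
    (hst : IsTwoStep ε lam i) (heq : lam i = lam (i + 1)) :
    i ∉ Wset ε (ksOut lam i) := by
  rintro ⟨-, k, hk1, hch, -⟩
  have h0 : IsTwoStep ε (ksOut lam i) i := by simpa using hch 0 (by omega)
  have := (c2_step_iff hε hsh hst heq i).mp h0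
  exact this.2 rfl

theorem c2_Cl_ip2_of_Cr (hε : ε = 1 ∨ ε = -1) (hsh : Shape n lam)
    (hst : IsTwoStep ε lam i) (heq : lam i = lam (i + 1)) (hCr : Cr lam i) :
    Cl lam (i + 2) := by
  refine ⟨by omega, ?_⟩
  have : lam (i + 2 - 1) = lam (i + 1) := by rw [show i + 2 - 1 = i + 1 by omega]
  rw [this]
  exact hCr

/-- Transfer an element of `W(μ)` other than `i+2` into `W(λ)`, assuming either
`¬ Cr λ i` (allows extending a chain ending at `i-2` through `i`) or `¬ Cl λ i`
(rules out chains ending at `i-2`). -/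
theorem c2_W_to_lam (hε : ε = 1 ∨ ε = -1) (hsh : Shape n lam)
    (hst : IsTwoStep ε lam i) (heq : lam i = lam (i + 1)) {a : ℕ}
    (ha : a ∈ Wset ε (ksOut lam i)) (hai2 : a ≠ i + 2)
    (hside : ¬ Cr lam i ∨ ¬ Cl lam i) : a ∈ Wset ε lam := by
  obtain ⟨hcl, k, hk1, hch, hcr⟩ := ha
  have ha0 : IsTwoStep ε (ksOut lam i) a := by simpa using hch 0 (by omega)
  have haL := (c2_step_iff hε hsh hst heq a).mp ha0
  have hclL : ¬ Cl lam a := fun hc => hcl ((c2_Cl_iff hε hsh hst heq haL.2 hai2).mpr hc)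
  have hchL : Chain ε lam a k := fun j hj => ((c2_step_iff hε hsh hst heq _).mp (hch j hj)).1
  have hend : IsTwoStep ε (ksOut lam i) (a + 2 * (k - 1)) := hch (k - 1) (by omega)
  have hendL := (c2_step_iff hε hsh hst heq _).mp hend
  by_cases hee : a + 2 * (k - 1) + 2 = i
  · -- the witness chain ends at i - 2
    rcases hside with hCr | hCl
    · -- extend the chain through i
      refine ⟨hclL, k + 1, by omega, ?_, ?_⟩
      · intro j hj
        rcases lt_or_ge j k with h | h
        · exact hchL j h
        · have hjk : j = k := by omega
          subst hjk
          rw [show a + 2 * j = i by omega]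
          exact hst
      · rw [show a + 2 * (k + 1 - 1) = i by omega]
        exact hCr
    · -- impossible : the step at i - 2 forces Cl λ i
      exfalso
      apply hCl
      apply c2_im2_step_Cl hε hsh hst heq
      have : a + 2 * (k - 1) = i - 2 := by omega
      rw [← this]
      exact hendL.1
  · refine ⟨hclL, k, hk1, hchL, ?_⟩
    intro hc
    exact hcr ((c2_Cr_iff hε hsh hst heq hee hendL.2).mpr hc)

/-- If `i+2 ∈ W(μ)` then `i ∈ W(λ)`, provided `¬ Cl λ i`. -/
theorem c2_ip2_W (hε : ε = 1 ∨ ε = -1) (hsh : Shape n lam)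
    (hst : IsTwoStep ε lam i) (heq : lam i = lam (i + 1)) (hCl : ¬ Cl lam i)
    (ha : i + 2 ∈ Wset ε (ksOut lam i)) : i ∈ Wset ε lam := by
  obtain ⟨hcl, k, hk1, hch, hcr⟩ := ha
  have hend : IsTwoStep ε (ksOut lam i) (i + 2 + 2 * (k - 1)) := hch (k - 1) (by omega)
  have hendL := (c2_step_iff hε hsh hst heq _).mp hend
  refine ⟨hCl, k + 1, by omega, ?_, ?_⟩
  · intro j hj
    rcases Nat.eq_zero_or_pos j with rfl | hj0
    · simpa using hst
    · have h := hch (j - 1) (by omega)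
      have e : i + 2 + 2 * (j - 1) = i + 2 * j := by omega
      rw [e] at h
      exact ((c2_step_iff hε hsh hst heq _).mp h).1
  · have e : i + 2 * (k + 1 - 1) = i + 2 + 2 * (k - 1) := by omega
    rw [e]
    intro hc
    exact hcr ((c2_Cr_iff hε hsh hst heq (by omega) hendL.2).mpr hc)

/-- Characterisation of a potential second exceptional element : if `a ∈ W(μ) \ W(λ)`
and `a ≠ i + 2`, then its witness chain ends at `i - 2`. -/
theorem c2_f2_char (hε : ε = 1 ∨ ε = -1) (hsh : Shape n lam)
    (hst : IsTwoStep ε lam i) (heq : lam i = lam (i + 1)) {a : ℕ}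
    (ha : a ∈ Wset ε (ksOut lam i)) (hnot : a ∉ Wset ε lam) (hai2 : a ≠ i + 2) :
    ∃ k, 1 ≤ k ∧ Chain ε (ksOut lam i) a k ∧ a + 2 * (k - 1) + 2 = i := by
  obtain ⟨hcl, k, hk1, hch, hcr⟩ := ha
  refine ⟨k, hk1, hch, ?_⟩
  by_contra hee
  apply hnot
  have ha0 : IsTwoStep ε (ksOut lam i) a := by simpa using hch 0 (by omega)
  have haL := (c2_step_iff hε hsh hst heq a).mp ha0
  have hclL : ¬ Cl lam a := fun hc => hcl ((c2_Cl_iff hε hsh hst heq haL.2 hai2).mpr hc)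
  have hchL : Chain ε lam a k := fun j hj => ((c2_step_iff hε hsh hst heq _).mp (hch j hj)).1
  have hend : IsTwoStep ε (ksOut lam i) (a + 2 * (k - 1)) := hch (k - 1) (by omega)
  have hendL := (c2_step_iff hε hsh hst heq _).mp hend
  exact ⟨hclL, k, hk1, hchL, fun hc => hcr ((c2_Cr_iff hε hsh hst heq hee hendL.2).mpr hc)⟩

theorem c2_W_diff_subsingleton (hε : ε = 1 ∨ ε = -1) (hsh : Shape n lam)
    (hst : IsTwoStep ε lam i) (heq : lam i = lam (i + 1)) :
    (Wset ε (ksOut lam i) \ Wset ε lam).Subsingleton := by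
  -- first : any "f2" element with given end data is unique and incompatible with i+2
  have f2chain : ∀ a k, 1 ≤ k → Chain ε (ksOut lam i) a k → a + 2 * (k - 1) + 2 = i →
      ∀ j, 1 ≤ j → j ≤ k - 1 → IsTwoStep ε (ksOut lam i) (i - 2 - 2 * j) := by
    intro a k hk1 hch he j hj1 hj2
    have h := hch (k - 1 - j) (by omega)
    have e : a + 2 * (k - 1 - j) = i - 2 - 2 * j := by omega
    rwa [e] at h
  intro x hx y hy
  by_contra hxy
  -- characterise both
  rcases eq_or_ne x (i + 2) with hx2 | hx2 <;> rcases eq_or_ne y (i + 2) with hy2 | hy2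
  · exact hxy (hx2.trans hy2.symm)
  · -- x = i + 2, y an f2 element : y ∈ W(λ) via the composite chain
    obtain ⟨ky, hky1, hchy, hey⟩ := c2_f2_char hε hsh hst heq hy.1 hy.2 hy2
    apply hy.2
    -- data of x = i+2 in W(μ)
    obtain ⟨hclx, kx, hkx1, hchx, hcrx⟩ := hx.1
    rw [hx2] at hchx hcrx
    have hendx : IsTwoStep ε (ksOut lam i) (i + 2 + 2 * (kx - 1)) := hchx (kx - 1) (by omega)
    have hendxL := (c2_step_iff hε hsh hst heq _).mp hendx
    -- y's data
    have hy0 : IsTwoStep ε (ksOut lam i) y := by simpa using hchy 0 (by omega)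
    have hyL := (c2_step_iff hε hsh hst heq y).mp hy0
    have hclyL : ¬ Cl lam y := fun hc =>
      hy.1.1 ((c2_Cl_iff hε hsh hst heq hyL.2 hy2).mpr hc)
    refine ⟨hclyL, ky + 1 + kx, by omega, ?_, ?_⟩
    · intro j hj
      rcases lt_or_ge j ky with h | h
      · exact ((c2_step_iff hε hsh hst heq _).mp (hchy j h)).1
      · rcases eq_or_lt_of_le h with h2 | h2
        · rw [← h2, show y + 2 * ky = i by omega]
          exact hst
        · have hm := hchx (j - ky - 1) (by omega)
          have e : i + 2 + 2 * (j - ky - 1) = y + 2 * j := by omega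
          rw [e] at hm
          exact ((c2_step_iff hε hsh hst heq _).mp hm).1
    · have e : y + 2 * (ky + 1 + kx - 1) = i + 2 + 2 * (kx - 1) := by omega
      rw [e]
      intro hc
      exact hcrx ((c2_Cr_iff hε hsh hst heq (by omega) hendxL.2).mpr hc)
  · -- symmetric : y = i + 2, x an f2 element
    obtain ⟨kx, hkx1, hchx, hex⟩ := c2_f2_char hε hsh hst heq hx.1 hx.2 hx2
    apply hx.2
    obtain ⟨hcly, ky, hky1, hchy, hcry⟩ := hy.1
    rw [hy2] at hchy hcry
    have hendy : IsTwoStep ε (ksOut lam i) (i + 2 + 2 * (ky - 1)) := hchy (ky - 1) (by omega)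
    have hendyL := (c2_step_iff hε hsh hst heq _).mp hendy
    have hx0 : IsTwoStep ε (ksOut lam i) x := by simpa using hchx 0 (by omega)
    have hxL := (c2_step_iff hε hsh hst heq x).mp hx0
    have hclxL : ¬ Cl lam x := fun hc =>
      hx.1.1 ((c2_Cl_iff hε hsh hst heq hxL.2 hx2).mpr hc)
    refine ⟨hclxL, kx + 1 + ky, by omega, ?_, ?_⟩
    · intro j hj
      rcases lt_or_ge j kx with h | h
      · exact ((c2_step_iff hε hsh hst heq _).mp (hchx j h)).1
      · rcases eq_or_lt_of_le h with h2 | h2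
        · rw [← h2, show x + 2 * kx = i by omega]
          exact hst
        · have hm := hchy (j - kx - 1) (by omega)
          have e : i + 2 + 2 * (j - kx - 1) = x + 2 * j := by omega
          rw [e] at hm
          exact ((c2_step_iff hε hsh hst heq _).mp hm).1
    · have e : x + 2 * (kx + 1 + ky - 1) = i + 2 + 2 * (ky - 1) := by omega
      rw [e]
      intro hc
      exact hcry ((c2_Cr_iff hε hsh hst heq (by omega) hendyL.2).mpr hc)
  · -- both f2 elements : the smaller chain passes through the larger start
    obtain ⟨kx, hkx1, hchx, hex⟩ := c2_f2_char hε hsh hst heq hx.1 hx.2 hx2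
    obtain ⟨ky, hky1, hchy, hey⟩ := c2_f2_char hε hsh hst heq hy.1 hy.2 hy2
    -- wlog x < y
    have main : ∀ a b ka kb, 1 ≤ ka → Chain ε (ksOut lam i) a ka → a + 2 * (ka - 1) + 2 = i →
        1 ≤ kb → Chain ε (ksOut lam i) b kb → b + 2 * (kb - 1) + 2 = i →
        b ∈ Wset ε (ksOut lam i) → a < b → False := by
      intro a b ka kb hka1 hcha hea hkb1 hchb heb hbW hab
      -- b = a + 2 * j0 with 1 ≤ j0 < ka
      have hj0 : ∃ j0, 1 ≤ j0 ∧ j0 < ka ∧ b = a + 2 * j0 := by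
        refine ⟨(b - a) / 2, by omega, by omega, by omega⟩
      obtain ⟨j0, hj01, hj02, hj03⟩ := hj0
      have hbm2 : IsTwoStep ε (ksOut lam i) (b - 2) := by
        have h := hcha (j0 - 1) (by omega)
        have e : a + 2 * (j0 - 1) = b - 2 := by omega
        rwa [e] at h
      have hb0 : IsTwoStep ε (ksOut lam i) b := by simpa using hchb 0 (by omega)
      -- parity forces Cl (ksOut lam i) b
      have p1 := (step_iff hε (ksOut lam i) (b - 2)).mp hbm2
      have p2 := (step_iff hε (ksOut lam i) b).mp hb0
      have l1 : ksOut lam i (b - 2 + 1) = ksOut lam i (b - 1) := by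
        rw [show b - 2 + 1 = b - 1 by omega]
      rw [l1] at p1
      have hclb : Cl (ksOut lam i) b := by
        refine ⟨by omega, ?_⟩
        rw [Nat.even_iff]
        omega
      exact hbW.1 hclb
    rcases lt_trichotomy x y with h | h | h
    · exact main x y kx ky hkx1 hchx hex hky1 hchy hey hy.1 h
    · exact hxy h
    · exact main y x ky kx hky1 hchy hey hkx1 hchx hex hx.1 h

/-- Minimal-index direction : transfer `W(λ) \ {i}` into `W(μ)`. -/
theorem c2_W_from_lam (hε : ε = 1 ∨ ε = -1) (hsh : Shape n lam)
    (hst : IsTwoStep ε lam i) (heq : lam i = lam (i + 1))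
    (hm2 : ¬ IsTwoStep ε lam (i - 2)) {a : ℕ}
    (ha : a ∈ Wset ε lam) (hane : a ≠ i) (hai2 : a ≠ i + 2) :
    a ∈ Wset ε (ksOut lam i) := by
  obtain ⟨hcl, k, hk1, hch, hcr⟩ := ha
  have hchne : ∀ j, j < k → a + 2 * j ≠ i := by
    intro j hj hcontra
    rcases Nat.eq_zero_or_pos j with rfl | hj0
    · exact hane (by omega)
    · apply hm2
      have h := hch (j - 1) (by omega)
      have e : a + 2 * (j - 1) = i - 2 := by omega
      rwa [e] at h
  have hchM : Chain ε (ksOut lam i) a k := fun j hj =>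
    (c2_step_iff hε hsh hst heq _).mpr ⟨hch j hj, hchne j hj⟩
  refine ⟨?_, k, hk1, hchM, ?_⟩
  · intro hc
    exact hcl ((c2_Cl_iff hε hsh hst heq hane hai2).mp hc)
  · intro hc
    have hee : a + 2 * (k - 1) + 2 ≠ i := by
      intro hcontra
      apply hm2
      have h := hch (k - 1) (by omega)
      have e : a + 2 * (k - 1) = i - 2 := by omega
      rwa [e] at h
    exact hcr ((c2_Cr_iff hε hsh hst heq hee (hchne (k - 1) (by omega))).mp hc)

/-- Minimal-index direction with `Cr λ i` : `i ∈ W(λ)` yields `i + 2 ∈ W(μ)`. -/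
theorem c2_i_to_ip2 (hε : ε = 1 ∨ ε = -1) (hsh : Shape n lam)
    (hst : IsTwoStep ε lam i) (heq : lam i = lam (i + 1))
    (hm2 : ¬ IsTwoStep ε lam (i - 2)) (hCr : Cr lam i)
    (ha : i ∈ Wset ε lam) : i + 2 ∈ Wset ε (ksOut lam i) := by
  obtain ⟨hcl, k, hk1, hch, hcr⟩ := ha
  have hk2 : 2 ≤ k := by
    by_contra hk
    have : k = 1 := by omega
    subst this
    simp only [Nat.sub_self, Nat.mul_zero, Nat.add_zero] at hcr
    exact hcr hCr
  refine ⟨?_, k - 1, by omega, ?_, ?_⟩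
  · intro hc
    rw [c2_Cl_i2 hε hsh hst heq] at hc
    exact hc hCr
  · intro j hj
    have h := hch (j + 1) (by omega)
    have e : i + 2 * (j + 1) = i + 2 + 2 * j := by omega
    rw [e] at h
    exact (c2_step_iff hε hsh hst heq _).mpr ⟨h, by omega⟩
  · have e : i + 2 + 2 * (k - 1 - 1) = i + 2 * (k - 1) := by omega
    rw [e]
    intro hc
    have hend := hch (k - 1) (by omega)
    exact hcr ((c2_Cr_iff hε hsh hst heq (by omega) (by omega)).mp hc)

end Case2

section Assembly

variable {ε : ℤ} {lam : ℕ → ℕ} {n i : ℕ}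

instance {lam : ℕ → ℕ} {i : ℕ} : Decidable (Cl lam i) :=
  inferInstanceAs (Decidable (1 < i ∧ Even (lam (i - 1) - lam i)))

instance {lam : ℕ → ℕ} {e : ℕ} : Decidable (Cr lam e) :=
  inferInstanceAs (Decidable (Even (lam (e + 1) - lam (e + 2))))

theorem rigid_z (hε : ε = 1 ∨ ε = -1) (hsh : Shape n lam)
    (h : ∀ i, ¬ IsAdmissibleIndex ε lam i) : zVal ε lam n = 0 := by
  have hΔ : ∀ j, ¬ IsTwoStep ε lam j := fun j hj => h j (step_admissible hε hj)
  have hW : Wset ε lam = ∅ := by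
    ext a
    simp only [Set.mem_empty_iff_false, iff_false]
    rintro ⟨-, k, hk, hch, -⟩
    exact hΔ a (by simpa using hch 0 (by omega))
  have hs : sVal lam n = 0 := by
    unfold sVal
    apply Finset.sum_eq_zero
    intro j hj
    simp only [Finset.mem_Icc] at hj
    have : ¬ (lam (j + 1) + 2 ≤ lam j) := fun hc => h j (Or.inl ⟨by omega, hc⟩)
    omega
  rw [z_eq_W hε hsh, hW, hs]
  simp

theorem z_nonneg (hε : ε = 1 ∨ ε = -1) (hsh : Shape n lam) : 0 ≤ zVal ε lam n := by
  rw [z_eq_W hε hsh]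
  positivity

theorem case1_z_le (hε : ε = 1 ∨ ε = -1) (hsh : Shape n lam) (hi1 : 1 ≤ i)
    (hd : lam (i + 1) + 2 ≤ lam i) : zVal ε (ksOut lam i) n ≤ zVal ε lam n - 1 := by
  have hshM := ksOut1_shape hsh hd
  rw [z_eq_W hε hsh, z_eq_W hε hshM]
  have hs := ksOut1_sVal hsh hi1 hd
  have hW : (Wset ε (ksOut lam i)).ncard ≤ (Wset ε lam).ncard :=
    Set.ncard_le_ncard (case1_W_sub hε hsh hd) ((twoSteps_finite hsh).subset (Wset_subset lam))
  omega

theorem case1_z_min (hε : ε = 1 ∨ ε = -1) (hsh : Shape n lam) (hi1 : 1 ≤ i)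
    (hd : lam (i + 1) + 2 ≤ lam i) (hm : ¬ IsTwoStep ε lam (i - 1)) :
    zVal ε lam n - 1 ≤ zVal ε (ksOut lam i) n := by
  have hshM := ksOut1_shape hsh hd
  rw [z_eq_W hε hsh, z_eq_W hε hshM]
  have hs := ksOut1_sVal hsh hi1 hd
  have hW : (Wset ε lam).ncard ≤ (Wset ε (ksOut lam i)).ncard :=
    Set.ncard_le_ncard (case1_W_sup hε hsh hi1 hd hm)
      ((twoSteps_finite hshM).subset (Wset_subset _))
  omega

theorem cl_term_eq (hε : ε = 1 ∨ ε = -1) :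
    (if 1 < i then 1 - (lam (i - 1) - lam i) % 2 else 0) = (if Cl lam i then 1 else 0) := by
  by_cases h : Cl lam i
  · rw [if_pos h, if_pos h.1]
    have h2 := h.2
    rw [Nat.even_iff] at h2
    omega
  · rw [if_neg h]
    by_cases h1 : 1 < i
    · rw [if_pos h1]
      have h2 : ¬ Even (lam (i - 1) - lam i) := fun hc => h ⟨h1, hc⟩
      rw [Nat.even_iff] at h2
      omega
    · rw [if_neg h1]

theorem cr_term_eq (hε : ε = 1 ∨ ε = -1) :
    (1 - (lam (i + 1) - lam (i + 2)) % 2) = (if Cr lam i then 1 else 0) := by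
  by_cases h : Cr lam i
  · rw [if_pos h]
    have h2 : Even (lam (i + 1) - lam (i + 2)) := h
    rw [Nat.even_iff] at h2
    omega
  · rw [if_neg h]
    have h2 : ¬ Even (lam (i + 1) - lam (i + 2)) := h
    rw [Nat.even_iff] at h2
    omega

theorem c2_mem_i_W (hε : ε = 1 ∨ ε = -1) (hst : IsTwoStep ε lam i)
    (hCl : ¬ Cl lam i) (hCr : ¬ Cr lam i) : i ∈ Wset ε lam := by
  refine ⟨hCl, 1, le_refl 1, fun j hj => ?_, by simpa using hCr⟩
  interval_cases j
  simpa using hst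

theorem c2_z_le (hε : ε = 1 ∨ ε = -1) (hsh : Shape n lam)
    (hst : IsTwoStep ε lam i) (heq : lam i = lam (i + 1)) :
    zVal ε (ksOut lam i) n ≤ zVal ε lam n - 1 := by
  have hshM := c2_shape hε hsh hst heq
  have hfinW : (Wset ε lam).Finite := (twoSteps_finite hsh).subset (Wset_subset lam)
  have hfinW' : (Wset ε (ksOut lam i)).Finite :=
    (twoSteps_finite hshM).subset (Wset_subset _)
  rw [z_eq_W hε hsh, z_eq_W hε hshM]
  have hs := c2_sVal hε hsh hst heq
  rw [cl_term_eq hε, cr_term_eq hε] at hs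
  by_cases hCl : Cl lam i <;> by_cases hCr : Cr lam i
  · -- Cl ∧ Cr : |W'| ≤ |W| + 1
    rw [if_pos hCl, if_pos hCr] at hs
    have h1 : (Wset ε (ksOut lam i) \ Wset ε lam).ncard ≤ 1 :=
      (Set.ncard_le_one_iff hfinW'.diff).mpr
        (fun ha hb => c2_W_diff_subsingleton hε hsh hst heq ha hb)
    have h2 : (Wset ε (ksOut lam i)).ncard ≤ (Wset ε lam).ncard + 1 := by
      calc (Wset ε (ksOut lam i)).ncard
          = ((Wset ε (ksOut lam i) ∩ Wset ε lam) ∪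
              (Wset ε (ksOut lam i) \ Wset ε lam)).ncard := by
            rw [Set.inter_union_diff]
        _ ≤ (Wset ε (ksOut lam i) ∩ Wset ε lam).ncard +
              (Wset ε (ksOut lam i) \ Wset ε lam).ncard := Set.ncard_union_le _ _
        _ ≤ (Wset ε lam).ncard + 1 :=
            add_le_add (Set.ncard_le_ncard Set.inter_subset_right hfinW) h1
    omega
  · -- Cl ∧ ¬Cr : W' ⊆ W
    rw [if_pos hCl, if_neg hCr] at hs
    have hsub : Wset ε (ksOut lam i) ⊆ Wset ε lam := by
      intro a ha
      have ha0 : IsTwoStep ε (ksOut lam i) a := Wset_subset _ ha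
      have haL := (c2_step_iff hε hsh hst heq a).mp ha0
      have hai2 : a ≠ i + 2 := fun h =>
        hCr (c2_ip2_step_Cr hε hsh hst heq (h ▸ haL.1))
      exact c2_W_to_lam hε hsh hst heq ha hai2 (Or.inl hCr)
    have hW := Set.ncard_le_ncard hsub hfinW
    omega
  · -- ¬Cl ∧ Cr
    rw [if_neg hCl, if_pos hCr] at hs
    have hW : (Wset ε (ksOut lam i)).ncard ≤ (Wset ε lam).ncard := by
      by_cases hip2 : i + 2 ∈ Wset ε (ksOut lam i)
      · have hiW : i ∈ Wset ε lam := c2_ip2_W hε hsh hst heq hCl hip2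
        have hsub : Wset ε (ksOut lam i) ⊆ (Wset ε lam \ {i}) ∪ {i + 2} := by
          intro a ha
          rcases eq_or_ne a (i + 2) with rfl | hne
          · exact Or.inr rfl
          · refine Or.inl ⟨c2_W_to_lam hε hsh hst heq ha hne (Or.inr hCl), ?_⟩
            simp only [Set.mem_singleton_iff]
            intro hc
            exact c2_W_notmem_i hε hsh hst heq (hc ▸ ha)
        have h2 : (Wset ε (ksOut lam i)).ncard ≤ (Wset ε lam \ {i}).ncard + 1 := by
          refine le_trans (Set.ncard_le_ncard hsub
            (hfinW.diff.union (Set.finite_singleton _))) ?_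
          refine le_trans (Set.ncard_union_le _ _) ?_
          simp
        have h3 : (Wset ε lam \ {i}).ncard = (Wset ε lam).ncard - 1 :=
          Set.ncard_diff_singleton_of_mem hiW
        have h4 : 1 ≤ (Wset ε lam).ncard := by
          rcases Nat.eq_zero_or_pos (Wset ε lam).ncard with h0 | h0
          · rw [Set.ncard_eq_zero hfinW] at h0
            rw [h0] at hiW
            simp at hiW
          · exact h0
        omega
      · have hsub : Wset ε (ksOut lam i) ⊆ Wset ε lam := fun a ha =>
          c2_W_to_lam hε hsh hst heq ha (fun h => hip2 (h ▸ ha)) (Or.inr hCl)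
        exact Set.ncard_le_ncard hsub hfinW
    omega
  · -- ¬Cl ∧ ¬Cr : |W'| ≤ |W| - 1
    rw [if_neg hCl, if_neg hCr] at hs
    have hiW : i ∈ Wset ε lam := c2_mem_i_W hε hst hCl hCr
    have hsub : Wset ε (ksOut lam i) ⊆ Wset ε lam \ {i} := by
      intro a ha
      have ha0 : IsTwoStep ε (ksOut lam i) a := Wset_subset _ ha
      have haL := (c2_step_iff hε hsh hst heq a).mp ha0
      have hai2 : a ≠ i + 2 := fun h =>
        hCr (c2_ip2_step_Cr hε hsh hst heq (h ▸ haL.1))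
      refine ⟨c2_W_to_lam hε hsh hst heq ha hai2 (Or.inl hCr), ?_⟩
      simp only [Set.mem_singleton_iff]
      exact haL.2
    have h2 := Set.ncard_le_ncard hsub hfinW.diff
    have h3 : (Wset ε lam \ {i}).ncard = (Wset ε lam).ncard - 1 :=
      Set.ncard_diff_singleton_of_mem hiW
    have h4 : 1 ≤ (Wset ε lam).ncard := by
      rcases Nat.eq_zero_or_pos (Wset ε lam).ncard with h0 | h0
      · rw [Set.ncard_eq_zero hfinW] at h0
        rw [h0] at hiW
        simp at hiW
      · exact h0
    omega

theorem c2_z_min (hε : ε = 1 ∨ ε = -1) (hsh : Shape n lam)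
    (hst : IsTwoStep ε lam i) (heq : lam i = lam (i + 1))
    (hm2 : ¬ IsTwoStep ε lam (i - 2)) (hCl : ¬ Cl lam i) :
    zVal ε lam n - 1 ≤ zVal ε (ksOut lam i) n := by
  have hshM := c2_shape hε hsh hst heq
  have hfinW : (Wset ε lam).Finite := (twoSteps_finite hsh).subset (Wset_subset lam)
  have hfinW' : (Wset ε (ksOut lam i)).Finite :=
    (twoSteps_finite hshM).subset (Wset_subset _)
  rw [z_eq_W hε hsh, z_eq_W hε hshM]
  have hs := c2_sVal hε hsh hst heq
  rw [cl_term_eq hε, cr_term_eq hε, if_neg hCl] at hs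
  by_cases hCr : Cr lam i
  · rw [if_pos hCr] at hs
    -- |W| ≤ |W'| via the injection a ↦ (a = i ? i+2 : a)
    have hclip2 : Cl lam (i + 2) := c2_Cl_ip2_of_Cr hε hsh hst heq hCr
    have hW : (Wset ε lam).ncard ≤ (Wset ε (ksOut lam i)).ncard := by
      apply Set.ncard_le_ncard_of_injOn (fun x => if x = i then i + 2 else x) ?_ ?_ hfinW'
      · intro x hx
        show (if x = i then i + 2 else x) ∈ Wset ε (ksOut lam i)
        rcases eq_or_ne x i with rfl | hne
        · rw [if_pos rfl]
          exact c2_i_to_ip2 hε hsh hst heq hm2 hCr hx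
        · rw [if_neg hne]
          have hai2 : x ≠ i + 2 := fun h => hx.1 (h ▸ hclip2)
          exact c2_W_from_lam hε hsh hst heq hm2 hx hne hai2
      · intro x hx y hy hxy
        have hab : (if x = i then i + 2 else x) = (if y = i then i + 2 else y) := hxy
        by_cases h1 : x = i <;> by_cases h2 : y = i
        · rw [h1, h2]
        · rw [if_pos h1, if_neg h2] at hab
          exfalso
          apply hy.1
          rw [← hab]
          exact hclip2
        · rw [if_neg h1, if_pos h2] at hab
          exfalso
          apply hx.1
          rw [hab]
          exact hclip2
        · rwa [if_neg h1, if_neg h2] at hab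
    omega
  · rw [if_neg hCr] at hs
    have hiW : i ∈ Wset ε lam := c2_mem_i_W hε hst hCl hCr
    have hsub : Wset ε lam \ {i} ⊆ Wset ε (ksOut lam i) := by
      rintro a ⟨ha, hane⟩
      simp only [Set.mem_singleton_iff] at hane
      have hai2 : a ≠ i + 2 := by
        intro h
        have hstep : IsTwoStep ε lam (i + 2) := h ▸ (Wset_subset lam ha)
        exact hCr (c2_ip2_step_Cr hε hsh hst heq hstep)
      exact c2_W_from_lam hε hsh hst heq hm2 ha hane hai2
    have h2 := Set.ncard_le_ncard hsub hfinW'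
    have h3 : (Wset ε lam \ {i}).ncard = (Wset ε lam).ncard - 1 :=
      Set.ncard_diff_singleton_of_mem hiW
    have h4 : 1 ≤ (Wset ε lam).ncard := by
      rcases Nat.eq_zero_or_pos (Wset ε lam).ncard with h0 | h0
      · rw [Set.ncard_eq_zero hfinW] at h0
        rw [h0] at hiW
        simp at hiW
      · exact h0
    omega

theorem adm_im1_of_Cl (hε : ε = 1 ∨ ε = -1) (hsh : Shape n lam)
    (hst : IsTwoStep ε lam i) (hCl : Cl lam i) : IsAdmissibleIndex ε lam (i - 1) := by
  obtain ⟨h1i, hev⟩ := hCl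
  rw [Nat.even_iff] at hev
  have hne := hst.2.2.2.2.2.1
  have hm : lam i ≤ lam (i - 1) := by
    have := hsh.mono (i - 1) (by omega)
    have e : i - 1 + 1 = i := by omega
    rwa [e] at this
  left
  refine ⟨by omega, ?_⟩
  rw [show i - 1 + 1 = i by omega]
  omega

theorem upper_bound (hε : ε = 1 ∨ ε = -1) :
    ∀ (l : List ℕ) (lam : ℕ → ℕ) (n : ℕ), Shape n lam →
      IsAdmissibleSeq ε lam l → (l.length : ℤ) ≤ zVal ε lam n := by
  intro l
  induction l with
  | nil =>
    intro lam n hsh _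
    simpa using z_nonneg hε hsh
  | cons i rest ih =>
    intro lam n hsh hseq
    obtain ⟨hadm, hrest⟩ := hseq
    simp only [List.length_cons]
    rcases hadm with ⟨hi1, hd⟩ | ⟨hst, heqv⟩
    · have h1 := ih (ksOut lam i) n (ksOut1_shape hsh hd) hrest
      have h2 := case1_z_le hε hsh hi1 hd
      push_cast
      omega
    · have h1 := ih (ksOut lam i) n (c2_shape hε hsh hst heqv) hrest
      have h2 := c2_z_le hε hsh hst heqv
      push_cast
      omega

theorem exists_seq (hε : ε = 1 ∨ ε = -1) (n : ℕ) :
    ∀ (M : ℕ) (lam : ℕ → ℕ), Shape n lam → (∑ j ∈ Finset.Icc 1 n, lam j) = M →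
      ∃ l, IsAdmissibleSeq ε lam l ∧ zVal ε lam n ≤ (l.length : ℤ) := by
  intro M
  induction M using Nat.strong_induction_on with
  | _ M ih =>
    intro lam hsh hM
    by_cases hA : ∃ j, IsAdmissibleIndex ε lam j
    · classical
      have hmin := Nat.find_spec hA
      have hlt : ∀ j, j < Nat.find hA → ¬ IsAdmissibleIndex ε lam j := fun j hj =>
        Nat.find_min hA hj
      set i := Nat.find hA with hidef
      rcases hmin with ⟨hi1, hd⟩ | ⟨hst, heqv⟩
      · -- Case 1
        have hstep : ¬ IsTwoStep ε lam (i - 1) := by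
          intro hc
          have h1 : 1 ≤ i - 1 := hc.1
          exact hlt (i - 1) (by omega) (step_admissible hε hc)
        obtain ⟨l', hl'seq, hl'len⟩ :=
          ih (∑ j ∈ Finset.Icc 1 n, ksOut lam i j)
            (by rw [← hM]; exact ksOut1_sum_lt hsh hi1 hd)
            (ksOut lam i) (ksOut1_shape hsh hd) rfl
        refine ⟨i :: l', ⟨Or.inl ⟨hi1, hd⟩, hl'seq⟩, ?_⟩
        have h2 := case1_z_min hε hsh hi1 hd hstep
        simp only [List.length_cons]
        push_cast
        omega
      · -- Case 2
        have hCl : ¬ Cl lam i := by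
          intro hc
          exact hlt (i - 1) (by have := hc.1; omega)
            (adm_im1_of_Cl hε hsh hst hc)
        have hm2 : ¬ IsTwoStep ε lam (i - 2) := by
          intro hc
          have h1 : 1 ≤ i - 2 := hc.1
          exact hlt (i - 2) (by omega) (step_admissible hε hc)
        obtain ⟨l', hl'seq, hl'len⟩ :=
          ih (∑ j ∈ Finset.Icc 1 n, ksOut lam i j)
            (by rw [← hM]; exact c2_sum_lt hε hsh hst heqv)
            (ksOut lam i) (c2_shape hε hsh hst heqv) rfl
        refine ⟨i :: l', ⟨Or.inr ⟨hst, heqv⟩, hl'seq⟩, ?_⟩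
        have h2 := c2_z_min hε hsh hst heqv hm2 hCl
        simp only [List.length_cons]
        push_cast
        omega
    · push_neg at hA
      refine ⟨[], trivial, ?_⟩
      rw [rigid_z hε hsh hA]
      simp

end Assembly

end KS14

/-- For every `λ ∈ 𝒫_ε(N)`, `z(λ)` is the maximum of the lengths of the admissible
sequences for `λ`. -/
theorem stmt14 (ε : ℤ) (hε : ε = 1 ∨ ε = -1) (N n : ℕ) (lam : ℕ → ℕ)
    (hlam : KSPartition ε N n lam) :
    (∀ l : List ℕ, IsAdmissibleSeq ε lam l → (l.length : ℤ) ≤ zVal ε lam n) ∧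
    ∃ l : List ℕ, IsAdmissibleSeq ε lam l ∧ (l.length : ℤ) = zVal ε lam n := by
  have hsh : KS14.Shape n lam := ⟨hlam.zero, hlam.mono, hlam.top⟩
  constructor
  · intro l hl
    exact KS14.upper_bound hε l lam n hsh hl
  · obtain ⟨l, hseq, hlen⟩ := KS14.exists_seq hε n _ lam hsh rfl
    exact ⟨l, hseq, le_antisymm (KS14.upper_bound hε l lam n hsh hseq) hlen⟩
end
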